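/- arXiv:1705.10520 — 11 statements merged into one kernel-verified Lean document; each statement's English description precedes it below -/
import Mathlib

section
/- Let G be a finite simple graph, f a normalized entropy function on G, and let A and B be disjoint sets of vertices such that B is independent, A is not independent, and there is a 1-factor from B to A. Then f(A) + f(B) − f(A ∪ B) ≥ |B|. -/
/-- A set of vertices is independent if no edge of `G` has both endpoints in it. -/
def Indep {V : Type*} (G : SimpleGraph V) (S : Set V) : Prop :=
  ∀ a ∈ S, ∀ b ∈ S, ¬ G.Adj a b

/-- A normalized entropy function on the graph `G`. -/
def IsEntropyFn {V : Type*} (G : SimpleGraph V) (f : Set V → ℝ) : Prop :=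
  f ∅ = 0 ∧
  (∀ A B : Set V, A ⊆ B → f A ≤ f B) ∧
  (∀ A B : Set V, f (A ∪ B) + f (A ∩ B) ≤ f A + f B) ∧
  (∀ A B : Set V, A ⊆ B → Indep G A → ¬ Indep G B → f A + 1 ≤ f B) ∧
  (∀ A B C : Set V, (C = ∅ ∨ Indep G C) → ¬ Indep G (A ∪ C) → ¬ Indep G (B ∪ C) →
    f C + f (A ∪ B ∪ C) + 1 ≤ f (A ∪ C) + f (B ∪ C))

/-- A 1-factor from `B` to `A`: distinct vertices `a_b ∈ A` (one for each `b ∈ B`)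
such that `a_b b'` is an edge iff `b' = b`. -/
def OneFactor {V : Type*} (G : SimpleGraph V) (B A : Set V) : Prop :=
  ∃ φ : V → V, Set.InjOn φ B ∧ Set.MapsTo φ B A ∧
    ∀ b ∈ B, ∀ b' ∈ B, (G.Adj (φ b) b' ↔ b' = b)

lemma indep_mono' {V : Type*} {G : SimpleGraph V} {S T : Set V} (h : S ⊆ T)
    (hT : Indep G T) : Indep G S :=
  fun a ha b hb => hT a (h ha) b (h hb)

lemma aux_key {V : Type*} [Fintype V] (G : SimpleGraph V) (f : Set V → ℝ)
    (hf : IsEntropyFn G f) (A : Set V) (hA : ¬ Indep G A) :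
    ∀ n : ℕ, ∀ B : Set V, B.ncard = n → Disjoint A B → Indep G B → OneFactor G B A →
      f A + f B - f (A ∪ B) ≥ (n : ℝ) := by
  obtain ⟨h0, hmono, hsub, hsm, hss⟩ := hf
  intro n
  induction n with
  | zero =>
    intro B hcard _ _ _
    have hBe : B = ∅ := (Set.ncard_eq_zero (Set.toFinite B)).mp hcard
    subst hBe
    simp [h0]
  | succ n ih =>
    intro B hcard hdisj hB h1f
    have hBne : B.Nonempty := Set.nonempty_of_ncard_ne_zero (by omega)
    obtain ⟨b, hb⟩ := hBne
    obtain ⟨φ, hinj, hmaps, hadj⟩ := h1f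
    set a := φ b with ha_def
    have ha : a ∈ A := hmaps hb
    have haB : a ∉ B := Set.disjoint_left.mp hdisj ha
    have hab : G.Adj a b := (hadj b hb b hb).mpr rfl
    set B' := B \ {b} with hB'def
    have hB'card : B'.ncard = n := by
      rw [hB'def, Set.ncard_diff_singleton_of_mem hb, hcard]
      omega
    have hB'sub : B' ⊆ B := Set.diff_subset
    -- set equalities
    have e1 : ({b} : Set V) ∪ A ∪ ({a} ∪ B') = A ∪ B := by
      ext x
      simp only [Set.mem_union, Set.mem_singleton_iff, hB'def, Set.mem_diff]
      constructor
      · rintro ((rfl | hx) | (rfl | ⟨hx, -⟩)) <;> tauto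
      · rintro (hx | hx)
        · tauto
        · by_cases hxb : x = b <;> tauto
    have e2 : A ∪ ({a} ∪ B') = A ∪ B' := by
      ext x
      simp only [Set.mem_union, Set.mem_singleton_iff]
      constructor
      · rintro (hx | (rfl | hx)) <;> tauto
      · tauto
    have e5 : ({b} : Set V) ∪ ({a} ∪ B') = {a} ∪ B := by
      ext x
      simp only [Set.mem_union, Set.mem_singleton_iff, hB'def, Set.mem_diff]
      constructor
      · rintro (rfl | (rfl | ⟨hx, -⟩)) <;> tauto
      · rintro (rfl | hx)
        · tauto
        · by_cases hxb : x = b <;> tauto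
    have e3 : ({a} ∪ B') ∪ B = {a} ∪ B := by
      ext x
      simp only [Set.mem_union, Set.mem_singleton_iff, hB'def, Set.mem_diff]
      tauto
    have e4 : ({a} ∪ B') ∩ B = B' := by
      ext x
      simp only [Set.mem_inter_iff, Set.mem_union, Set.mem_singleton_iff, hB'def,
        Set.mem_diff]
      constructor
      · rintro ⟨(rfl | hx), hxB⟩
        · exact absurd hxB haB
        · exact hx
      · rintro ⟨hx, hne⟩
        exact ⟨Or.inr ⟨hx, hne⟩, hx⟩
    -- C = {a} ∪ B' is independent
    have hCind : Indep G ({a} ∪ B') := by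
      rintro x (rfl | hx) y (rfl | hy)
      · exact fun h => G.irrefl h
      · intro h
        exact hy.2 (Set.mem_singleton_iff.mpr ((hadj b hb y (hB'sub hy)).mp h))
      · intro h
        exact hx.2 (Set.mem_singleton_iff.mpr ((hadj b hb x (hB'sub hx)).mp h.symm))
      · exact hB x (hB'sub hx) y (hB'sub hy)
    have hq1 : ¬ Indep G (({b} : Set V) ∪ ({a} ∪ B')) := by
      intro h
      exact h a (Or.inr (Or.inl rfl)) b (Or.inl rfl) hab
    have hq2 : ¬ Indep G (A ∪ ({a} ∪ B')) := fun h =>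
      hA (indep_mono' Set.subset_union_left h)
    have k1 := hss {b} A ({a} ∪ B') (Or.inr hCind) hq1 hq2
    rw [e1, e2, e5] at k1
    have k2 := hsub ({a} ∪ B') B
    rw [e3, e4] at k2
    have ihv := ih B' hB'card (hdisj.mono_right hB'sub) (indep_mono' hB'sub hB)
      ⟨φ, hinj.mono hB'sub, fun x hx => hmaps (hB'sub hx),
        fun b1 h1 b2 h2 => hadj b1 (hB'sub h1) b2 (hB'sub h2)⟩
    push_cast
    push_cast at ihv
    linarith

theorem stmt0 {V : Type*} [Fintype V] (G : SimpleGraph V) (f : Set V → ℝ)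
    (hf : IsEntropyFn G f) (A B : Set V) (hdisj : Disjoint A B)
    (hB : Indep G B) (hA : ¬ Indep G A) (h1f : OneFactor G B A) :
    f A + f B - f (A ∪ B) ≥ (B.ncard : ℝ) := by
  exact aux_key G f hf A hA B.ncard B rfl hdisj hB h1f
end

section
/- Let G be a finite simple graph, f a normalized entropy function on G, and let A and B be disjoint sets of vertices such that B is independent, A is not independent, and there is a 1-factor from B to A. Then f(A) ≥ |B| + 1. -/
set_option maxHeartbeats 1000000 in
theorem stmt1 {V : Type*} [Fintype V] (G : SimpleGraph V) (f : Set V → ℝ)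
    (hf : IsEntropyFn G f) (A B : Set V) (hdisj : Disjoint A B)
    (hB : Indep G B) (hA : ¬ Indep G A) (h1f : OneFactor G B A) :
    f A ≥ (B.ncard : ℝ) + 1 := by
  classical
  obtain ⟨f0, fmono, fsub, fstrict, fssub⟩ := hf
  obtain ⟨φ, hinj, hmaps, hadj⟩ := h1f
  have hIndepMono : ∀ S T : Set V, S ⊆ T → Indep G T → Indep G S :=
    fun S T hST hT a ha b hb => hT a (hST ha) b (hST hb)
  have key : ∀ S : Finset V, (S : Set V) ⊆ B →
      f (A ∪ (S : Set V)) + S.card ≤ f A + f (S : Set V) := by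
    intro S
    induction S using Finset.induction_on with
    | empty => intro _; simp [f0]
    | @insert b S hbS ih =>
      intro hsub
      have hbB : b ∈ B := hsub (by simp)
      have hSB : (S : Set V) ⊆ B := fun x hx => hsub (by simp [hx])
      set a := φ b with ha_def
      have haA : a ∈ A := hmaps hbB
      have haB : a ∉ B := fun h => (Set.disjoint_left.mp hdisj haA) h
      have hanS : a ∉ (S : Set V) := fun h => haB (hSB h)
      have hab : a ≠ b := fun h => haB (h ▸ hbB)
      have hbnS : b ∉ (S : Set V) := by simpa using hbS
      -- C = insert a ↑S is independent
      have hCindep : Indep G (insert a (S : Set V)) := by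
        intro x hx y hy
        rcases hx with hx | hx <;> rcases hy with hy | hy
        · subst hx; subst hy; exact G.irrefl
        · subst hx
          have hyB : y ∈ B := hSB hy
          have := (hadj b hbB y hyB)
          intro hAdj
          have : y = b := this.mp hAdj
          exact hbnS (this ▸ hy)
        · subst hy
          have hxB : x ∈ B := hSB hx
          intro hAdj
          have : x = b := (hadj b hbB x hxB).mp hAdj.symm
          exact hbnS (this ▸ hx)
        · exact hB x (hSB hx) y (hSB hy)
      -- strict submodularity with A₀ = A, B₀ = {b}, C = insert a ↑S
      have hq1 : ¬ Indep G (A ∪ insert a (S : Set V)) :=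
        fun h => hA (hIndepMono _ _ Set.subset_union_left h)
      have hq2 : ¬ Indep G ({b} ∪ insert a (S : Set V)) := by
        intro h
        exact h a (Or.inr (Set.mem_insert a _)) b (Or.inl rfl)
          ((hadj b hbB b hbB).mpr rfl)
      have hss := fssub A {b} (insert a (S : Set V)) (Or.inr hCindep) hq1 hq2
      have e1 : A ∪ {b} ∪ insert a (S : Set V) = A ∪ insert b (S : Set V) := by
        ext x
        simp only [Set.mem_union, Set.mem_insert_iff, Set.mem_singleton_iff]
        constructor
        · rintro ((h | h) | h | h)
          · exact Or.inl h
          · exact Or.inr (Or.inl h)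
          · exact Or.inl (h ▸ haA)
          · exact Or.inr (Or.inr h)
        · rintro (h | h | h)
          · exact Or.inl (Or.inl h)
          · exact Or.inl (Or.inr h)
          · exact Or.inr (Or.inr h)
      have e2 : A ∪ insert a (S : Set V) = A ∪ (S : Set V) := by
        ext x
        simp only [Set.mem_union, Set.mem_insert_iff]
        constructor
        · rintro (h | h | h) <;> [tauto; (left; exact h ▸ haA); tauto]
        · tauto
      have e3 : {b} ∪ insert a (S : Set V) = insert a (insert b (S : Set V)) := by
        ext x
        simp only [Set.mem_union, Set.mem_insert_iff, Set.mem_singleton_iff]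
        tauto
      rw [e1, e2, e3] at hss
      -- plain submodularity
      have hsub2 := fsub (insert a (S : Set V)) (insert b (S : Set V))
      have e4 : insert a (S : Set V) ∪ insert b (S : Set V)
          = insert a (insert b (S : Set V)) := by
        ext x
        simp only [Set.mem_union, Set.mem_insert_iff]
        tauto
      have e5 : insert a (S : Set V) ∩ insert b (S : Set V) = (S : Set V) := by
        ext x
        simp only [Set.mem_inter_iff, Set.mem_insert_iff]
        constructor
        · rintro ⟨h1 | h1, h2 | h2⟩
          · exact absurd (h1.symm.trans h2) hab
          · subst h1; exact absurd h2 hanS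
          · subst h2; exact absurd h1 hbnS
          · exact h1
        · intro h; exact ⟨Or.inr h, Or.inr h⟩
      rw [e4, e5] at hsub2
      have ihS := ih hSB
      have ecard : ((insert b S).card : ℝ) = S.card + 1 := by
        rw [Finset.card_insert_of_notMem hbS]; push_cast; ring
      have ecoe : ((insert b S : Finset V) : Set V) = insert b (S : Set V) := by
        simp
      rw [ecoe, ecard]
      linarith
  have hBfin : B.Finite := B.toFinite
  have hcoe : (hBfin.toFinset : Set V) = B := hBfin.coe_toFinset
  have hcard : (hBfin.toFinset.card : ℝ) = B.ncard := by
    rw [Set.ncard_eq_toFinset_card B hBfin]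
  have hk := key hBfin.toFinset (by rw [hcoe])
  rw [hcoe] at hk
  have hqAB : ¬ Indep G (A ∪ B) :=
    fun h => hA (hIndepMono _ _ Set.subset_union_left h)
  have hmonoAB := fstrict B (A ∪ B) Set.subset_union_right hB hqAB
  have : (hBfin.toFinset.card : ℝ) = (B.ncard : ℝ) := hcard
  linarith
end

section
/- Let G be a finite simple graph, f a normalized entropy function on G, and let A and B be disjoint sets of vertices such that neither A nor B is independent, and suppose B contains an independent subset B′ together with a 1-factor from B′ to A. Then f(A) + f(B) − f(A ∪ B) ≥ |B′| + 1. -/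
theorem stmt2 {V : Type*} [Fintype V] (G : SimpleGraph V) (f : Set V → ℝ)
    (hf : IsEntropyFn G f) (A B B' : Set V) (hdisj : Disjoint A B)
    (hA : ¬ Indep G A) (hB : ¬ Indep G B)
    (hB'B : B' ⊆ B) (hB' : Indep G B') (h1f : OneFactor G B' A) :
    f A + f B - f (A ∪ B) ≥ (B'.ncard : ℝ) + 1 := by
  classical
  obtain ⟨hf0, hmono, hsub, hsmon, hssub⟩ := hf
  obtain ⟨φ, hinj, hmaps, hadj⟩ := h1f
  have hAq : ∀ X : Set V, ¬ Indep G (A ∪ X) := by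
    intro X h
    exact hA fun a ha b hb => h a (Or.inl ha) b (Or.inl hb)
  -- main induction
  have key : ∀ S : Finset V, ↑S ⊆ B' → f (A ∪ ↑S) + (S.card : ℝ) ≤ f A + f ↑S := by
    intro S
    induction S using Finset.induction_on with
    | empty => intro _; simp [hf0]
    | @insert b S₀ hb ih =>
      intro hSB'
      have hbB' : b ∈ B' := hSB' (by simp)
      have hS₀B' : (↑S₀ : Set V) ⊆ B' := fun x hx => hSB' (by simp [hx])
      set a := φ b with ha
      have haA : a ∈ A := hmaps hbB'
      have hab : G.Adj a b := (hadj b hbB' b hbB').mpr rfl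
      have haB : a ∉ B := Set.disjoint_left.mp hdisj haA
      have hCind : Indep G ((↑S₀ : Set V) ∪ {a}) := by
        rintro x (hx | rfl) y (hy | rfl)
        · exact hB' x (hS₀B' hx) y (hS₀B' hy)
        · intro h
          have hxb : x = b := (hadj b hbB' x (hS₀B' hx)).mp h.symm
          exact hb (by simpa [hxb] using hx)
        · intro h
          have hyb : y = b := (hadj b hbB' y (hS₀B' hy)).mp h
          exact hb (by simpa [hyb] using hy)
        · exact G.irrefl
      have hq : ¬ Indep G (insert b (↑S₀ : Set V) ∪ {a}) := by
        intro h
        exact h a (Or.inr rfl) b (Or.inl (Set.mem_insert _ _)) hab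
      have e1 : A ∪ ((↑S₀ : Set V) ∪ {a}) = A ∪ ↑S₀ := by
        ext x
        simp only [Set.mem_union, Set.mem_singleton_iff]
        constructor
        · rintro (h | h | rfl)
          exacts [Or.inl h, Or.inr h, Or.inl haA]
        · rintro (h | h)
          exacts [Or.inl h, Or.inr (Or.inl h)]
      have e2 : ({b} : Set V) ∪ ((↑S₀ : Set V) ∪ {a}) = insert b (↑S₀ : Set V) ∪ {a} := by
        ext x
        simp only [Set.mem_union, Set.mem_singleton_iff, Set.mem_insert_iff]
        tauto
      have e3 : ({b} : Set V) ∪ A ∪ ((↑S₀ : Set V) ∪ {a}) = A ∪ insert b (↑S₀ : Set V) := by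
        ext x
        simp only [Set.mem_union, Set.mem_singleton_iff, Set.mem_insert_iff]
        constructor
        · rintro ((rfl | h) | h | rfl)
          exacts [Or.inr (Or.inl rfl), Or.inl h, Or.inr (Or.inr h), Or.inl haA]
        · rintro (h | rfl | h)
          exacts [Or.inl (Or.inr h), Or.inl (Or.inl rfl), Or.inr (Or.inl h)]
      have I1 := hssub {b} A ((↑S₀ : Set V) ∪ {a}) (Or.inr hCind)
        (by rw [e2]; exact hq) (by rw [e1]; exact hAq _)
      rw [e2, e1, e3] at I1
      -- plain submodularity
      have hanb : a ∉ insert b (↑S₀ : Set V) := by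
        rintro (h | h)
        · exact haB (hB'B (by rw [h]; exact hbB'))
        · exact haB (hB'B (hS₀B' h))
      have e4 : ((↑S₀ : Set V) ∪ {a}) ∪ insert b (↑S₀ : Set V) = insert b (↑S₀ : Set V) ∪ {a} := by
        ext x
        simp only [Set.mem_union, Set.mem_singleton_iff, Set.mem_insert_iff]
        tauto
      have e5 : ((↑S₀ : Set V) ∪ {a}) ∩ insert b (↑S₀ : Set V) = (↑S₀ : Set V) := by
        ext x
        simp only [Set.mem_inter_iff, Set.mem_union, Set.mem_singleton_iff, Set.mem_insert_iff]
        constructor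
        · rintro ⟨h1 | h1, h2⟩
          · exact h1
          · exact absurd (h1 ▸ h2) hanb
        · intro h
          exact ⟨Or.inl h, Or.inr h⟩
      have I2 := hsub ((↑S₀ : Set V) ∪ {a}) (insert b (↑S₀ : Set V))
      rw [e4, e5] at I2
      have ih' := ih hS₀B'
      have hcard : ((insert b S₀).card : ℝ) = (S₀.card : ℝ) + 1 := by
        rw [Finset.card_insert_of_notMem hb]; push_cast; ring
      rw [Finset.coe_insert, hcard]
      linarith
  -- apply the induction result to B'
  have hfin : B'.Finite := Set.toFinite B'
  have hcoe : (↑hfin.toFinset : Set V) = B' := hfin.coe_toFinset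
  have hkey := key hfin.toFinset (by rw [hcoe])
  rw [hcoe] at hkey
  have hcard : (hfin.toFinset.card : ℝ) = (B'.ncard : ℝ) := by
    rw [Set.ncard_eq_toFinset_card B' hfin]
  rw [hcard] at hkey
  -- final strict submodularity step
  have e6 : B ∪ B' = B := Set.union_eq_self_of_subset_right hB'B
  have e7 : A ∪ B ∪ B' = A ∪ B := by rw [Set.union_assoc, e6]
  have I3 := hssub A B B' (Or.inr fun x hx y hy => hB' x hx y hy)
    (hAq B') (by rw [e6]; exact hB)
  rw [e6, e7] at I3
  linarith
end

section
/- Let n ≥ 6 be even and let G be the cycle on vertices v_1, …, v_n (with edges v_i v_{i+1} and v_n v_1). Then for every normalized entropy function f on G, Σ_{i=1}^n f({v_i}) − f({v_1, …, v_n}) ≥ n − 1. -/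
/-- The cycle on `n` vertices `v_1, …, v_n`: vertex `i : Fin n` stands for `v_{i+1}`,
with edges `v_i v_{i+1}` and `v_n v_1`. -/
def cycleG (n : ℕ) [NeZero n] : SimpleGraph (Fin n) :=
  SimpleGraph.fromRel (fun i j => j = i + 1)

/-! ### Auxiliary lemmas -/

open Fin.NatCast

section aux

variable {V : Type*} {G : SimpleGraph V}

lemma indep_single' (a : V) : Indep G {a} := by
  intro x hx y hy
  rw [Set.mem_singleton_iff] at hx hy
  subst hx; subst hy
  exact G.loopless.irrefl _

lemma indep_pair' {a b : V} (h : ¬ G.Adj a b) : Indep G ({a} ∪ {b}) := by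
  intro x hx y hy
  simp only [Set.mem_union, Set.mem_singleton_iff] at hx hy
  rcases hx with rfl | rfl <;> rcases hy with rfl | rfl
  · exact G.loopless.irrefl _
  · exact h
  · exact fun hadj => h hadj.symm
  · exact G.loopless.irrefl _

lemma indep_mono'_s4 {A B : Set V} (h : A ⊆ B) (hB : Indep G B) : Indep G A :=
  fun a ha b hb => hB a (h ha) b (h hb)

lemma not_indep' {T : Set V} {a b : V} (ha : a ∈ T) (hb : b ∈ T) (h : G.Adj a b) :
    ¬ Indep G T := fun hI => hI a ha b hb h

/-- Step lemma: if `S` is qualified, `w ∈ S` and `w ~ u`, then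
`f (S ∪ {u}) + 1 ≤ f S + f {u}`. -/
lemma lemA {f : Set V → ℝ} (hf : IsEntropyFn G f) {S : Set V} {w u : V}
    (hw : w ∈ S) (hadj : G.Adj w u) (hS : ¬ Indep G S) :
    f (S ∪ {u}) + 1 ≤ f S + f {u} := by
  obtain ⟨h0, hmono, hsub, hsmono, hssub⟩ := hf
  have key := hssub {u} S {w} (Or.inr (indep_single' w))
    (not_indep' (Set.mem_union_left _ rfl) (Set.mem_union_right _ rfl) hadj.symm)
    (fun hI => hS (indep_mono'_s4 Set.subset_union_left hI))
  have hs1 : ({u} ∪ S) ∪ {w} = S ∪ {u} := by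
    ext x
    simp only [Set.mem_union, Set.mem_singleton_iff]
    constructor
    · rintro ((h | h) | rfl)
      · exact Or.inr h
      · exact Or.inl h
      · exact Or.inl hw
    · rintro (h | h)
      · exact Or.inl (Or.inr h)
      · exact Or.inl (Or.inl h)
  have hs2 : S ∪ {w} = S := Set.union_eq_left.mpr (Set.singleton_subset_iff.mpr hw)
  rw [hs1, hs2] at key
  have h2 := hsub {u} {w}
  have hne : ({u} : Set V) ∩ {w} = ∅ :=
    Set.singleton_inter_eq_empty.mpr (by simpa using hadj.ne.symm)
  rw [hne, h0] at h2
  linarith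

/-- Final lemma: closing the cycle gains 3. -/
lemma lemC {f : Set V → ℝ} (hf : IsEntropyFn G f) {S : Set V} {z w u t : V}
    (hz : z ∈ S) (hw : w ∈ S) (hS : ¬ Indep G S)
    (hwu : G.Adj w u) (hut : G.Adj u t) (htz : G.Adj t z)
    (hwt : ¬ G.Adj w t) (hzw : ¬ G.Adj z w) (hzt : z ≠ t) :
    f (S ∪ {u} ∪ {t}) + 3 ≤ f S + f {u} + f {t} := by
  obtain ⟨h0, hmono, hsub, hsmono, hssub⟩ := hf
  have iwt : Indep G ({w} ∪ {t}) := indep_pair' hwt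
  have izw : Indep G ({z} ∪ {w}) := indep_pair' hzw
  -- (1)  f({w}∪{u}) ≤ f{w} + f{u}
  have e1 := hsub {w} {u}
  rw [Set.singleton_inter_eq_empty.mpr (by simpa using hwu.ne), h0] at e1
  -- (6)  f({u}∪{t}) ≤ f{u} + f{t}
  have e6 := hsub {u} {t}
  rw [Set.singleton_inter_eq_empty.mpr (by simpa using hut.ne), h0] at e6
  -- (4)  f{u} + f(({w}∪{t})∪{u}) + 1 ≤ f({w}∪{u}) + f({t}∪{u})
  have e4 := hssub {w} {t} {u} (Or.inr (indep_single' u))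
    (not_indep' (Set.mem_union_left _ rfl) (Set.mem_union_right _ rfl) hwu)
    (not_indep' (Set.mem_union_left _ rfl) (Set.mem_union_right _ rfl) hut.symm)
  rw [show ({t} ∪ {u} : Set V) = ({u} ∪ {t} : Set V) from by
    ext x; simp only [Set.mem_union]; tauto] at e4
  -- (2)  f({z}∪({w}∪{t})) + f{w} ≤ f({z}∪{w}) + f({w}∪{t})
  have e2 := hsub ({z} ∪ {w} : Set V) ({w} ∪ {t} : Set V)
  have hu2 : (({z} ∪ {w} : Set V)) ∪ ({w} ∪ {t}) = ({z} ∪ ({w} ∪ {t}) : Set V) := by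
    ext x
    simp only [Set.mem_union, Set.mem_singleton_iff]
    tauto
  have hi2 : (({z} ∪ {w} : Set V)) ∩ ({w} ∪ {t}) = ({w} : Set V) := by
    ext x
    simp only [Set.mem_inter_iff, Set.mem_union, Set.mem_singleton_iff]
    constructor
    · rintro ⟨h1 | h1, h2 | h2⟩
      · exact h2
      · exact absurd (h1.symm.trans h2) hzt
      · exact h1
      · exact h1
    · intro h
      exact ⟨Or.inr h, Or.inl h⟩
  rw [hu2, hi2] at e2
  -- (3)
  have e3 := hssub {z} {u} ({w} ∪ {t}) (Or.inr iwt)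
    (not_indep' (Set.mem_union_right _ (Set.mem_union_right _ rfl))
      (Set.mem_union_left _ rfl) htz)
    (not_indep' (Set.mem_union_right _ (Set.mem_union_left _ rfl))
      (Set.mem_union_left _ rfl) hwu)
  rw [show ({u} ∪ ({w} ∪ {t}) : Set V) = (({w} ∪ {t}) ∪ {u} : Set V) from by
    ext x; simp only [Set.mem_union]; tauto] at e3
  -- (5)
  have e5 := hssub ({u} ∪ {t}) S ({z} ∪ {w}) (Or.inr izw)
    (not_indep' (Set.mem_union_left _ (Set.mem_union_left _ rfl))
      (Set.mem_union_left _ (Set.mem_union_right _ rfl)) hut)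
    (fun hI => hS (indep_mono'_s4 Set.subset_union_left hI))
  have hs5 : ((({u} ∪ {t} : Set V)) ∪ S) ∪ ({z} ∪ {w}) = (S ∪ {u} ∪ {t} : Set V) := by
    ext x
    simp only [Set.mem_union, Set.mem_singleton_iff]
    constructor
    · rintro (((h | h) | h) | (h | h))
      · exact Or.inl (Or.inr h)
      · exact Or.inr h
      · exact Or.inl (Or.inl h)
      · exact Or.inl (Or.inl (h ▸ hz))
      · exact Or.inl (Or.inl (h ▸ hw))
    · rintro ((h | h) | h)
      · exact Or.inl (Or.inr h)
      · exact Or.inl (Or.inl (Or.inl h))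
      · exact Or.inl (Or.inl (Or.inr h))
  have hs5' : S ∪ ({z} ∪ {w}) = S :=
    Set.union_eq_left.mpr (Set.union_subset (Set.singleton_subset_iff.mpr hz)
      (Set.singleton_subset_iff.mpr hw))
  have hs5'' : (({u} ∪ {t} : Set V)) ∪ ({z} ∪ {w}) = (({z} ∪ {u}) ∪ ({w} ∪ {t}) : Set V) := by
    ext x
    simp only [Set.mem_union, Set.mem_singleton_iff]
    tauto
  rw [hs5, hs5', hs5''] at e5
  linarith

end aux

section cyc

variable {n : ℕ} [NeZero n]

lemma cycle_adj {a b : Fin n} : (cycleG n).Adj a b ↔ a ≠ b ∧ (b = a + 1 ∨ a = b + 1) := by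
  simp [cycleG, SimpleGraph.fromRel_adj]

lemma cast_succ_eq (i : ℕ) : ((i + 1 : ℕ) : Fin n) = (i : Fin n) + 1 := by
  push_cast
  ring

lemma adj_succ (hn : 6 ≤ n) (i : ℕ) (hi : i < n) :
    (cycleG n).Adj (i : Fin n) ((i + 1 : ℕ) : Fin n) := by
  rw [cycle_adj]
  constructor
  · intro h
    have h' : i % n = (i + 1) % n := by
      have hv := congrArg Fin.val h
      rwa [Fin.val_natCast, Fin.val_natCast] at hv
    rcases Nat.lt_or_ge (i + 1) n with h2 | h2
    · rw [Nat.mod_eq_of_lt hi, Nat.mod_eq_of_lt h2] at h'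
      omega
    · have hn' : i + 1 = n := by omega
      rw [Nat.mod_eq_of_lt hi, hn', Nat.mod_self] at h'
      omega
  · exact Or.inl (cast_succ_eq i)

lemma nonadj (i j : ℕ) (hi : i < n) (hj : j < n) (h1 : i ≠ j)
    (h2 : j ≠ (i + 1) % n) (h3 : i ≠ (j + 1) % n) :
    ¬ (cycleG n).Adj (i : Fin n) (j : Fin n) := by
  rw [cycle_adj]
  rintro ⟨hne, h | h⟩
  · rw [← cast_succ_eq i] at h
    have hv := congrArg Fin.val h
    rw [Fin.val_natCast, Fin.val_natCast, Nat.mod_eq_of_lt hj] at hv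
    exact h2 hv
  · rw [← cast_succ_eq j] at h
    have hv := congrArg Fin.val h
    rw [Fin.val_natCast, Fin.val_natCast, Nat.mod_eq_of_lt hi] at hv
    exact h3 hv

lemma cast_ne (i j : ℕ) (hi : i < n) (hj : j < n) (h : i ≠ j) :
    (i : Fin n) ≠ (j : Fin n) := by
  rw [Ne, Fin.ext_iff, Fin.val_cast_of_lt hi, Fin.val_cast_of_lt hj]
  exact h

lemma mem_Sk {k i : ℕ} (hi : i < n) (h : i < k) :
    (i : Fin n) ∈ {x : Fin n | (x : ℕ) < k} := by
  simp only [Set.mem_setOf_eq, Fin.val_cast_of_lt hi]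
  exact h

lemma qual_Sk (hn : 6 ≤ n) {k : ℕ} (hk : 2 ≤ k) :
    ¬ Indep (cycleG n) {x : Fin n | (x : ℕ) < k} := by
  have hadj : (cycleG n).Adj ((0 : ℕ) : Fin n) ((1 : ℕ) : Fin n) := by
    have := adj_succ hn 0 (by omega)
    norm_num at this ⊢
    exact this
  exact not_indep' (mem_Sk (by omega) (by omega)) (mem_Sk (by omega) (by omega)) hadj

end cyc

theorem stmt4 (n : ℕ) [NeZero n] (hn : 6 ≤ n) (heven : Even n)
    (f : Set (Fin n) → ℝ) (hf : IsEntropyFn (cycleG n) f) :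
    (∑ i : Fin n, f {i}) - f Set.univ ≥ (n : ℝ) - 1 := by
  obtain ⟨p, rfl⟩ : ∃ p, n = p + 6 := ⟨n - 6, by omega⟩
  have hq : ∀ k : ℕ, 2 ≤ k → ¬ Indep (cycleG (p+6)) {x : Fin (p+6) | (x : ℕ) < k} :=
    fun k hk => qual_Sk hn hk
  obtain ⟨h0, hmono, hsub, hsmono, hssub⟩ := hf
  have hfent : IsEntropyFn (cycleG (p+6)) f := ⟨h0, hmono, hsub, hsmono, hssub⟩
  -- base : f (S 2) ≤ f {0} + f {1}
  have base : f {x : Fin (p+6) | (x : ℕ) < 2} ≤ f {((0:ℕ) : Fin (p+6))} + f {((1:ℕ) : Fin (p+6))} := by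
    have h2 := hsub {((0:ℕ) : Fin (p+6))} {((1:ℕ) : Fin (p+6))}
    have hne : ({((0:ℕ) : Fin (p+6))} : Set (Fin (p+6))) ∩ {((1:ℕ) : Fin (p+6))} = ∅ :=
      Set.singleton_inter_eq_empty.mpr
        (by simpa using (cast_ne 0 1 (by omega) (by omega) (by omega)))
    have hun : ({((0:ℕ) : Fin (p+6))} : Set (Fin (p+6))) ∪ {((1:ℕ) : Fin (p+6))}
        = {x : Fin (p+6) | (x : ℕ) < 2} := by
      ext x
      simp only [Set.mem_union, Set.mem_singleton_iff, Set.mem_setOf_eq, Fin.ext_iff,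
        Fin.val_cast_of_lt (show 0 < p+6 by omega), Fin.val_cast_of_lt (show 1 < p+6 by omega)]
      omega
    rw [hne, h0, hun] at h2
    linarith
  have hSk_succ : ∀ k : ℕ, k < p+6 →
      ({x : Fin (p+6) | (x : ℕ) < k} ∪ {((k:ℕ) : Fin (p+6))})
        = {x : Fin (p+6) | (x : ℕ) < k + 1} := by
    intro k hk
    ext x
    simp only [Set.mem_union, Set.mem_setOf_eq, Set.mem_singleton_iff, Fin.ext_iff,
      Fin.val_cast_of_lt hk]
    have := x.isLt
    omega
  have chain : ∀ j : ℕ, j + 2 ≤ p + 4 →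
      f {x : Fin (p+6) | (x : ℕ) < j + 2} + ((j : ℝ) + 2)
        ≤ (∑ i ∈ Finset.range (j + 2), f {((i : ℕ) : Fin (p+6))}) + 2 := by
    intro j
    induction j with
    | zero =>
      intro _
      rw [Finset.sum_range_succ, Finset.sum_range_one]
      have hb := base
      norm_num at hb ⊢
      linarith
    | succ i ih =>
      intro h
      have hi := ih (by omega)
      have hadj : (cycleG (p+6)).Adj ((i+1 : ℕ) : Fin (p+6)) ((i+2 : ℕ) : Fin (p+6)) :=
        adj_succ hn (i+1) (by omega)
      have step := lemA hfent (S := {x : Fin (p+6) | (x : ℕ) < i + 2})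
        (mem_Sk (by omega) (by omega)) hadj (hq (i+2) (by omega))
      rw [hSk_succ (i+2) (by omega)] at step
      have hs : (∑ k ∈ Finset.range (i + 1 + 2), f {((k : ℕ) : Fin (p+6))})
          = (∑ k ∈ Finset.range (i + 2), f {((k : ℕ) : Fin (p+6))})
            + f {((i+2 : ℕ) : Fin (p+6))} :=
        Finset.sum_range_succ _ (i+2)
      have hset : ({x : Fin (p+6) | (x : ℕ) < i + 2 + 1} : Set (Fin (p+6)))
          = {x : Fin (p+6) | (x : ℕ) < i + 1 + 2} := by
        ext x
        simp only [Set.mem_setOf_eq]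
        try omega
      rw [hset] at step
      rw [hs]
      push_cast
      push_cast at hi step
      linarith
  have hchain : f {x : Fin (p+6) | (x : ℕ) < p + 4} + (((p+2 : ℕ) : ℝ) + 2)
      ≤ (∑ i ∈ Finset.range (p + 4), f {((i : ℕ) : Fin (p+6))}) + 2 :=
    chain (p + 2) (by omega)
  -- closing the cycle
  have hwu : (cycleG (p+6)).Adj ((p+3 : ℕ) : Fin (p+6)) ((p+4 : ℕ) : Fin (p+6)) :=
    adj_succ hn (p+3) (by omega)
  have hut : (cycleG (p+6)).Adj ((p+4 : ℕ) : Fin (p+6)) ((p+5 : ℕ) : Fin (p+6)) :=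
    adj_succ hn (p+4) (by omega)
  have htz : (cycleG (p+6)).Adj ((p+5 : ℕ) : Fin (p+6)) ((0 : ℕ) : Fin (p+6)) := by
    have h1 : (cycleG (p+6)).Adj ((p+5 : ℕ) : Fin (p+6)) ((p+5+1 : ℕ) : Fin (p+6)) :=
      adj_succ hn (p+5) (by omega)
    have h2 : ((p+5+1 : ℕ) : Fin (p+6)) = ((0:ℕ) : Fin (p+6)) := by
      have h3 : ((p+5+1 : ℕ) : Fin (p+6)) = 0 := Fin.natCast_self (p+6)
      rw [h3, Nat.cast_zero]
    rwa [h2] at h1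
  have hfin := lemC hfent (S := {x : Fin (p+6) | (x : ℕ) < p + 4})
    (z := ((0:ℕ) : Fin (p+6))) (w := ((p+3 : ℕ) : Fin (p+6)))
    (u := ((p+4 : ℕ) : Fin (p+6))) (t := ((p+5 : ℕ) : Fin (p+6)))
    (mem_Sk (by omega) (by omega)) (mem_Sk (by omega) (by omega))
    (hq (p+4) (by omega)) hwu hut htz
    (nonadj (p+3) (p+5) (by omega) (by omega) (by omega)
      (by rw [Nat.mod_eq_of_lt (by omega)]; omega)
      (by rw [show p+5+1 = p+6 from rfl, Nat.mod_self]; omega))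
    (nonadj 0 (p+3) (by omega) (by omega) (by omega)
      (by rw [Nat.mod_eq_of_lt (by omega)]; omega)
      (by rw [Nat.mod_eq_of_lt (by omega)]; omega))
    (cast_ne 0 (p+5) (by omega) (by omega) (by omega))
  have huniv : ({x : Fin (p+6) | (x : ℕ) < p + 4} ∪ {((p+4 : ℕ) : Fin (p+6))}
      ∪ {((p+5 : ℕ) : Fin (p+6))}) = (Set.univ : Set (Fin (p+6))) := by
    ext x
    simp only [Set.mem_union, Set.mem_setOf_eq, Set.mem_singleton_iff, Set.mem_univ,
      iff_true, Fin.ext_iff, Fin.val_cast_of_lt (show p+4 < p+6 by omega),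
      Fin.val_cast_of_lt (show p+5 < p+6 by omega)]
    have := x.isLt
    omega
  rw [huniv] at hfin
  have hsum : (∑ i : Fin (p+6), f {i}) = ∑ i ∈ Finset.range (p+6), f {((i : ℕ) : Fin (p+6))} := by
    rw [← Fin.sum_univ_eq_sum_range (fun i => f {((i : ℕ) : Fin (p+6))}) (p+6)]
    apply Finset.sum_congr rfl
    intro x _
    rw [Fin.cast_val_eq_self]
  have e1 : (∑ i ∈ Finset.range (p+6), f {((i : ℕ) : Fin (p+6))})
      = (∑ i ∈ Finset.range (p+5), f {((i : ℕ) : Fin (p+6))})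
        + f {((p+5 : ℕ) : Fin (p+6))} :=
    Finset.sum_range_succ _ (p+5)
  have e2 : (∑ i ∈ Finset.range (p+5), f {((i : ℕ) : Fin (p+6))})
      = (∑ i ∈ Finset.range (p+4), f {((i : ℕ) : Fin (p+6))})
        + f {((p+4 : ℕ) : Fin (p+6))} :=
    Finset.sum_range_succ _ (p+4)
  rw [hsum]
  push_cast
  push_cast at hchain
  linarith
end

section
/- Let n ≥ 6 be even and let G be the cycle on vertices v_1, …, v_n (with edges v_i v_{i+1} and v_n v_1). Then for every normalized entropy function f on G, Σ_{i=1}^n f({v_i}) ≥ (3/2)·n. -/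
open Fin.NatCast in
/-- Adding two distinct small naturals to the same element of `Fin n` gives
different results. -/
lemma add_lit_ne_false {n : ℕ} [NeZero n] (hn : 6 ≤ n) (x : Fin n) {j k : ℕ}
    (hj : j < 6) (hk : k < 6) (hjk : j ≠ k)
    (h : x + ((j : ℕ) : Fin n) = x + ((k : ℕ) : Fin n)) : False := by
  have h2 : ((j : ℕ) : Fin n) = ((k : ℕ) : Fin n) := add_left_cancel h
  have h3 := congrArg Fin.val h2
  rw [Fin.val_natCast, Fin.val_natCast, Nat.mod_eq_of_lt (by omega),
    Nat.mod_eq_of_lt (by omega)] at h3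
  omega

/-- The key local inequality: on a path `a - b - c - d` (with the non-edges
`ac`, `ad`), any entropy function satisfies `f {b} + f {c} ≥ 3`. -/
lemma key_local {V : Type*} (G : SimpleGraph V) (f : Set V → ℝ)
    (hf : IsEntropyFn G f) (a b c d : V)
    (hab : G.Adj a b) (hbc : G.Adj b c) (hcd : G.Adj c d)
    (hac : ¬ G.Adj a c) (had : ¬ G.Adj a d) :
    3 ≤ f {b} + f {c} := by
  obtain ⟨h0, hmono, hsub, hsm, hss⟩ := hf
  have hne_ab : a ≠ b := hab.ne
  have hne_bc : b ≠ c := hbc.ne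
  have hne_cd : c ≠ d := hcd.ne
  -- independence facts
  have indep_b : Indep G {b} := by
    intro x hx y hy
    simp only [Set.mem_singleton_iff] at hx hy
    subst hx; subst hy; exact G.irrefl
  have indep_ac : Indep G ({a, c} : Set V) := by
    intro x hx y hy
    simp only [Set.mem_insert_iff, Set.mem_singleton_iff] at hx hy
    rcases hx with rfl | rfl <;> rcases hy with rfl | rfl
    · exact G.irrefl
    · exact hac
    · exact fun h => hac h.symm
    · exact G.irrefl
  have indep_ad : Indep G ({a, d} : Set V) := by
    intro x hx y hy
    simp only [Set.mem_insert_iff, Set.mem_singleton_iff] at hx hy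
    rcases hx with rfl | rfl <;> rcases hy with rfl | rfl
    · exact G.irrefl
    · exact had
    · exact fun h => had h.symm
    · exact G.irrefl
  -- qualified (not independent) facts
  have qual_ab : ¬ Indep G ({a, b} : Set V) := fun h => h a (by simp) b (by simp) hab
  have qual_bc : ¬ Indep G ({b, c} : Set V) := fun h => h b (by simp) c (by simp) hbc
  have qual_abc : ¬ Indep G ({a, b, c} : Set V) := fun h => h a (by simp) b (by simp) hab
  have qual_acd : ¬ Indep G ({a, c, d} : Set V) := fun h => h c (by simp) d (by simp) hcd
  -- (1)  f {a,b} ≤ f {a} + f {b}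
  have sub1 : f ({a, b} : Set V) + f (∅ : Set V) ≤ f {a} + f {b} := by
    have := hsub {a} {b}
    have e1 : ({a} : Set V) ∪ {b} = {a, b} := by ext x; simp; try tauto
    have e2 : ({a} : Set V) ∩ {b} = ∅ := by
      ext x
      simp only [Set.mem_inter_iff, Set.mem_singleton_iff, Set.mem_empty_iff_false, iff_false]
      rintro ⟨rfl, rfl⟩; exact hne_ab rfl
    rwa [e1, e2] at this
  -- (2)  f {b,c} ≤ f {b} + f {c}
  have sub2 : f ({b, c} : Set V) + f (∅ : Set V) ≤ f {b} + f {c} := by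
    have := hsub {b} {c}
    have e1 : ({b} : Set V) ∪ {c} = {b, c} := by ext x; simp; try tauto
    have e2 : ({b} : Set V) ∩ {c} = ∅ := by
      ext x
      simp only [Set.mem_inter_iff, Set.mem_singleton_iff, Set.mem_empty_iff_false, iff_false]
      rintro ⟨rfl, rfl⟩; exact hne_bc rfl
    rwa [e1, e2] at this
  -- (3)  f {a,c,d} + f {a} ≤ f {a,c} + f {a,d}
  have sub3 : f ({a, c, d} : Set V) + f ({a} : Set V) ≤ f {a, c} + f {a, d} := by
    have := hsub {a, c} {a, d}
    have e1 : ({a, c} : Set V) ∪ {a, d} = {a, c, d} := by ext x; simp; try tauto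
    have e2 : ({a, c} : Set V) ∩ {a, d} = {a} := by
      ext x
      simp only [Set.mem_inter_iff, Set.mem_insert_iff, Set.mem_singleton_iff]
      constructor
      · rintro ⟨rfl | rfl, h2⟩
        · rfl
        · rcases h2 with rfl | h2
          · rfl
          · exact absurd h2 hne_cd
      · rintro rfl; exact ⟨Or.inl rfl, Or.inl rfl⟩
    rwa [e1, e2] at this
  -- (4)  f {a,c} + 1 ≤ f {a,b,c}
  have sm4 : f ({a, c} : Set V) + 1 ≤ f ({a, b, c} : Set V) := by
    refine hsm _ _ ?_ indep_ac qual_abc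
    intro x hx
    simp only [Set.mem_insert_iff, Set.mem_singleton_iff] at hx ⊢
    tauto
  -- (5)  f {a,d} + 1 ≤ f {a,c,d}
  have sm5 : f ({a, d} : Set V) + 1 ≤ f ({a, c, d} : Set V) := by
    refine hsm _ _ ?_ indep_ad qual_acd
    intro x hx
    simp only [Set.mem_insert_iff, Set.mem_singleton_iff] at hx ⊢
    tauto
  -- (6)  f {b} + f {a,b,c} + 1 ≤ f {a,b} + f {b,c}
  have ss6 : f ({b} : Set V) + f ({a, b, c} : Set V) + 1 ≤ f {a, b} + f {b, c} := by
    have e1 : ({a} : Set V) ∪ {b} = {a, b} := by ext x; simp; try tauto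
    have e2 : ({c} : Set V) ∪ {b} = {b, c} := by ext x; simp; try tauto
    have e3 : ({a} : Set V) ∪ {c} ∪ {b} = {a, b, c} := by ext x; simp; try tauto
    have := hss {a} {c} {b} (Or.inr indep_b) (by rwa [e1]) (by rwa [e2])
    rwa [e1, e2, e3] at this
  linarith

/-- Adjacency in the local pattern of the cycle. -/
lemma cycle_adj_succ {n : ℕ} [NeZero n] (hn : 6 ≤ n) (x : Fin n) :
    (cycleG n).Adj x (x + 1) := by
  rw [cycleG, SimpleGraph.fromRel_adj]
  refine ⟨fun h => ?_, Or.inl rfl⟩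
  exact add_lit_ne_false hn x (j := 0) (k := 1) (by omega) (by omega) (by omega)
    (by push_cast; simpa using h)

theorem stmt5 (n : ℕ) [NeZero n] (hn : 6 ≤ n) (heven : Even n)
    (f : Set (Fin n) → ℝ) (hf : IsEntropyFn (cycleG n) f) :
    (∑ i : Fin n, f {i}) ≥ 3 / 2 * (n : ℝ) := by
  -- the key per-edge inequality
  have key : ∀ i : Fin n, 3 ≤ f {i + 1} + f {i + 2} := by
    intro i
    have hab : (cycleG n).Adj i (i + 1) := cycle_adj_succ hn i
    have hbc : (cycleG n).Adj (i + 1) (i + 2) := by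
      have := cycle_adj_succ hn (i + 1)
      rwa [show i + 1 + 1 = i + 2 by open Fin.CommRing in ring] at this
    have hcd : (cycleG n).Adj (i + 2) (i + 3) := by
      have := cycle_adj_succ hn (i + 2)
      rwa [show i + 2 + 1 = i + 3 by open Fin.CommRing in ring] at this
    have hac : ¬ (cycleG n).Adj i (i + 2) := by
      rw [cycleG, SimpleGraph.fromRel_adj]
      rintro ⟨hne, h | h⟩
      · exact add_lit_ne_false hn i (j := 2) (k := 1) (by omega) (by omega) (by omega)
          (by open Fin.NatCast in (push_cast; simpa using h))
      · rw [show i + 2 + 1 = i + 3 by open Fin.CommRing in ring] at h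
        exact add_lit_ne_false hn i (j := 0) (k := 3) (by omega) (by omega) (by omega)
          (by push_cast; simpa using h)
    have had : ¬ (cycleG n).Adj i (i + 3) := by
      rw [cycleG, SimpleGraph.fromRel_adj]
      rintro ⟨hne, h | h⟩
      · exact add_lit_ne_false hn i (j := 3) (k := 1) (by omega) (by omega) (by omega)
          (by open Fin.NatCast in (push_cast; simpa using h))
      · rw [show i + 3 + 1 = i + 4 by open Fin.CommRing in ring] at h
        exact add_lit_ne_false hn i (j := 0) (k := 4) (by omega) (by omega) (by omega)
          (by push_cast; simpa using h)
    exact key_local (cycleG n) f hf i (i + 1) (i + 2) (i + 3) hab hbc hcd hac had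
  -- sum over all i
  have hsum : (3 : ℝ) * n ≤ ∑ i : Fin n, (f {i + 1} + f {i + 2}) := by
    calc (3 : ℝ) * n = ∑ _i : Fin n, (3 : ℝ) := by
          rw [Finset.sum_const, Finset.card_univ, Fintype.card_fin]
          ring
      _ ≤ ∑ i : Fin n, (f {i + 1} + f {i + 2}) := Finset.sum_le_sum fun i _ => key i
  have h1 : ∑ i : Fin n, f {i + 1} = ∑ i : Fin n, f {i} :=
    Fintype.sum_equiv (Equiv.addRight 1) _ _ (fun i => rfl)
  have h2 : ∑ i : Fin n, f {i + 2} = ∑ i : Fin n, f {i} :=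
    Fintype.sum_equiv (Equiv.addRight 2) _ _ (fun i => rfl)
  rw [Finset.sum_add_distrib, h1, h2] at hsum
  have hn' : (0 : ℝ) ≤ n := Nat.cast_nonneg n
  linarith
end

section
/- Let n ≥ 5 and s ≥ 1 be integers and let G be a finite simple graph whose vertex set is partitioned into sets V_1, …, V_n (indices cyclic modulo n), where each V_i is the disjoint union of two independent sets A_i and B_i of size s, each V_i is not independent, and the edges of G joining distinct parts V_i and V_j are exactly, for each i, a perfect matching between B_i and A_{i+1}. Then for every normalized entropy function f on G, Σ_{i=1}^n f(V_i) − f(V_1 ∪ ⋯ ∪ V_n) ≥ n·s + n − 1. -/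
set_option maxHeartbeats 1000000

section Aux

variable {V : Type*} {G : SimpleGraph V} {f : Set V → ℝ}

lemma indep_mono {X Y : Set V} (h : Indep G Y) (hXY : X ⊆ Y) : Indep G X :=
  fun a ha b hb => h a (hXY ha) b (hXY hb)

lemma notIndep_mono {X Y : Set V} (h : ¬ Indep G X) (hXY : X ⊆ Y) : ¬ Indep G Y :=
  fun hY => h (indep_mono hY hXY)

lemma aux_nonneg (hf : IsEntropyFn G f) (X : Set V) : 0 ≤ f X := by
  have h := hf.2.1 ∅ X (Set.empty_subset X)
  rw [hf.1] at h; exact h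

lemma aux_subadd (hf : IsEntropyFn G f) (X Y : Set V) : f (X ∪ Y) ≤ f X + f Y := by
  have h := hf.2.2.1 X Y
  have h0 := aux_nonneg hf (X ∩ Y)
  linarith

lemma aux_chain (hf : IsEntropyFn G f) (X E : Set V) (p : V → V) (hX : ¬ Indep G X)
    (hE : E ⊆ X) (T : Finset V)
    (hTX : ∀ x ∈ T, x ∉ X)
    (hp : ∀ x ∈ T, p x ∈ X)
    (hpE : ∀ x ∈ T, p x ∉ E)
    (hadj : ∀ x ∈ T, G.Adj (p x) x)
    (hind : Indep G (E ∪ ↑T))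
    (hpn : ∀ x ∈ T, ∀ y, y ∈ E ∪ (↑T : Set V) → y ≠ x → ¬ G.Adj (p x) y) :
    f (X ∪ ↑T) + f E + T.card ≤ f X + f (E ∪ ↑T) := by
  classical
  induction T using Finset.induction_on with
  | empty => simp
  | @insert a s ha IH =>
    have haT : a ∈ insert a s := Finset.mem_insert_self a s
    have hsS : (↑s : Set V) ⊆ (↑(insert a s) : Set V) := by
      intro x hx; simp only [Finset.coe_insert, Set.mem_insert_iff]
      exact Or.inr hx
    have haX : a ∉ X := hTX a haT
    have haE : a ∉ E := fun h => haX (hE h)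
    have hpaX : p a ∈ X := hp a haT
    have hpaT : ∀ y ∈ insert a s, p a ≠ y := fun y hy h => hTX y hy (h ▸ hpaX)
    have hpaE : p a ∉ E := hpE a haT
    have IH' := IH (fun x hx => hTX x (Finset.mem_insert_of_mem hx))
      (fun x hx => hp x (Finset.mem_insert_of_mem hx))
      (fun x hx => hpE x (Finset.mem_insert_of_mem hx))
      (fun x hx => hadj x (Finset.mem_insert_of_mem hx))
      (indep_mono hind (Set.union_subset_union_right E hsS))
      (fun x hx y hy hyx => hpn x (Finset.mem_insert_of_mem hx) y
        (hy.elim Or.inl (fun h => Or.inr (hsS h))) hyx)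
    set C : Set V := E ∪ ↑s ∪ {p a} with hC
    have hCsub : C ⊆ X ∪ ↑s := by
      intro x hx
      rcases hx with (hx | hx) | hx
      · exact Or.inl (hE hx)
      · exact Or.inr hx
      · rcases hx with rfl; exact Or.inl hpaX
    -- independence of C
    have hCind : Indep G C := by
      intro u hu v hv
      have key : ∀ w, w ∈ E ∪ (↑s : Set V) → w ≠ a ∧ w ∈ E ∪ (↑(insert a s) : Set V) := by
        intro w hw
        constructor
        · rintro rfl
          rcases hw with hw | hw
          · exact haE hw
          · exact ha (by exact_mod_cast hw)
        · exact hw.elim Or.inl (fun h => Or.inr (hsS h))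
      rcases hu with hu | hu
      · rcases hv with hv | hv
        · exact hind u ((key u hu).2) v ((key v hv).2)
        · rcases hv with rfl
          intro hadj'
          exact hpn a haT u (key u hu).2 (key u hu).1 hadj'.symm
      · rcases hu with rfl
        rcases hv with hv | hv
        · exact hpn a haT v (key v hv).2 (key v hv).1
        · rcases hv with rfl
          exact G.irrefl
    have hq1 : ¬ Indep G ({a} ∪ C) := by
      intro h
      exact h (p a) (Or.inr (Or.inr rfl)) a (Or.inl rfl) (hadj a haT)
    have hq2 : ¬ Indep G (X ∪ C) := notIndep_mono hX Set.subset_union_left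
    have diamond := hf.2.2.2.2 {a} X C (Or.inr hCind) hq1 hq2
    have e3 : X ∪ C = X ∪ ↑s := by
      apply Set.Subset.antisymm
      · exact Set.union_subset Set.subset_union_left hCsub
      · exact Set.union_subset_union_right X (fun x hx => Or.inl (Or.inr hx))
    have e4 : {a} ∪ X ∪ C = X ∪ ↑(insert a s) := by
      rw [Set.union_assoc, e3]
      ext x
      simp only [Set.mem_union, Set.mem_singleton_iff, Finset.coe_insert, Set.mem_insert_iff]
      tauto
    rw [e3, e4] at diamond
    have comp := hf.2.2.1 C (E ∪ ↑(insert a s))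
    have e5 : C ∪ (E ∪ ↑(insert a s)) = {a} ∪ C := by
      ext x
      simp only [hC, Set.mem_union, Set.mem_singleton_iff, Finset.coe_insert,
        Set.mem_insert_iff]
      tauto
    have e6 : C ∩ (E ∪ ↑(insert a s)) = E ∪ ↑s := by
      ext x
      simp only [hC, Set.mem_inter_iff, Set.mem_union, Set.mem_singleton_iff,
        Finset.coe_insert, Set.mem_insert_iff]
      constructor
      · rintro ⟨(h | h) | rfl, h2⟩
        · exact Or.inl h
        · exact Or.inr h
        · exfalso
          rcases h2 with h2 | h2 | h2
          · exact hpaE h2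
          · exact hpaT a haT h2
          · exact hpaT (p a) (Finset.mem_insert_of_mem (by exact_mod_cast h2)) rfl
      · rintro (h | h)
        · exact ⟨Or.inl (Or.inl h), Or.inl h⟩
        · exact ⟨Or.inl (Or.inr h), Or.inr (Or.inr h)⟩
    rw [e5, e6] at comp
    have hcard : (insert a s).card = s.card + 1 := Finset.card_insert_of_notMem ha
    rw [hcard]
    simp only [Finset.coe_insert] at diamond comp IH' ⊢
    push_cast
    linarith

end Aux

lemma aux_merge {V : Type*} {G : SimpleGraph V} {f : Set V → ℝ}
    (hf : IsEntropyFn G f) (X Aa Bb : Set V) (p : V → V) (hX : ¬ Indep G X)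
    (hfin : Aa.Finite)
    (hTX : ∀ x ∈ Aa, x ∉ X) (hp : ∀ x ∈ Aa, p x ∈ X)
    (hadj : ∀ x ∈ Aa, G.Adj (p x) x)
    (hind : Indep G Aa)
    (hpn : ∀ x ∈ Aa, ∀ y ∈ Aa, y ≠ x → ¬ G.Adj (p x) y)
    (hq : ¬ Indep G (Aa ∪ Bb)) :
    f (X ∪ (Aa ∪ Bb)) + Aa.ncard + 1 ≤ f X + f (Aa ∪ Bb) := by
  classical
  have hcoe : (↑hfin.toFinset : Set V) = Aa := hfin.coe_toFinset
  have hchain := aux_chain hf X ∅ p hX (Set.empty_subset X) hfin.toFinset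
    (by intro x hx; exact hTX x (hfin.mem_toFinset.mp hx))
    (by intro x hx; exact hp x (hfin.mem_toFinset.mp hx))
    (by intro x hx; exact Set.notMem_empty _)
    (by intro x hx; exact hadj x (hfin.mem_toFinset.mp hx))
    (by rw [Set.empty_union, hcoe]; exact hind)
    (by intro x hx y hy hyx
        rw [Set.empty_union, hcoe] at hy
        exact hpn x (hfin.mem_toFinset.mp hx) y hy hyx)
  rw [hcoe, Set.empty_union, hf.1] at hchain
  have hcard : (hfin.toFinset.card : ℝ) = (Aa.ncard : ℝ) := by
    rw [Set.ncard_eq_toFinset_card Aa hfin]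
  rw [hcard] at hchain
  -- block step
  have hblock := hf.2.2.2.2 Bb X Aa (Or.inr hind)
    (notIndep_mono hq (by rw [Set.union_comm]))
    (notIndep_mono hX Set.subset_union_left)
  have e1 : Bb ∪ X ∪ Aa = X ∪ (Aa ∪ Bb) := by
    ext x
    simp only [Set.mem_union]
    tauto
  have e2 : Bb ∪ Aa = Aa ∪ Bb := Set.union_comm _ _
  rw [e1, e2] at hblock
  linarith

def pchain {V : Type*} (P : ℕ → Set V) : ℕ → Set V
  | 0 => P 2
  | k+1 => pchain P k ∪ P (k+3)

lemma pchain_sub {V : Type*} (P : ℕ → Set V) :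
    ∀ k, ∀ x ∈ pchain P k, ∃ m, 2 ≤ m ∧ m ≤ k + 2 ∧ x ∈ P m := by
  intro k
  induction k with
  | zero => intro x hx; exact ⟨2, le_refl 2, by omega, hx⟩
  | succ k IH =>
    intro x hx
    rcases hx with hx | hx
    · obtain ⟨m, h2, hk, hm⟩ := IH x hx
      exact ⟨m, h2, by omega, hm⟩
    · exact ⟨k+3, by omega, by omega, hx⟩

lemma pchain_sup {V : Type*} (P : ℕ → Set V) :
    ∀ k m, 2 ≤ m → m ≤ k + 2 → P m ⊆ pchain P k := by
  intro k
  induction k with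
  | zero =>
    intro m h2 hk
    have : m = 2 := by omega
    subst this
    exact subset_rfl
  | succ k IH =>
    intro m h2 hk
    rcases Nat.lt_or_ge m (k+3) with h | h
    · exact (IH m h2 (by omega)).trans Set.subset_union_left
    · have : m = k + 3 := by omega
      subst this
      exact Set.subset_union_right

open Fin.NatCast

theorem stmt6 {V : Type*} [Fintype V] (n s : ℕ) [NeZero n] (hn : 5 ≤ n) (hs : 1 ≤ s)
    (G : SimpleGraph V) (A B : Fin n → Set V)
    -- each `V_i = A_i ∪ B_i` is the disjoint union of two independent sets of size `s`
    (hABdisj : ∀ i, Disjoint (A i) (B i))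
    (hAindep : ∀ i, Indep G (A i)) (hBindep : ∀ i, Indep G (B i))
    (hAcard : ∀ i, (A i).ncard = s) (hBcard : ∀ i, (B i).ncard = s)
    -- the sets `V_i` partition the vertex set
    (hpart : (⋃ i, A i ∪ B i) = Set.univ)
    (hVdisj : ∀ i j, i ≠ j → Disjoint (A i ∪ B i) (A j ∪ B j))
    -- each `V_i` is not independent
    (hVqual : ∀ i, ¬ Indep G (A i ∪ B i))
    -- the edges joining distinct parts are exactly, for each `i`, a perfect matching
    -- between `B i` and `A (i+1)` (indices cyclic modulo `n`)
    (μ : Fin n → V → V) (hμ : ∀ i, Set.BijOn (μ i) (B i) (A (i + 1)))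
    (hcross : ∀ i j, i ≠ j → ∀ u ∈ A i ∪ B i, ∀ v ∈ A j ∪ B j,
      (G.Adj u v ↔ (j = i + 1 ∧ u ∈ B i ∧ v = μ i u) ∨ (i = j + 1 ∧ v ∈ B j ∧ u = μ j v)))
    (f : Set V → ℝ) (hf : IsEntropyFn G f) :
    (∑ i : Fin n, f (A i ∪ B i)) - f (⋃ i, A i ∪ B i) ≥ (n : ℝ) * s + n - 1 := by
  classical
  obtain ⟨N, rfl⟩ : ∃ N, n = N + 5 := ⟨n - 5, by omega⟩
  -- V is nonempty
  have hA0ne : (A 0).Nonempty := by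
    apply Set.nonempty_of_ncard_ne_zero
    rw [hAcard]; omega
  have hnev : Nonempty V := ⟨hA0ne.some⟩
  -- basic index facts
  have hcastne : ∀ a b : ℕ, a < N+5 → b < N+5 → a ≠ b →
      ((a : ℕ) : Fin (N+5)) ≠ ((b : ℕ) : Fin (N+5)) := by
    intro a b ha hb hab h
    apply hab
    have h2 := congrArg Fin.val h
    rwa [Fin.val_natCast, Fin.val_natCast, Nat.mod_eq_of_lt ha, Nat.mod_eq_of_lt hb] at h2
  have hcastadd : ∀ a : ℕ, ((a : ℕ) : Fin (N+5)) + 1 = ((a+1 : ℕ) : Fin (N+5)) := by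
    intro a; push_cast; ring
  have hwrap : ((N+4 : ℕ) : Fin (N+5)) + 1 = ((0 : ℕ) : Fin (N+5)) := by
    rw [hcastadd]
    apply Fin.val_injective
    rw [Fin.val_natCast, Fin.val_natCast]
    have e : N+4+1 = N+5 := by omega
    rw [e, Nat.mod_self, Nat.zero_mod]
  -- element level disjointness
  have hdisjel : ∀ (i j : Fin (N+5)), i ≠ j → ∀ x, x ∈ A i ∪ B i → x ∈ A j ∪ B j → False :=
    fun i j hij x hx hy => Set.disjoint_left.mp (hVdisj i j hij) hx hy
  have hABel : ∀ (i : Fin (N+5)), ∀ x, x ∈ A i → x ∈ B i → False :=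
    fun i x hx hy => Set.disjoint_left.mp (hABdisj i) hx hy
  -- adjacency facts
  have hadjμ : ∀ m : ℕ, m < N+5 → ∀ b ∈ B ((m : ℕ) : Fin (N+5)),
      G.Adj b (μ ((m : ℕ) : Fin (N+5)) b) := by
    intro m hm b hb
    have hne : ((m : ℕ) : Fin (N+5)) ≠ ((m : ℕ) : Fin (N+5)) + 1 := by
      rw [hcastadd]
      intro h
      have h2 := congrArg Fin.val h
      rw [Fin.val_natCast, Fin.val_natCast] at h2
      rcases Nat.lt_or_ge (m+1) (N+5) with hlt | hge
      · rw [Nat.mod_eq_of_lt hm, Nat.mod_eq_of_lt hlt] at h2; omega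
      · have hm4 : m = N+4 := by omega
        subst hm4
        have e : N+4+1 = N+5 := by omega
        rw [Nat.mod_eq_of_lt hm, e, Nat.mod_self] at h2
        omega
    exact (hcross _ _ hne b (Or.inr hb) (μ _ b) (Or.inl ((hμ _).1 hb))).mpr
      (Or.inl ⟨rfl, hb, rfl⟩)
  have hnadjμ : ∀ (i j : Fin (N+5)), i ≠ j → ∀ u ∈ B i, ∀ v ∈ A j,
      v ≠ μ i u → ¬ G.Adj u v := by
    intro i j hij u hu v hv hne hadj
    rcases (hcross i j hij u (Or.inr hu) v (Or.inl hv)).mp hadj with ⟨_, _, h3⟩ | ⟨_, h2, _⟩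
    · exact hne h3
    · exact hABel j v hv h2
  have hnadjAA : ∀ (i j : Fin (N+5)), ∀ u ∈ A i, ∀ v ∈ A j, ¬ G.Adj u v := by
    intro i j u hu v hv hadj
    by_cases hij : i = j
    · subst hij; exact hAindep i u hu v hv hadj
    · rcases (hcross i j hij u (Or.inl hu) v (Or.inl hv)).mp hadj with ⟨_, h2, _⟩ | ⟨_, h2, _⟩
      · exact hABel i u hu h2
      · exact hABel j v hv h2
  have hindAA : ∀ i j : Fin (N+5), Indep G (A i ∪ A j) := by
    intro i j u hu v hv
    rcases hu with hu | hu <;> rcases hv with hv | hv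
    · exact hnadjAA i i u hu v hv
    · exact hnadjAA i j u hu v hv
    · exact hnadjAA j i u hu v hv
    · exact hnadjAA j j u hu v hv
  -- inverse matching
  set pv : Fin (N+5) → V → V := fun i => Function.invFunOn (μ i) (B i) with hpv
  have hpinv : ∀ (i : Fin (N+5)), ∀ a ∈ A (i+1), pv i a ∈ B i ∧ μ i (pv i a) = a := by
    intro i a ha
    obtain ⟨b, hb, hba⟩ := (hμ i).2.2 ha
    exact ⟨Function.invFunOn_mem ⟨b, hb, hba⟩, Function.invFunOn_eq ⟨b, hb, hba⟩⟩
  -- part sets, indexed by ℕ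
  set PP : ℕ → Set V := fun m => A ((m : ℕ) : Fin (N+5)) ∪ B ((m : ℕ) : Fin (N+5)) with hPP
  have hPPm : ∀ m : ℕ, PP m = A ((m : ℕ) : Fin (N+5)) ∪ B ((m : ℕ) : Fin (N+5)) :=
    fun m => rfl
  -- the chain of middle parts
  have hqualpc : ∀ k, ¬ Indep G (pchain PP k) :=
    fun k => notIndep_mono (hVqual ((2:ℕ) : Fin (N+5))) (pchain_sup PP k 2 le_rfl (by omega))
  have claim : ∀ k, k ≤ N+2 →
      f (pchain PP k) + (k : ℝ) * ((s : ℝ) + 1) ≤ ∑ m ∈ Finset.range (k+1), f (PP (m+2)) := by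
    intro k
    induction k with
    | zero => intro _; simp [pchain]
    | succ k IH =>
      intro hk
      have hIH := IH (by omega)
      have hmerge := aux_merge hf (pchain PP k) (A ((k+3 : ℕ) : Fin (N+5)))
        (B ((k+3 : ℕ) : Fin (N+5))) (pv ((k+2 : ℕ) : Fin (N+5))) (hqualpc k)
        (Set.toFinite _)
        (by
          intro x hx hxp
          obtain ⟨m, h2, hm, hmem⟩ := pchain_sub PP k x hxp
          exact hdisjel _ _ (hcastne m (k+3) (by omega) (by omega) (by omega)) x hmem
            (Or.inl hx))
        (by
          intro x hx
          have hx' : x ∈ A (((k+2 : ℕ) : Fin (N+5)) + 1) := by rw [hcastadd]; exact hx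
          exact pchain_sup PP k (k+2) (by omega) (by omega)
            (Or.inr (hpinv _ x hx').1))
        (by
          intro x hx
          have hx' : x ∈ A (((k+2 : ℕ) : Fin (N+5)) + 1) := by rw [hcastadd]; exact hx
          have h := hadjμ (k+2) (by omega) _ (hpinv _ x hx').1
          rwa [(hpinv _ x hx').2] at h)
        (hAindep _)
        (by
          intro x hx y hy hyx
          have hx' : x ∈ A (((k+2 : ℕ) : Fin (N+5)) + 1) := by rw [hcastadd]; exact hx
          refine hnadjμ _ _ (hcastne (k+2) (k+3) (by omega) (by omega) (by omega))
            _ (hpinv _ x hx').1 y hy ?_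
          rw [(hpinv _ x hx').2]; exact hyx)
        (hVqual _)
      rw [hAcard] at hmerge
      have hpc : pchain PP (k+1) = pchain PP k ∪ (A ((k+3 : ℕ) : Fin (N+5)) ∪ B ((k+3 : ℕ) : Fin (N+5))) := rfl
      rw [Finset.sum_range_succ]
      have hPPk3 : PP (k+1+2) = A ((k+3 : ℕ) : Fin (N+5)) ∪ B ((k+3 : ℕ) : Fin (N+5)) := rfl
      rw [hpc, hPPk3]
      push_cast
      push_cast at hmerge
      linarith
  
  -- finsets for the two end chains
  set T2 : Finset V := (Set.toFinite (A ((2:ℕ) : Fin (N+5)))).toFinset with hT2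
  set T0 : Finset V := (Set.toFinite (A ((0:ℕ) : Fin (N+5)))).toFinset with hT0
  have hcoe2 : (↑T2 : Set V) = A ((2:ℕ) : Fin (N+5)) := Set.Finite.coe_toFinset _
  have hcoe0 : (↑T0 : Set V) = A ((0:ℕ) : Fin (N+5)) := Set.Finite.coe_toFinset _
  have hcard2 : (T2.card : ℝ) = (s : ℝ) := by
    rw [hT2, ← Set.ncard_eq_toFinset_card _ (Set.toFinite _), hAcard]
  have hcard0 : (T0.card : ℝ) = (s : ℝ) := by
    rw [hT0, ← Set.ncard_eq_toFinset_card _ (Set.toFinite _), hAcard]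
  -- merge V1 onto V0
  have hmerge1 := aux_merge hf (A ((0:ℕ) : Fin (N+5)) ∪ B ((0:ℕ) : Fin (N+5)))
    (A ((1:ℕ) : Fin (N+5))) (B ((1:ℕ) : Fin (N+5))) (pv ((0:ℕ) : Fin (N+5)))
    (hVqual _) (Set.toFinite _)
    (by
      intro x hx hxp
      exact hdisjel _ _ (hcastne 1 0 (by omega) (by omega) (by omega)) x (Or.inl hx) hxp)
    (by
      intro x hx
      have hx' : x ∈ A (((0:ℕ) : Fin (N+5)) + 1) := by rw [hcastadd]; exact hx
      exact Or.inr (hpinv _ x hx').1)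
    (by
      intro x hx
      have hx' : x ∈ A (((0:ℕ) : Fin (N+5)) + 1) := by rw [hcastadd]; exact hx
      have h := hadjμ 0 (by omega) _ (hpinv _ x hx').1
      rwa [(hpinv _ x hx').2] at h)
    (hAindep _)
    (by
      intro x hx y hy hyx
      have hx' : x ∈ A (((0:ℕ) : Fin (N+5)) + 1) := by rw [hcastadd]; exact hx
      refine hnadjμ _ _ (hcastne 0 1 (by omega) (by omega) (by omega))
        _ (hpinv _ x hx').1 y hy ?_
      rw [(hpinv _ x hx').2]; exact hyx)
    (hVqual _)
  rw [hAcard] at hmerge1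
  -- left chain: add A 2 to V0 ∪ V1, comparator based at A 0
  have hLchain := aux_chain hf
    ((A ((0:ℕ) : Fin (N+5)) ∪ B ((0:ℕ) : Fin (N+5))) ∪
      (A ((1:ℕ) : Fin (N+5)) ∪ B ((1:ℕ) : Fin (N+5))))
    (A ((0:ℕ) : Fin (N+5))) (pv ((1:ℕ) : Fin (N+5)))
    (notIndep_mono (hVqual ((0:ℕ) : Fin (N+5))) Set.subset_union_left)
    (fun x hx => Or.inl (Or.inl hx)) T2
    (by
      intro x hx
      rw [hT2, Set.Finite.mem_toFinset] at hx
      rintro (hxp | hxp)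
      · exact hdisjel _ _ (hcastne 2 0 (by omega) (by omega) (by omega)) x (Or.inl hx) hxp
      · exact hdisjel _ _ (hcastne 2 1 (by omega) (by omega) (by omega)) x (Or.inl hx) hxp)
    (by
      intro x hx
      rw [hT2, Set.Finite.mem_toFinset] at hx
      have hx' : x ∈ A (((1:ℕ) : Fin (N+5)) + 1) := by rw [hcastadd]; exact hx
      exact Or.inr (Or.inr (hpinv _ x hx').1))
    (by
      intro x hx
      rw [hT2, Set.Finite.mem_toFinset] at hx
      have hx' : x ∈ A (((1:ℕ) : Fin (N+5)) + 1) := by rw [hcastadd]; exact hx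
      intro hmem
      exact hdisjel _ _ (hcastne 1 0 (by omega) (by omega) (by omega)) (pv _ x)
        (Or.inr (hpinv _ x hx').1) (Or.inl hmem))
    (by
      intro x hx
      rw [hT2, Set.Finite.mem_toFinset] at hx
      have hx' : x ∈ A (((1:ℕ) : Fin (N+5)) + 1) := by rw [hcastadd]; exact hx
      have h := hadjμ 1 (by omega) _ (hpinv _ x hx').1
      rwa [(hpinv _ x hx').2] at h)
    (by rw [hcoe2]; exact hindAA _ _)
    (by
      intro x hx y hy hyx
      rw [hT2, Set.Finite.mem_toFinset] at hx
      rw [hcoe2] at hy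
      have hx' : x ∈ A (((1:ℕ) : Fin (N+5)) + 1) := by rw [hcastadd]; exact hx
      rcases hy with hy | hy
      · refine hnadjμ _ _ (hcastne 1 0 (by omega) (by omega) (by omega))
          _ (hpinv _ x hx').1 y hy ?_
        rw [(hpinv _ x hx').2]; exact hyx
      · refine hnadjμ _ _ (hcastne 1 2 (by omega) (by omega) (by omega))
          _ (hpinv _ x hx').1 y hy ?_
        rw [(hpinv _ x hx').2]; exact hyx)
  rw [hcoe2, hcard2] at hLchain
  -- right chain: add A 0 to pchain, comparator based at A 2
  have hRchain := aux_chain hf (pchain PP (N+2))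
    (A ((2:ℕ) : Fin (N+5))) (pv ((N+4:ℕ) : Fin (N+5)))
    (hqualpc (N+2))
    (fun x hx => pchain_sup PP (N+2) 2 le_rfl (by omega) (Or.inl hx)) T0
    (by
      intro x hx hxp
      rw [hT0, Set.Finite.mem_toFinset] at hx
      obtain ⟨m, h2, hm, hmem⟩ := pchain_sub PP (N+2) x hxp
      exact hdisjel _ _ (hcastne m 0 (by omega) (by omega) (by omega)) x hmem (Or.inl hx))
    (by
      intro x hx
      rw [hT0, Set.Finite.mem_toFinset] at hx
      have hx' : x ∈ A (((N+4:ℕ) : Fin (N+5)) + 1) := by rw [hwrap]; exact hx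
      exact pchain_sup PP (N+2) (N+4) (by omega) (by omega) (Or.inr (hpinv _ x hx').1))
    (by
      intro x hx
      rw [hT0, Set.Finite.mem_toFinset] at hx
      have hx' : x ∈ A (((N+4:ℕ) : Fin (N+5)) + 1) := by rw [hwrap]; exact hx
      intro hmem
      exact hdisjel _ _ (hcastne (N+4) 2 (by omega) (by omega) (by omega)) (pv _ x)
        (Or.inr (hpinv _ x hx').1) (Or.inl hmem))
    (by
      intro x hx
      rw [hT0, Set.Finite.mem_toFinset] at hx
      have hx' : x ∈ A (((N+4:ℕ) : Fin (N+5)) + 1) := by rw [hwrap]; exact hx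
      have h := hadjμ (N+4) (by omega) _ (hpinv _ x hx').1
      rwa [(hpinv _ x hx').2] at h)
    (by rw [hcoe0]; exact hindAA _ _)
    (by
      intro x hx y hy hyx
      rw [hT0, Set.Finite.mem_toFinset] at hx
      rw [hcoe0] at hy
      have hx' : x ∈ A (((N+4:ℕ) : Fin (N+5)) + 1) := by rw [hwrap]; exact hx
      rcases hy with hy | hy
      · refine hnadjμ _ _ (hcastne (N+4) 2 (by omega) (by omega) (by omega))
          _ (hpinv _ x hx').1 y hy ?_
        rw [(hpinv _ x hx').2]; exact hyx
      · refine hnadjμ _ _ (hcastne (N+4) 0 (by omega) (by omega) (by omega))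
          _ (hpinv _ x hx').1 y hy ?_
        rw [(hpinv _ x hx').2]; exact hyx)
  rw [hcoe0, hcard0] at hRchain
  rw [Set.union_comm (A ((2:ℕ) : Fin (N+5))) (A ((0:ℕ) : Fin (N+5)))] at hRchain
  -- star step
  have hstar := hf.2.2.2.2
    (((A ((0:ℕ) : Fin (N+5)) ∪ B ((0:ℕ) : Fin (N+5))) ∪
      (A ((1:ℕ) : Fin (N+5)) ∪ B ((1:ℕ) : Fin (N+5)))) ∪ ↑T2)
    (pchain PP (N+2) ∪ ↑T0)
    (A ((0:ℕ) : Fin (N+5)) ∪ A ((2:ℕ) : Fin (N+5)))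
    (Or.inr (hindAA _ _))
    (notIndep_mono (hVqual ((0:ℕ) : Fin (N+5)))
      (fun x hx => Or.inl (Or.inl (Or.inl hx))))
    (notIndep_mono (hVqual ((2:ℕ) : Fin (N+5)))
      (fun x hx => Or.inl (Or.inl (pchain_sup PP (N+2) 2 le_rfl (by omega) hx))))
  have eL : (((A ((0:ℕ) : Fin (N+5)) ∪ B ((0:ℕ) : Fin (N+5))) ∪
      (A ((1:ℕ) : Fin (N+5)) ∪ B ((1:ℕ) : Fin (N+5)))) ∪ ↑T2) ∪
      (A ((0:ℕ) : Fin (N+5)) ∪ A ((2:ℕ) : Fin (N+5)))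
      = ((A ((0:ℕ) : Fin (N+5)) ∪ B ((0:ℕ) : Fin (N+5))) ∪
      (A ((1:ℕ) : Fin (N+5)) ∪ B ((1:ℕ) : Fin (N+5)))) ∪ ↑T2 := by
    apply Set.union_eq_self_of_subset_right
    rintro x (hx | hx)
    · exact Or.inl (Or.inl (Or.inl hx))
    · right; rw [hcoe2]; exact hx
  have eR : (pchain PP (N+2) ∪ ↑T0) ∪
      (A ((0:ℕ) : Fin (N+5)) ∪ A ((2:ℕ) : Fin (N+5)))
      = pchain PP (N+2) ∪ ↑T0 := by
    apply Set.union_eq_self_of_subset_right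
    rintro x (hx | hx)
    · right; rw [hcoe0]; exact hx
    · exact Or.inl (pchain_sup PP (N+2) 2 le_rfl (by omega) (Or.inl hx))
  have eW : ((((A ((0:ℕ) : Fin (N+5)) ∪ B ((0:ℕ) : Fin (N+5))) ∪
      (A ((1:ℕ) : Fin (N+5)) ∪ B ((1:ℕ) : Fin (N+5)))) ∪ ↑T2) ∪
      (pchain PP (N+2) ∪ ↑T0)) ∪
      (A ((0:ℕ) : Fin (N+5)) ∪ A ((2:ℕ) : Fin (N+5)))
      = ⋃ i, A i ∪ B i := by
    apply Set.Subset.antisymm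
    · rintro x ((((hx | hx) | hx) | (hx | hx)) | (hx | hx))
      · exact Set.mem_iUnion.mpr ⟨_, hx⟩
      · exact Set.mem_iUnion.mpr ⟨_, hx⟩
      · rw [hcoe2] at hx
        exact Set.mem_iUnion.mpr ⟨_, Or.inl hx⟩
      · obtain ⟨m, _, _, hm⟩ := pchain_sub PP (N+2) x hx
        exact Set.mem_iUnion.mpr ⟨_, hm⟩
      · rw [hcoe0] at hx
        exact Set.mem_iUnion.mpr ⟨_, Or.inl hx⟩
      · exact Set.mem_iUnion.mpr ⟨_, Or.inl hx⟩
      · exact Set.mem_iUnion.mpr ⟨_, Or.inl hx⟩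
    · intro x hx
      obtain ⟨i, hi⟩ := Set.mem_iUnion.mp hx
      have hiv : i = ((i.val : ℕ) : Fin (N+5)) := (Fin.cast_val_eq_self i).symm
      rw [hiv] at hi
      by_cases h0 : i.val = 0
      · rw [h0] at hi
        exact Or.inl (Or.inl (Or.inl (Or.inl hi)))
      · by_cases h1 : i.val = 1
        · rw [h1] at hi
          exact Or.inl (Or.inl (Or.inl (Or.inr hi)))
        · have h2 : 2 ≤ i.val := by omega
          have h4 : i.val ≤ N+4 := by have := i.isLt; omega
          exact Or.inl (Or.inr (Or.inl (pchain_sup PP (N+2) i.val h2 (by omega) hi)))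
  rw [eL, eR, eW] at hstar
  rw [hcoe2, hcoe0] at hstar
  -- sum decomposition
  have hsum : ∑ i : Fin (N+5), f (A i ∪ B i)
      = f (A ((0:ℕ) : Fin (N+5)) ∪ B ((0:ℕ) : Fin (N+5)))
        + f (A ((1:ℕ) : Fin (N+5)) ∪ B ((1:ℕ) : Fin (N+5)))
        + ∑ m ∈ Finset.range (N+3), f (PP (m+2)) := by
    have h1 : ∑ i : Fin (N+5), f (A i ∪ B i) = ∑ m ∈ Finset.range (N+5), f (PP m) := by
      rw [← Fin.sum_univ_eq_sum_range (fun m => f (PP m)) (N+5)]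
      apply Finset.sum_congr rfl
      intro i _
      rw [show PP (i : ℕ) = A ((i : ℕ) : Fin (N+5)) ∪ B ((i : ℕ) : Fin (N+5)) from rfl,
        Fin.cast_val_eq_self]
    rw [h1, Finset.sum_range_succ', Finset.sum_range_succ']
    have e1 : ∀ m : ℕ, f (PP (m+1+1)) = f (PP (m+2)) := fun m => rfl
    simp only [e1]
    have e2 : PP (0+1) = A ((1:ℕ) : Fin (N+5)) ∪ B ((1:ℕ) : Fin (N+5)) := rfl
    have e3 : PP 0 = A ((0:ℕ) : Fin (N+5)) ∪ B ((0:ℕ) : Fin (N+5)) := rfl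
    rw [e2, e3]
    ring
  -- final accounting
  have hclaim := claim (N+2) le_rfl
  rw [show N+2+1 = N+3 from rfl] at hclaim
  have hsubadd := aux_subadd hf (A ((0:ℕ) : Fin (N+5))) (A ((2:ℕ) : Fin (N+5)))
  rw [ge_iff_le, hsum]
  have hbridge : ((N:ℝ)+2)*((s:ℝ)+1) = ((N:ℝ)+5)*(s:ℝ) + ((N:ℝ)+4) - 3*(s:ℝ) - 2 := by
    ring
  push_cast
  push_cast at hclaim hmerge1 hLchain hRchain hstar hsubadd
  linarith
end

section
/- Let H and G be simple graphs and let φ : H → G be a graph homomorphism that is injective on the neighborhood of every vertex of H (i.e., for every vertex v of H, distinct neighbors of v have distinct images under φ). If H contains a cycle of length ℓ, then G contains a cycle of length at most ℓ; consequently the girth of H is at least the girth of G. -/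
open SimpleGraph Walk

private lemma walk_between' {α : Type*} {H : SimpleGraph α} {s t x y : α} (W : H.Walk s t)
    (hx : x ∈ W.support) (hy : y ∈ W.support) :
    ∃ r : H.Walk x y, r.length ≤ W.length := by
  classical
  by_cases h : y ∈ (W.dropUntil x hx).support
  · exact ⟨(W.dropUntil x hx).takeUntil y h,
      le_trans (Walk.length_takeUntil_le _ h) (Walk.length_dropUntil_le _ hx)⟩
  · have hy' : y ∈ (W.takeUntil x hx).support := by
      rw [← W.take_spec hx, Walk.mem_support_append_iff] at hy
      exact hy.resolve_right h
    refine ⟨((W.takeUntil x hx).dropUntil y hy').reverse, ?_⟩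
    rw [Walk.length_reverse]
    exact le_trans (Walk.length_dropUntil_le _ hy') (Walk.length_takeUntil_le _ hx)

theorem stmt11 {α β : Type*} (H : SimpleGraph α) (G : SimpleGraph β) (φ : H →g G)
    (hloc : ∀ v : α, Set.InjOn φ (H.neighborSet v)) :
    (∀ (u : α) (w : H.Walk u u), w.IsCycle →
      ∃ (v : β) (c : G.Walk v v), c.IsCycle ∧ c.length ≤ w.length) ∧
    G.egirth ≤ H.egirth := by
  classical
  have key : ∀ (u : α) (w : H.Walk u u), w.IsCycle →
      ∃ (v : β) (c : G.Walk v v), c.IsCycle ∧ c.length ≤ w.length := by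
    intro u w hw
    by_cases hcase : ∃ x ∈ w.support, ∃ y ∈ w.support, x ≠ y ∧ φ x = φ y
    · -- there exist two distinct vertices on w with equal images
      set P : ℕ → Prop := fun n => ∃ (a b : α) (p : H.Walk a b),
        p.IsPath ∧ φ a = φ b ∧ a ≠ b ∧ p.length = n with hPdef
      have hP : ∃ n, P n ∧ n ≤ w.length := by
        obtain ⟨x, hx, y, hy, hxy, hfxy⟩ := hcase
        obtain ⟨r, hr⟩ := walk_between' w hx hy
        exact ⟨r.bypass.length, ⟨x, y, r.bypass, r.bypass_isPath, hfxy, hxy, rfl⟩,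
          le_trans (Walk.length_bypass_le r) hr⟩
      obtain ⟨n0, hn0P, hn0le⟩ := hP
      have hPex : ∃ n, P n := ⟨n0, hn0P⟩
      obtain ⟨a, b, p, hp, hfab, hab, hlen⟩ := Nat.find_spec hPex
      have hdle : p.length ≤ w.length := by
        rw [hlen]; exact le_trans (Nat.find_le hn0P) hn0le
      have hmin : ∀ m, m < p.length → ¬ P m := by
        intro m hm
        exact Nat.find_min hPex (by omega)
      -- p has length at least 3
      have h0 : p.length ≠ 0 := fun hl => hab (Walk.eq_of_length_eq_zero hl)
      have h1 : p.length ≠ 1 := by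
        intro hl
        have hadj : H.Adj a b := by
          have := p.adj_getVert_succ (i := 0) (by omega)
          rwa [Walk.getVert_zero, show (0 : ℕ) + 1 = p.length by omega,
            Walk.getVert_length] at this
        have := φ.map_adj hadj
        rw [hfab] at this
        exact G.loopless.irrefl _ this
      have h2 : p.length ≠ 2 := by
        intro hl
        have ha1 : H.Adj a (p.getVert 1) := by
          have := p.adj_getVert_succ (i := 0) (by omega)
          rwa [Walk.getVert_zero] at this
        have hb1 : H.Adj (p.getVert 1) b := by
          have := p.adj_getVert_succ (i := 1) (by omega)
          rwa [show (1 : ℕ) + 1 = p.length by omega, Walk.getVert_length] at this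
        exact hab (hloc (p.getVert 1) ha1.symm hb1 hfab)
      have hd3 : 3 ≤ p.length := by omega
      cases p with
      | nil => simp at h0
      | @cons _ a₁ _ h q =>
        rw [Walk.cons_isPath_iff] at hp
        obtain ⟨hq, hanq⟩ := hp
        rw [Walk.length_cons] at hd3 hdle hmin h0 h1 h2 hlen
        -- φ is injective on the support of q
        have hinj : ∀ x ∈ q.support, ∀ y ∈ q.support, φ x = φ y → x = y := by
          intro x hx y hy hxy
          by_contra hne
          obtain ⟨r, hr⟩ := walk_between' q hx hy
          refine hmin r.bypass.length
            (lt_of_le_of_lt (le_trans (Walk.length_bypass_le r) hr) (by omega))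
            ⟨x, y, r.bypass, r.bypass_isPath, hxy, hne, rfl⟩
        have hqφ : (q.map φ).IsPath := by
          rw [Walk.isPath_def, Walk.support_map]
          exact (Walk.isPath_def _ |>.mp hq).map_on hinj
        have hedge : s(φ a, φ a₁) ∉ (q.map φ).edges := by
          intro hmem
          rw [Walk.edges_map, List.mem_map] at hmem
          obtain ⟨e, he, hmap⟩ := hmem
          induction e using Sym2.ind with
          | _ x y =>
            rw [Sym2.map_pair_eq, Sym2.eq_iff] at hmap
            have hxs : x ∈ q.support := q.fst_mem_support_of_mem_edges he
            have hys : y ∈ q.support := q.snd_mem_support_of_mem_edges he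
            have hbs : b ∈ q.support := Walk.end_mem_support q
            have ha1s : a₁ ∈ q.support := Walk.start_mem_support q
            have hadj : H.Adj a₁ b := by
              rcases hmap with ⟨hx1, hy1⟩ | ⟨hx1, hy1⟩
              · have hxb : x = b := hinj x hxs b hbs (by rw [hx1, hfab])
                have hya : y = a₁ := hinj y hys a₁ ha1s hy1
                subst hxb; subst hya
                exact (q.adj_of_mem_edges he).symm
              · have hxa : x = a₁ := hinj x hxs a₁ ha1s hx1
                have hyb : y = b := hinj y hys b hbs (by rw [hy1, hfab])
                subst hxa; subst hyb
                exact q.adj_of_mem_edges he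
            -- then a - a₁ - b is a path of length 2 with equal endpoint images
            refine hmin 2 (by omega) ⟨a, b, Walk.cons h (Walk.cons hadj Walk.nil),
              ?_, hfab, hab, by simp⟩
            rw [Walk.isPath_def]
            simp only [Walk.support_cons, Walk.support_nil]
            refine List.nodup_cons.2 ⟨?_, List.nodup_cons.2 ⟨?_, List.nodup_cons.2
              ⟨List.not_mem_nil, List.nodup_nil⟩⟩⟩
            · simp only [List.mem_cons, List.not_mem_nil, or_false]
              rintro (rfl | rfl)
              · exact H.loopless.irrefl _ h
              · exact hab rfl
            · simp only [List.mem_cons, List.not_mem_nil, or_false]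
              rintro rfl
              exact H.loopless.irrefl _ hadj
        -- build the cycle in G
        refine ⟨φ a, Walk.cons (φ.map_adj h) ((q.map φ).copy rfl hfab.symm), ?_, ?_⟩
        · rw [Walk.cons_isCycle_iff]
          constructor
          · rwa [Walk.isPath_copy]
          · rwa [Walk.edges_copy]
        · rw [Walk.length_cons, Walk.length_copy, Walk.length_map]
          omega
    · -- φ is injective on the support of w
      push_neg at hcase
      have hinj : ∀ x ∈ w.support, ∀ y ∈ w.support, φ x = φ y → x = y := by
        intro x hx y hy hxy
        by_contra hne
        exact (hcase x hx y hy hne) hxy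
      cases w with
      | nil => simp [Walk.isCycle_def] at hw
      | @cons _ u₁ _ h q =>
        rw [Walk.cons_isCycle_iff] at hw
        obtain ⟨hq, hedges⟩ := hw
        have hsub : ∀ x ∈ q.support, x ∈ (Walk.cons h q).support := by
          intro x hx
          rw [Walk.support_cons]
          exact List.mem_cons_of_mem _ hx
        have hus : u ∈ (Walk.cons h q).support := Walk.start_mem_support _
        have hu1s : u₁ ∈ (Walk.cons h q).support := hsub _ (Walk.start_mem_support q)
        have hqφ : (q.map φ).IsPath := by
          rw [Walk.isPath_def, Walk.support_map]
          refine (Walk.isPath_def _ |>.mp hq).map_on ?_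
          intro x hx y hy hxy
          exact hinj x (hsub x hx) y (hsub y hy) hxy
        have hedge : s(φ u, φ u₁) ∉ (q.map φ).edges := by
          intro hmem
          rw [Walk.edges_map, List.mem_map] at hmem
          obtain ⟨e, he, hmap⟩ := hmem
          induction e using Sym2.ind with
          | _ x y =>
            rw [Sym2.map_pair_eq, Sym2.eq_iff] at hmap
            have hxs := hsub x (q.fst_mem_support_of_mem_edges he)
            have hys := hsub y (q.snd_mem_support_of_mem_edges he)
            rcases hmap with ⟨hx1, hy1⟩ | ⟨hx1, hy1⟩
            · have hxu : x = u := hinj x hxs u hus hx1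
              have hyu : y = u₁ := hinj y hys u₁ hu1s hy1
              subst hxu; subst hyu
              exact hedges he
            · have hxu : x = u₁ := hinj x hxs u₁ hu1s hx1
              have hyu : y = u := hinj y hys u hus hy1
              subst hxu; subst hyu
              rw [Sym2.eq_swap] at he
              exact hedges he
        refine ⟨φ u, Walk.cons (φ.map_adj h) (q.map φ), ?_, ?_⟩
        · rw [Walk.cons_isCycle_iff]
          exact ⟨hqφ, hedge⟩
        · rw [Walk.length_cons, Walk.length_map, Walk.length_cons]
  refine ⟨key, ?_⟩
  rw [le_egirth]
  intro a w hw
  obtain ⟨v, c, hc, hlen⟩ := key a w hw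
  calc G.egirth ≤ (c.length : ℕ∞) := by
        rw [egirth]
        exact iInf_le_of_le v (iInf_le_of_le c (iInf_le _ hc))
    _ ≤ (w.length : ℕ∞) := by exact_mod_cast hlen
end

section
/- Let g > 3, let π be a permutation of {1, …, n} with π(i) ∉ {i, i+1 mod n} for all i, and suppose the π-graph on 2n vertices has girth greater than g. Then for every integer m ≥ 5 the graph H on the 2nm vertices a_{i,j}, b_{i,j} (1 ≤ i ≤ n, 1 ≤ j ≤ m, both indices cyclic), in which a_{i,j} is adjacent exactly to b_{i,j}, b_{i+1,j} and b_{π(i),j+1}, also has girth greater than g. -/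
open SimpleGraph SimpleGraph.Walk

/-- For a permutation `π` of the `n` (cyclic) indices, the `π`-graph is the bipartite
graph on the `2n` vertices `a_i = Sum.inl i` and `b_j = Sum.inr j` in which `a_i` is
adjacent exactly to `b_i`, `b_{i+1}` and `b_{π i}` (indices modulo `n`). -/
def piGraph (n : ℕ) (π : Equiv.Perm (ZMod n)) : SimpleGraph (ZMod n ⊕ ZMod n) :=
  SimpleGraph.fromRel (fun u v => ∃ i j : ZMod n,
    u = Sum.inl i ∧ v = Sum.inr j ∧ (j = i ∨ j = i + 1 ∨ j = π i))

/-- The graph `H` on the `2nm` vertices `a_{i,j} = Sum.inl (i, j)` and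
`b_{i',j'} = Sum.inr (i', j')` in which `a_{i,j}` is adjacent exactly to `b_{i,j}`,
`b_{i+1,j}` and `b_{π i, j+1}` (both indices cyclic). -/
def HGraph (n m : ℕ) (π : Equiv.Perm (ZMod n)) :
    SimpleGraph ((ZMod n × ZMod m) ⊕ (ZMod n × ZMod m)) :=
  SimpleGraph.fromRel (fun u v => ∃ (i i' : ZMod n) (j j' : ZMod m),
    u = Sum.inl (i, j) ∧ v = Sum.inr (i', j') ∧
      ((i' = i ∧ j' = j) ∨ (i' = i + 1 ∧ j' = j) ∨ (i' = π i ∧ j' = j + 1)))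

section general
variable {V : Type*} {G : SimpleGraph V}

lemma egirth_le_length {v : V} {c : G.Walk v v} (hc : c.IsCycle) :
    G.egirth ≤ c.length :=
  iInf_le_of_le v (iInf_le_of_le c (iInf_le _ hc))

/-- An edge `s(v,x)` cannot appear in a path of length ≥ 2 from `x` to `v`. -/
lemma edge_not_mem_path {x v : V} (q : G.Walk x v) (hq : q.support.Nodup)
    (hl : 2 ≤ q.length) : s(v, x) ∉ q.edges := by
  cases q with
  | nil => simp
  | @cons _ y _ h' q' =>
    simp only [support_cons, List.nodup_cons] at hq
    obtain ⟨hx, hnd⟩ := hq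
    intro hmem
    simp only [edges_cons, List.mem_cons] at hmem
    rcases hmem with heq | hmem
    · rw [Sym2.eq_iff] at heq
      rcases heq with ⟨hv, _⟩ | ⟨hv, -⟩
      · exact hx (hv ▸ q'.end_mem_support)
      · subst hv
        cases q' with
        | nil => simp [length_cons] at hl
        | cons h'' q'' =>
          simp only [support_cons, List.nodup_cons] at hnd
          exact hnd.1 q''.end_mem_support
    · exact hx (q'.snd_mem_support_of_mem_edges hmem)

/-- From a walk with duplicated support, extract a nontrivial closed walk whose
edges form a contiguous (hence `Chain' Ne`-preserving) piece. -/
lemma exists_closed_of_not_nodup : ∀ {u v : V} (q : G.Walk u v), ¬ q.support.Nodup →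
    List.Chain' Ne q.edges →
    ∃ (w : V) (r : G.Walk w w), 1 ≤ r.length ∧ r.length ≤ q.length ∧
      List.Chain' Ne r.edges := by
  intro u v q
  induction q with
  | nil => intro hnd _; simp at hnd
  | @cons u x v h q' ih =>
    intro hnd hc
    haveI := Classical.decEq V
    by_cases hu : u ∈ q'.support
    · refine ⟨u, Walk.cons h (q'.takeUntil u hu), by simp [length_cons], ?_, ?_⟩
      · simp only [length_cons]
        exact Nat.succ_le_succ (q'.length_takeUntil_le hu)
      · refine hc.prefix ?_
        refine ⟨(q'.dropUntil u hu).edges, ?_⟩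
        rw [edges_cons, edges_cons, List.cons_append, ← edges_append, take_spec]
    · have : ¬ q'.support.Nodup := by
        simp only [support_cons, List.nodup_cons] at hnd
        tauto
      obtain ⟨w, r, h1, h2, h3⟩ := ih this hc.tail
      exact ⟨w, r, h1, h2.trans (by simp [length_cons]), h3⟩

/-- A nontrivial closed walk whose edge list has no two consecutive equal edges
forces a cycle of at most its length. -/
lemma egirth_le_of_closed_chain' : ∀ (ℓ : ℕ), 1 ≤ ℓ → ∀ {v : V} (p : G.Walk v v),
    p.length = ℓ → List.Chain' Ne p.edges → G.egirth ≤ (ℓ : ℕ∞) := by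
  intro ℓ
  induction ℓ using Nat.strong_induction_on with
  | _ ℓ IH =>
    intro hℓ v p hlen hc
    cases p with
    | nil => simp at hlen; omega
    | @cons _ x _ h q =>
      by_cases hnd : q.support.Nodup
      · cases q with
        | nil => exact absurd rfl h.ne
        | @cons _ y _ h' q' =>
          cases q' with
          | nil =>
            exfalso
            simp only [edges_cons, edges_nil, List.Chain', List.isChain_cons_cons, List.isChain_singleton,
              and_true] at hc
            exact hc (Sym2.eq_swap)
          | cons h'' q'' =>
            have hl2 : 2 ≤ (Walk.cons h' (Walk.cons h'' q'')).length := by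
              simp [length_cons]
            have hcyc : (Walk.cons h (Walk.cons h' (Walk.cons h'' q''))).IsCycle := by
              rw [cons_isCycle_iff]
              exact ⟨IsPath.mk' hnd, edge_not_mem_path _ hnd hl2⟩
            calc G.egirth ≤ _ := _root_.egirth_le_length hcyc
            _ = (ℓ : ℕ∞) := by rw [hlen]
      · have hc' : List.Chain' Ne q.edges := by
          rw [edges_cons] at hc; exact hc.tail
        obtain ⟨w, r, h1, h2, h3⟩ := exists_closed_of_not_nodup q hnd hc'
        have hlt : r.length < ℓ := by
          have : q.length = ℓ - 1 := by simp [length_cons] at hlen; omega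
          omega
        calc G.egirth ≤ (r.length : ℕ∞) := IH r.length hlt h1 r rfl h3
        _ ≤ (ℓ : ℕ∞) := by exact_mod_cast hlt.le

end general

section homsec
variable {n m : ℕ} {π : Equiv.Perm (ZMod n)}

def projFun (n m : ℕ) : (ZMod n × ZMod m) ⊕ (ZMod n × ZMod m) → ZMod n ⊕ ZMod n :=
  Sum.map Prod.fst Prod.fst

lemma proj_adj {u v} (h : (HGraph n m π).Adj u v) :
    (piGraph n π).Adj (projFun n m u) (projFun n m v) := by
  rw [HGraph, SimpleGraph.fromRel_adj] at h
  obtain ⟨-, h | h⟩ := h <;>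
  · obtain ⟨i, i', j, j', hu, hv, hcond⟩ := h
    subst hu; subst hv
    rw [piGraph, SimpleGraph.fromRel_adj]
    simp only [projFun, Sum.map_inl, Sum.map_inr]
    first
    | exact ⟨by simp, Or.inl ⟨i, i', rfl, rfl, by tauto⟩⟩
    | exact ⟨by simp, Or.inr ⟨i, i', rfl, rfl, by tauto⟩⟩

def projHom (n m : ℕ) (π : Equiv.Perm (ZMod n)) : HGraph n m π →g piGraph n π :=
  ⟨projFun n m, proj_adj⟩

variable (hπ : ∀ i : ZMod n, π i ≠ i ∧ π i ≠ i + 1)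

include hπ

lemma add_one_ne (i : ZMod n) : i + 1 ≠ i := by
  intro hEq
  have h1 : (0 : ZMod n) = 1 := by
    have := congrArg (· - i) hEq
    simpa using this.symm
  haveI := subsingleton_of_zero_eq_one h1
  exact (hπ 0).1 (Subsingleton.elim _ _)

lemma proj_loc_inj {x y z} (h1 : (HGraph n m π).Adj x y) (h2 : (HGraph n m π).Adj y z)
    (hxz : x ≠ z) : projFun n m x ≠ projFun n m z := by
  rw [HGraph, SimpleGraph.fromRel_adj] at h1 h2
  obtain ⟨-, h1⟩ := h1
  obtain ⟨-, h2⟩ := h2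
  rcases h1 with ⟨i1, i1', j1, j1', hx, hy, hc1⟩ | ⟨i1, i1', j1, j1', hy, hx, hc1⟩ <;>
    rcases h2 with ⟨i2, i2', j2, j2', hy2, hz, hc2⟩ | ⟨i2, i2', j2, j2', hz, hy2, hc2⟩ <;>
      subst hx <;> subst hz <;> rw [hy2] at hy
  case _ =>
    exact absurd hy (by simp)
  case _ =>
    -- x = inl (i1,j1), z = inl (i2,j2), y = inr
    simp only [Sum.inr.injEq, Prod.mk.injEq] at hy
    obtain ⟨e1, e2⟩ := hy
    simp only [projFun, Sum.map_inl, ne_eq, Sum.inl.injEq]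
    intro heq
    rcases hc1 with ⟨ha, hb⟩ | ⟨ha, hb⟩ | ⟨ha, hb⟩ <;>
      rcases hc2 with ⟨hc, hd⟩ | ⟨hc, hd⟩ | ⟨hc, hd⟩ <;>
        rw [heq] at ha <;>
        first
        | exact hxz (by rw [heq, (hb.symm.trans (e2.symm.trans hd) : j1 = j2)])
        | exact hxz (by
            rw [heq, add_right_cancel (hb.symm.trans (e2.symm.trans hd) : j1 + 1 = j2 + 1)])
        | exact add_one_ne hπ i2 (ha.symm.trans (e1.symm.trans hc) : i2 + 1 = i2)
        | exact add_one_ne hπ i2 ((ha.symm.trans (e1.symm.trans hc) : i2 = i2 + 1)).symm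
        | exact (hπ i2).1 (ha.symm.trans (e1.symm.trans hc) : π i2 = i2)
        | exact (hπ i2).1 ((ha.symm.trans (e1.symm.trans hc) : i2 = π i2)).symm
        | exact (hπ i2).2 (ha.symm.trans (e1.symm.trans hc) : π i2 = i2 + 1)
        | exact (hπ i2).2 ((ha.symm.trans (e1.symm.trans hc) : i2 + 1 = π i2)).symm
  case _ =>
    -- y = inl; x = inr (i1',j1'), z = inr (i2',j2')
    simp only [Sum.inl.injEq, Prod.mk.injEq] at hy
    obtain ⟨e1, e2⟩ := hy
    subst e1; subst e2
    simp only [projFun, Sum.map_inr, ne_eq, Sum.inr.injEq]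
    intro heq
    rcases hc1 with ⟨ha, hb⟩ | ⟨ha, hb⟩ | ⟨ha, hb⟩ <;>
      rcases hc2 with ⟨hc, hd⟩ | ⟨hc, hd⟩ | ⟨hc, hd⟩ <;>
        rw [heq] at ha <;>
        first
        | exact hxz (by rw [heq, (hb.trans hd.symm : j1' = j2')])
        | exact add_one_ne hπ i2 (ha.symm.trans hc : i2 + 1 = i2)
        | exact add_one_ne hπ i2 ((ha.symm.trans hc : i2 = i2 + 1)).symm
        | exact (hπ i2).1 (ha.symm.trans hc : π i2 = i2)
        | exact (hπ i2).1 ((ha.symm.trans hc : i2 = π i2)).symm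
        | exact (hπ i2).2 (ha.symm.trans hc : π i2 = i2 + 1)
        | exact (hπ i2).2 ((ha.symm.trans hc : i2 + 1 = π i2)).symm
  case _ =>
    exact absurd hy (by simp)


lemma chain'_map_proj : ∀ {u v} (p : (HGraph n m π).Walk u v),
    List.Chain' Ne p.edges → List.Chain' Ne ((p.map (projHom n m π)).edges) := by
  intro u v p
  induction p with
  | nil => simp [List.Chain']
  | @cons u v w h p ih =>
    intro hc
    cases p with
    | nil => simp [List.Chain']
    | @cons _ x _ h' p' =>
      rw [edges_cons, edges_cons] at hc; simp only [List.Chain'] at hc; rw [List.isChain_cons_cons] at hc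
      rw [Walk.map_cons, Walk.map_cons, edges_cons, edges_cons]; simp only [List.Chain']; rw [List.isChain_cons_cons]
      constructor
      · intro heq
        have huw : u ≠ x := by
          rintro rfl
          exact hc.1 (Sym2.eq_swap)
        have hne := proj_loc_inj hπ h h' huw
        rcases Sym2.eq_iff.mp heq with ⟨h1', h2'⟩ | ⟨h1', h2'⟩
        · exact (proj_adj h).ne h1'
        · exact hne h1'
      · have := ih hc.2
        rw [Walk.map_cons, edges_cons] at this
        exact this

end homsec

theorem stmt12 (g : ℕ) (hg : 3 < g) (n : ℕ) (π : Equiv.Perm (ZMod n))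
    (hπ : ∀ i : ZMod n, π i ≠ i ∧ π i ≠ i + 1)
    (hgirth : (g : ℕ∞) < (piGraph n π).egirth) :
    ∀ m : ℕ, 5 ≤ m → (g : ℕ∞) < (HGraph n m π).egirth := by
  intro m hm
  by_contra hcon
  push_neg at hcon
  have hna : ¬ (HGraph n m π).IsAcyclic := by
    intro hac
    rw [hac.egirth_eq_top, top_le_iff] at hcon
    exact (ENat.coe_ne_top g) hcon
  obtain ⟨a, w, hw, hlen⟩ := (SimpleGraph.exists_egirth_eq_length).mpr hna
  have hwg : (w.length : ℕ∞) ≤ g := hlen ▸ hcon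
  have hch : List.Chain' Ne w.edges := List.Pairwise.isChain hw.edges_nodup
  have hmap := chain'_map_proj hπ w hch
  have h3 := hw.three_le_length
  have hle : (piGraph n π).egirth ≤ (w.length : ℕ∞) :=
    egirth_le_of_closed_chain' w.length (by omega) (w.map (projHom n m π))
      (by simp) hmap
  exact absurd (lt_of_le_of_lt (hle.trans hwg) hgirth) (lt_irrefl _)
end

section
/- For every d ≥ 2 and every graph G in the family 𝒢_d, every fractional star cover of G has some vertex whose coverage is at least (d+1)/2. -/
/-- The family `𝒢 d` of `d`-regular bipartite graphs, together with their bipartition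
`(A, B)` into two equal-size independent sets, defined inductively.
`𝒢 2` consists of the even cycles on `n ≥ 6` vertices (vertex `i : Fin n` stands for
`v_{i+1}`, so `A`, the odd-indexed vertices, are those with even `Fin`-value).
A member of `𝒢 (d+1)` is obtained from `G ∈ 𝒢 d` by taking `n ≥ 5` cyclically ordered
disjoint copies of `G` and adding, for each `i`, an arbitrary perfect matching `μ i`
between the copy of `B` in copy `i` and the copy of `A` in copy `i+1`. -/
inductive GFam : ℕ → ∀ (V : Type), SimpleGraph V → Set V → Set V → Prop
  | base (n : ℕ) [NeZero n] (hn : 6 ≤ n) (heven : Even n) :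
      GFam 2 (Fin n) (SimpleGraph.fromRel (fun i j => j = i + 1))
        {i : Fin n | Even i.val} {i : Fin n | ¬ Even i.val}
  | step (d : ℕ) (V : Type) (G : SimpleGraph V) (A B : Set V)
      (hG : GFam d V G A B)
      (n : ℕ) [NeZero n] (hn : 5 ≤ n)
      (μ : Fin n → V → V) (hμ : ∀ i, Set.BijOn (μ i) B A) :
      GFam (d + 1) (Fin n × V)
        (SimpleGraph.fromRel (fun p q =>
          (p.1 = q.1 ∧ G.Adj p.2 q.2) ∨
          (q.1 = p.1 + 1 ∧ p.2 ∈ B ∧ q.2 = μ p.1 p.2)))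
        {p : Fin n × V | p.2 ∈ A} {p : Fin n × V | p.2 ∈ B}

/-- A star of `G`: a subgraph consisting of a center vertex `v` together with a nonempty
set of neighbors of `v` and the edges joining `v` to them. -/
def IsStar {V : Type*} (G : SimpleGraph V) (H : G.Subgraph) : Prop :=
  ∃ v ∈ H.verts, (H.verts \ {v}).Nonempty ∧
    (∀ u ∈ H.verts, u ≠ v → H.Adj v u) ∧
    (∀ u w : V, H.Adj u w → u = v ∨ w = v)

/-- A fractional star cover of `G`: a nonnegative real weight on each star of `G`
(formally: a weight function on subgraphs vanishing outside the stars) such that for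
every edge of `G` the total weight of the stars containing that edge is at least 1. -/
def IsFracStarCover {V : Type*} (G : SimpleGraph V) (w : G.Subgraph → ℝ) : Prop :=
  (∀ H, 0 ≤ w H) ∧ (∀ H, w H ≠ 0 → IsStar G H) ∧
  (∀ u v : V, G.Adj u v → 1 ≤ ∑ᶠ H ∈ {H' : SimpleGraph.Subgraph G | H'.Adj u v}, w H)

/-- The coverage of a vertex `x`: the total weight of the stars whose vertex set
contains `x`. -/
noncomputable def coverage {V : Type*} (G : SimpleGraph V) (w : G.Subgraph → ℝ)
    (x : V) : ℝ :=
  ∑ᶠ H ∈ {H' : SimpleGraph.Subgraph G | x ∈ H'.verts}, w H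

section Aux

lemma fin_one_ne_zero' (n : ℕ) [NeZero n] (hn : 2 ≤ n) : (1 : Fin n) ≠ 0 := by
  intro h
  have h1 : n ∣ 1 := Fin.natCast_eq_zero.mp (by exact_mod_cast h)
  have := Nat.le_of_dvd (by omega) h1; omega

lemma fin_two_ne_zero' (n : ℕ) [NeZero n] (hn : 3 ≤ n) : (2 : Fin n) ≠ 0 := by
  intro h
  have h1 : n ∣ 2 := Fin.natCast_eq_zero.mp (by exact_mod_cast h)
  have := Nat.le_of_dvd (by omega) h1; omega

lemma fin_add_one_ne' (n : ℕ) [NeZero n] (i : Fin n) (hn : 2 ≤ n) : i + 1 ≠ i := by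
  intro h
  apply fin_one_ne_zero' n hn
  have := sub_eq_zero.mpr h
  rwa [show (i+1)-i = 1 by open Fin.CommRing in ring] at this

lemma fin_sub_one_ne' (n : ℕ) [NeZero n] (i : Fin n) (hn : 2 ≤ n) : i - 1 ≠ i := by
  intro h
  apply fin_one_ne_zero' n hn
  have := sub_eq_zero.mpr h
  rwa [show (i-1)-i = -1 by open Fin.CommRing in ring, neg_eq_zero] at this

lemma gfam_finite {d : ℕ} {V : Type} {G : SimpleGraph V} {A B : Set V}
    (h : GFam d V G A B) : Finite V := by
  induction h with
  | base n hn heven => infer_instance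
  | step d V G A B hG n hn μ hμ ih => haveI := ih; infer_instance

lemma gfam_nonempty {d : ℕ} {V : Type} {G : SimpleGraph V} {A B : Set V}
    (h : GFam d V G A B) : Nonempty V := by
  induction h with
  | base n hn heven => infer_instance
  | step d V G A B hG n hn μ hμ ih => haveI := ih; infer_instance

lemma gfam_struct {d : ℕ} {V : Type} {G : SimpleGraph V} {A B : Set V}
    (h : GFam d V G A B) :
    (∀ v, v ∈ A ↔ v ∉ B) ∧ (∀ v : V, (G.neighborSet v).ncard = d) := by
  induction h with
  | base n hn heven =>
    constructor
    · intro v; simp [Set.mem_setOf_eq]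
    · intro i
      have heq : ((SimpleGraph.fromRel (fun i j : Fin n => j = i + 1)).neighborSet i)
          = {i + 1, i - 1} := by
        ext j
        simp only [SimpleGraph.mem_neighborSet, SimpleGraph.fromRel_adj, Set.mem_insert_iff,
          Set.mem_singleton_iff]
        constructor
        · rintro ⟨hne, h | h⟩
          · exact Or.inl h
          · right; rw [h]; open Fin.CommRing in ring
        · rintro (h | h)
          · subst h
            refine ⟨?_, Or.inl rfl⟩
            intro hh
            apply fin_one_ne_zero' n (by omega)
            have := sub_eq_zero.mpr hh
            rwa [show i - (i+1) = -1 by open Fin.CommRing in ring, neg_eq_zero] at this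
          · subst h
            refine ⟨?_, Or.inr (by open Fin.CommRing in ring)⟩
            intro hh
            apply fin_one_ne_zero' n (by omega)
            have := sub_eq_zero.mpr hh
            rwa [show i - (i-1) = 1 by open Fin.CommRing in ring] at this
      rw [heq]
      apply Set.ncard_pair
      intro h
      apply fin_two_ne_zero' n (by omega)
      have := sub_eq_zero.mpr h
      rwa [show (i+1)-(i-1) = 2 by open Fin.CommRing in ring] at this
  | step d V G A B hG n hn μ hμ ih =>
    have hFin : Finite V := gfam_finite hG
    obtain ⟨hAB, hreg⟩ := ih
    constructor
    · intro p; simpa using hAB p.2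
    · rintro ⟨i, v⟩
      set G' := (SimpleGraph.fromRel (fun p q : Fin n × V =>
          (p.1 = q.1 ∧ G.Adj p.2 q.2) ∨
          (q.1 = p.1 + 1 ∧ p.2 ∈ B ∧ q.2 = μ p.1 p.2))) with hG'
      obtain ⟨c, hcne, hcadj, hconly⟩ :
          ∃ c : Fin n × V, c.1 ≠ i ∧ G'.Adj (i, v) c ∧
            (∀ q : Fin n × V, G'.Adj (i, v) q → q.1 ≠ i → q = c) := by
        by_cases hv : v ∈ B
        · refine ⟨(i + 1, μ i v), ?_, ?_, ?_⟩
          · intro h; exact fin_add_one_ne' n i (by omega) h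
          · rw [hG', SimpleGraph.fromRel_adj]
            refine ⟨?_, Or.inl (Or.inr ⟨rfl, hv, rfl⟩)⟩
            intro h
            exact fin_add_one_ne' n i (by omega) ((Prod.mk.injEq ..).mp h).1.symm
          · rintro ⟨j, u⟩ hadj hne
            rw [hG', SimpleGraph.fromRel_adj] at hadj
            obtain ⟨-, (⟨hji, -⟩ | ⟨hj, -, hu⟩) | (⟨hji, -⟩ | ⟨hij, huB, hvu⟩)⟩ := hadj
            · exact absurd hji.symm hne
            · exact Prod.ext hj hu
            · exact absurd hji hne
            · have hA : v ∈ A := by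
                have h2 : (i, v).2 = μ (j, u).1 (j, u).2 := hvu
                rw [show v = μ j u from h2]
                exact (hμ j).mapsTo huB
              exact absurd hv ((hAB v).mp hA)
        · have hvA : v ∈ A := by
            by_contra hvA
            exact hvA ((hAB v).mpr hv)
          obtain ⟨u₀, hu₀B, hu₀⟩ := (hμ (i - 1)).surjOn hvA
          refine ⟨(i - 1, u₀), ?_, ?_, ?_⟩
          · intro h; exact fin_sub_one_ne' n i (by omega) h
          · rw [hG', SimpleGraph.fromRel_adj]
            refine ⟨?_, Or.inr (Or.inr ⟨(sub_add_cancel i 1).symm, hu₀B, hu₀.symm⟩)⟩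
            intro h
            exact fin_sub_one_ne' n i (by omega) ((Prod.mk.injEq ..).mp h).1.symm
          · rintro ⟨j, u⟩ hadj hne
            rw [hG', SimpleGraph.fromRel_adj] at hadj
            obtain ⟨-, (⟨hji, -⟩ | ⟨hj, hvB, -⟩) | (⟨hji, -⟩ | ⟨hij, huB, hvu⟩)⟩ := hadj
            · exact absurd hji.symm hne
            · exact absurd hvB hv
            · exact absurd hji hne
            · have hij' : i = j + 1 := hij
              have hj : j = i - 1 := by rw [hij']; open Fin.CommRing in ring
              subst hj
              have : u = u₀ := (hμ (i-1)).injOn huB hu₀B (hu₀ ▸ hvu.symm)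
              simp [this]
      have hset : G'.neighborSet (i, v) = ((fun u => (i, u)) '' G.neighborSet v) ∪ {c} := by
        ext ⟨j, u⟩
        simp only [SimpleGraph.mem_neighborSet, Set.mem_union, Set.mem_image,
          Set.mem_singleton_iff]
        constructor
        · intro hadj
          by_cases hji : j = i
          · subst hji
            left
            rw [hG', SimpleGraph.fromRel_adj] at hadj
            obtain ⟨hne2, (⟨-, hA⟩ | ⟨hj, -, -⟩) | (⟨-, hA⟩ | ⟨hij, -, -⟩)⟩ := hadj
            · exact ⟨u, hA, rfl⟩
            · exact absurd hj (fin_add_one_ne' n j (by omega)).symm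
            · exact ⟨u, hA.symm, rfl⟩
            · exact absurd hij (fin_add_one_ne' n j (by omega)).symm
          · right; exact hconly _ hadj hji
        · rintro (⟨u', hu', heq⟩ | rfl)
          · obtain ⟨rfl, rfl⟩ := (Prod.mk.injEq ..).mp heq.symm
            rw [hG', SimpleGraph.fromRel_adj]
            refine ⟨?_, Or.inl (Or.inl ⟨rfl, hu'⟩)⟩
            intro h
            exact G.ne_of_adj hu' ((Prod.mk.injEq ..).mp h).2
          · exact hcadj
      rw [hset]
      have himg : ((fun u => (i, u)) '' G.neighborSet v).ncard = d := by
        rw [Set.ncard_image_of_injective _ (fun a b h => ((Prod.mk.injEq ..).mp h).2)]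
        exact hreg v
      have hdisj : Disjoint ((fun u => (i, u)) '' G.neighborSet v) ({c} : Set (Fin n × V)) := by
        rw [Set.disjoint_singleton_right]
        rintro ⟨u', -, heq⟩
        exact hcne (((Prod.mk.injEq ..).mp heq).1 ▸ rfl)
      rw [Set.ncard_union_eq hdisj (Set.toFinite _) (Set.toFinite _), himg, Set.ncard_singleton]

end Aux

theorem stmt15 (d : ℕ) (hd : 2 ≤ d) (V : Type) [Fintype V]
    (G : SimpleGraph V) (A B : Set V) (hG : GFam d V G A B)
    (w : G.Subgraph → ℝ) (hw : IsFracStarCover G w) :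
    ∃ x : V, ((d : ℝ) + 1) / 2 ≤ coverage G w x := by
  classical
  obtain ⟨-, hreg⟩ := gfam_struct hG
  have hne : Nonempty V := gfam_nonempty hG
  obtain ⟨hw0, hwstar, hwcov⟩ := hw
  haveI : Finite G.Subgraph :=
    Finite.of_injective (fun H : G.Subgraph => (H.verts, H.Adj))
      (fun H1 H2 h => SimpleGraph.Subgraph.ext (congrArg Prod.fst h) (congrArg Prod.snd h))
  haveI : Fintype G.Subgraph := Fintype.ofFinite _
  -- degree facts
  have hdeg : ∀ v : V, (∑ u : V, if G.Adj v u then (1:ℝ) else 0) = d := by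
    intro v
    rw [Finset.sum_boole]
    have h1 := hreg v
    rw [Set.ncard_eq_toFinset_card'] at h1
    have h2 : (G.neighborSet v).toFinset = Finset.univ.filter (fun u => G.Adj v u) := by
      ext u; simp
    rw [h2] at h1
    rw [h1]
  set m : G.Subgraph → ℝ := fun H => ∑ u : V, ∑ v : V, if H.Adj u v then (1:ℝ) else 0 with hm
  set k : G.Subgraph → ℝ := fun H => ∑ x : V, if x ∈ H.verts then (1:ℝ) else 0 with hk
  -- star facts
  have hstarfacts : ∀ H : G.Subgraph, w H ≠ 0 → m H = 2 * k H - 2 ∧ k H ≤ (d:ℝ) + 1 := by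
    intro H hH
    obtain ⟨v0, hv0, hnon, hleaf, hcentral⟩ := hwstar H hH
    set L : V → ℝ := fun x => if x ∈ H.verts ∧ x ≠ v0 then (1:ℝ) else 0 with hL
    have hadj_iff : ∀ u v : V, H.Adj u v ↔
        (u = v0 ∧ (v ∈ H.verts ∧ v ≠ v0)) ∨ (v = v0 ∧ (u ∈ H.verts ∧ u ≠ v0)) := by
      intro u v
      constructor
      · intro h
        have hu : u ∈ H.verts := h.fst_mem
        have hvv : v ∈ H.verts := h.snd_mem
        have hne' : u ≠ v := (H.adj_sub h).ne
        rcases hcentral u v h with rfl | rfl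
        · exact Or.inl ⟨rfl, hvv, hne'.symm⟩
        · exact Or.inr ⟨rfl, hu, hne'⟩
      · rintro (⟨rfl, hvv, hvne⟩ | ⟨rfl, hu, hune⟩)
        · exact hleaf v hvv hvne
        · exact (hleaf u hu hune).symm
    have hsplit : ∀ u v : V, (if H.Adj u v then (1:ℝ) else 0)
        = (if u = v0 then L v else 0) + (if v = v0 then L u else 0) := by
      intro u v
      simp only [hL]
      by_cases h1 : u = v0
      · by_cases h2 : v = v0
        · rw [if_neg (fun h => (H.adj_sub h).ne (h1.trans h2.symm)), if_pos h1, if_pos h2,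
            if_neg (fun hh => hh.2 h2), if_neg (fun hh => hh.2 h1)]
          norm_num
        · rw [if_pos h1, if_neg h2]
          by_cases h3 : v ∈ H.verts
          · rw [if_pos (show H.Adj u v by rw [h1]; exact hleaf v h3 h2), if_pos ⟨h3, h2⟩]
            norm_num
          · rw [if_neg (fun h => h3 h.snd_mem), if_neg (fun hh => h3 hh.1)]; norm_num
      · by_cases h2 : v = v0
        · rw [if_neg h1, if_pos h2]
          by_cases h3 : u ∈ H.verts
          · rw [if_pos (show H.Adj u v by rw [h2]; exact (hleaf u h3 h1).symm), if_pos ⟨h3, h1⟩]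
            norm_num
          · rw [if_neg (fun h => h3 h.fst_mem), if_neg (fun hh => h3 hh.1)]; norm_num
        · rw [if_neg h1, if_neg h2, if_neg]
          · norm_num
          · intro h
            rcases hcentral u v h with rfl | rfl
            · exact h1 rfl
            · exact h2 rfl
    have hsum1 : (∑ u : V, ∑ v : V, (if u = v0 then L v else 0)) = ∑ x : V, L x := by
      have : ∀ u : V, (∑ v : V, (if u = v0 then L v else 0))
          = if u = v0 then (∑ x : V, L x) else 0 := by
        intro u; by_cases h : u = v0 <;> simp [h]
      rw [Finset.sum_congr rfl (fun u _ => this u), Finset.sum_ite_eq' Finset.univ v0]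
      simp
    have hsum2 : (∑ u : V, ∑ v : V, (if v = v0 then L u else 0)) = ∑ x : V, L x := by
      apply Finset.sum_congr rfl
      intro u _
      rw [Finset.sum_ite_eq' Finset.univ v0]
      simp
    have hmL : m H = 2 * (∑ x : V, L x) := by
      simp only [hm]
      calc (∑ u : V, ∑ v : V, if H.Adj u v then (1:ℝ) else 0)
          = ∑ u : V, ∑ v : V, ((if u = v0 then L v else 0) + (if v = v0 then L u else 0)) := by
            exact Finset.sum_congr rfl fun u _ => Finset.sum_congr rfl fun v _ => hsplit u v
        _ = (∑ u : V, ∑ v : V, (if u = v0 then L v else 0))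
            + (∑ u : V, ∑ v : V, (if v = v0 then L u else 0)) := by
            rw [← Finset.sum_add_distrib]
            exact Finset.sum_congr rfl fun u _ => by rw [← Finset.sum_add_distrib]
        _ = 2 * (∑ x : V, L x) := by rw [hsum1, hsum2]; ring
    have hkL : k H = (∑ x : V, L x) + 1 := by
      simp only [hk]
      have hpt : ∀ x : V, (if x ∈ H.verts then (1:ℝ) else 0)
          = L x + (if x = v0 then 1 else 0) := by
        intro x
        by_cases h1 : x = v0
        · subst h1; simp [hL, hv0]
        · by_cases h2 : x ∈ H.verts <;> simp [hL, h1, h2]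
      rw [Finset.sum_congr rfl (fun x _ => hpt x), Finset.sum_add_distrib,
        Finset.sum_ite_eq' Finset.univ v0]
      simp
    constructor
    · rw [hmL, hkL]; ring
    · rw [hkL]
      have hLle : (∑ x : V, L x) ≤ (d:ℝ) := by
        calc (∑ x : V, L x) ≤ ∑ x : V, (if G.Adj v0 x then (1:ℝ) else 0) := by
              apply Finset.sum_le_sum
              intro x _
              rw [hL]
              by_cases h : x ∈ H.verts ∧ x ≠ v0
              · simp only [if_pos h, if_pos (H.adj_sub (hleaf x h.1 h.2))]
                exact le_refl _
              · simp only [if_neg h]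
                split <;> norm_num
          _ = d := hdeg v0
      linarith
  -- finsum conversions
  have hcov_eq : ∀ x : V, coverage G w x
      = ∑ H : G.Subgraph, if x ∈ H.verts then w H else 0 := by
    intro x
    rw [coverage, finsum_mem_def, finsum_eq_sum_of_fintype]
    exact Finset.sum_congr rfl fun H _ => by
      simp [Set.indicator_apply, Set.mem_setOf_eq]
  have hcovedge : ∀ u v : V, G.Adj u v →
      (1:ℝ) ≤ ∑ H : G.Subgraph, if H.Adj u v then w H else 0 := by
    intro u v h
    have h1 := hwcov u v h
    rwa [finsum_mem_def, finsum_eq_sum_of_fintype,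
      Finset.sum_congr rfl (fun H _ => by
        simp [Set.indicator_apply, Set.mem_setOf_eq] : ∀ H ∈ Finset.univ,
          Set.indicator {H' : G.Subgraph | H'.Adj u v} w H
            = if H.Adj u v then w H else 0)] at h1
  -- step 1 : d * card ≤ ∑ w H * m H
  have h1 : (d:ℝ) * (Fintype.card V) ≤ ∑ H : G.Subgraph, w H * m H := by
    have lhs_eq : (∑ u : V, ∑ v : V, (if G.Adj u v then (1:ℝ) else 0))
        = (d:ℝ) * (Fintype.card V) := by
      rw [Finset.sum_congr rfl (fun u _ => hdeg u), Finset.sum_const]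
      simp [mul_comm]
    rw [← lhs_eq]
    calc (∑ u : V, ∑ v : V, (if G.Adj u v then (1:ℝ) else 0))
        ≤ ∑ u : V, ∑ v : V, (if G.Adj u v
            then (∑ H : G.Subgraph, if H.Adj u v then w H else 0) else 0) := by
          apply Finset.sum_le_sum; intro u _; apply Finset.sum_le_sum; intro v _
          by_cases h : G.Adj u v
          · rw [if_pos h, if_pos h]; exact hcovedge u v h
          · simp [h]
      _ = ∑ u : V, ∑ v : V, ∑ H : G.Subgraph, (if H.Adj u v then w H else 0) := by
          apply Finset.sum_congr rfl; intro u _; apply Finset.sum_congr rfl; intro v _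
          by_cases h : G.Adj u v
          · rw [if_pos h]
          · rw [if_neg h]
            symm
            apply Finset.sum_eq_zero
            intro H _
            rw [if_neg (fun hh => h (H.adj_sub hh))]
      _ = ∑ H : G.Subgraph, ∑ u : V, ∑ v : V, (if H.Adj u v then w H else 0) := by
          calc (∑ u : V, ∑ v : V, ∑ H : G.Subgraph, (if H.Adj u v then w H else 0))
              = ∑ u : V, ∑ H : G.Subgraph, ∑ v : V, (if H.Adj u v then w H else 0) :=
                Finset.sum_congr rfl fun u _ => Finset.sum_comm
            _ = ∑ H : G.Subgraph, ∑ u : V, ∑ v : V, (if H.Adj u v then w H else 0) :=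
                Finset.sum_comm
      _ = ∑ H : G.Subgraph, w H * m H := by
          apply Finset.sum_congr rfl; intro H _
          simp only [hm]
          rw [Finset.mul_sum]
          apply Finset.sum_congr rfl; intro u _
          rw [Finset.mul_sum]
          apply Finset.sum_congr rfl; intro v _
          by_cases h : H.Adj u v <;> simp [h]
  set T := ∑ H : G.Subgraph, w H with hT
  have h2 : ∑ H : G.Subgraph, w H * m H ≤ 2 * d * T := by
    rw [hT, Finset.mul_sum]
    apply Finset.sum_le_sum
    intro H _
    by_cases hH : w H = 0
    · simp [hH]
    · obtain ⟨hmH, hkH⟩ := hstarfacts H hH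
      have hmle : m H ≤ 2 * d := by rw [hmH]; linarith
      calc w H * m H ≤ w H * (2*d) := mul_le_mul_of_nonneg_left hmle (hw0 H)
        _ = 2*(d:ℝ)*(w H) := by ring
  have hd2 : (2:ℝ) ≤ (d:ℝ) := by exact_mod_cast hd
  have hT2 : (Fintype.card V : ℝ) / 2 ≤ T := by
    have h12 := h1.trans h2
    nlinarith
  -- coverage sum
  have h3 : (∑ x : V, coverage G w x) = ∑ H : G.Subgraph, w H * k H := by
    calc (∑ x : V, coverage G w x)
        = ∑ x : V, ∑ H : G.Subgraph, (if x ∈ H.verts then w H else 0) :=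
          Finset.sum_congr rfl fun x _ => hcov_eq x
      _ = ∑ H : G.Subgraph, ∑ x : V, (if x ∈ H.verts then w H else 0) := Finset.sum_comm
      _ = ∑ H : G.Subgraph, w H * k H := by
          apply Finset.sum_congr rfl; intro H _
          simp only [hk]
          rw [Finset.mul_sum]
          apply Finset.sum_congr rfl; intro x _
          by_cases h : x ∈ H.verts <;> simp [h]
  have h4 : (∑ H : G.Subgraph, w H * k H) = (∑ H : G.Subgraph, w H * m H)/2 + T := by
    have hper : ∀ H : G.Subgraph, w H * k H = w H * m H / 2 + w H := by
      intro H
      by_cases hH : w H = 0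
      · simp [hH]
      · obtain ⟨hmH, -⟩ := hstarfacts H hH
        rw [hmH]; ring
    rw [Finset.sum_congr rfl (fun H _ => hper H), Finset.sum_add_distrib, hT,
      ← Finset.sum_div]
  have h5 : (Fintype.card V : ℝ) * (((d:ℝ)+1)/2) ≤ ∑ x : V, coverage G w x := by
    rw [h3, h4]
    linarith
  obtain ⟨x, -, hx⟩ := Finset.exists_le_of_sum_le (Finset.univ_nonempty (α := V)) (by
    calc (∑ _x : V, (((d:ℝ)+1)/2)) = (Fintype.card V : ℝ) * (((d:ℝ)+1)/2) := by
          rw [Finset.sum_const]; simp [mul_comm]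
      _ ≤ ∑ x : V, coverage G w x := h5)
  exact ⟨x, hx⟩
end

section
/- For every d ≥ 2 and every integer g there exists a finite d-regular simple graph G of girth greater than g such that every fractional star cover of G has some vertex whose coverage is at least (d+1)/2. -/
namespace Stmt16

open Matrix MatrixGroups Matrix.SpecialLinearGroup ModularGroup


def Bm : SL(2,ℤ) := ⟨!![1,0;2,1], by norm_num [Matrix.det_fin_two_of]⟩

lemma coe_Bm : (Bm : Matrix (Fin 2) (Fin 2) ℤ) = !![1,0;2,1] := rfl

lemma coe_Bm_inv : ((Bm⁻¹ : SL(2,ℤ)) : Matrix (Fin 2) (Fin 2) ℤ) = !![1,0;-2,1] := by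
  simp [coe_inv, coe_Bm, adjugate_fin_two]

def gfacZ (i : ℕ) (s : Bool) : SL(2,ℤ) :=
  T ^ (2*(i:ℤ)) * (if s then Bm⁻¹ else Bm) * T ^ (-(2*(i:ℤ)))

def wrdZ : List ℕ → Bool → SL(2,ℤ)
  | [], _ => 1
  | i :: l, s => wrdZ l (!s) * gfacZ i s

lemma gfacZ_inv (i : ℕ) : (gfacZ i false)⁻¹ = gfacZ i true := by
  simp only [gfacZ, if_true, if_false, _root_.mul_inv_rev, ← _root_.zpow_neg, neg_neg,
    Bool.false_eq_true]
  group

lemma key_abs : ∀ a b : ℤ, |a| - |b| ≤ |a + b| := fun a b => by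
  simpa [sub_neg_eq_add] using abs_sub_abs_le_abs_sub a (-b)

lemma stepIneq (d : ℕ) (K x y k e : ℤ) (hy : 1 ≤ |y|) (hxy : |y| < |x|) (hk : k ≠ 0)
    (hkd : |k| ≤ (d:ℤ)) (he : e = 1 ∨ e = -1) (hx : |x| ≤ K) :
    1 ≤ |x*(2*k) + y| ∧ |x*(2*k) + y| < |x*(1+4*k*e) + y*(2*e)| ∧
      |x*(1+4*k*e) + y*(2*e)| ≤ (4*(d:ℤ)+3) * K := by
  have hk1 : 1 ≤ |k| := Int.one_le_abs hk
  have hxk : |x*(2*k)| = 2*(|k| * |x|) := by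
    rw [abs_mul, abs_mul]; rw [abs_two]; ring
  have hkx1 : |x| ≤ |k| * |x| := le_mul_of_one_le_left (abs_nonneg x) hk1
  have hkx2 : |k| * |x| ≤ (d:ℤ)*|x| := mul_le_mul_of_nonneg_right hkd (abs_nonneg x)
  have h1 : |x*(2*k)| - |y| ≤ |x*(2*k) + y| := key_abs _ _
  have hz : |x| < |x*(2*k) + y| := by linarith
  have hz2 : |x*(2*k)+y| ≤ 2*((d:ℤ)*|x|) + |y| := by
    have := abs_add_le (x*(2*k)) y
    linarith
  have he1 : |e| = 1 := by rcases he with h | h <;> simp [h]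
  have hcomb : x*(1+4*k*e) + y*(2*e) = (2*e)*(x*(2*k)+y) + x := by ring
  have h2 : |(2*e)*(x*(2*k)+y)| = 2*|x*(2*k)+y| := by
    rw [abs_mul, abs_mul, abs_two, he1]; ring
  have h3 : |(2*e)*(x*(2*k)+y)| - |x| ≤ |x*(1+4*k*e) + y*(2*e)| := by
    rw [hcomb]; exact key_abs _ _
  have h4 : |x*(1+4*k*e) + y*(2*e)| ≤ |(2*e)*(x*(2*k)+y)| + |x| := by
    rw [hcomb]; exact abs_add_le _ _
  have hK : 0 ≤ K := le_trans (abs_nonneg x) hx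
  refine ⟨by linarith, by linarith, ?_⟩
  have : |x*(1+4*k*e) + y*(2*e)| ≤ (4*(d:ℤ)+3) * |x| := by linarith
  nlinarith [abs_nonneg x]

lemma entry10 (P Q : Matrix (Fin 2) (Fin 2) ℤ) :
    (P * Q) 1 0 = P 1 0 * Q 0 0 + P 1 1 * Q 1 0 := by
  rw [Matrix.mul_apply, Fin.sum_univ_two]

lemma entry11 (P Q : Matrix (Fin 2) (Fin 2) ℤ) :
    (P * Q) 1 1 = P 1 0 * Q 0 1 + P 1 1 * Q 1 1 := by
  rw [Matrix.mul_apply, Fin.sum_univ_two]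

lemma inv_main (d : ℕ) (l' : List ℕ) : ∀ (i : ℕ) (s : Bool),
    List.Chain' (· ≠ ·) (i :: l') → (∀ j ∈ i :: l', j < d) →
    1 ≤ |((wrdZ (i :: l') s * T ^ (2*(i:ℤ))).val) 1 1| ∧
    |((wrdZ (i :: l') s * T ^ (2*(i:ℤ))).val) 1 1| < |((wrdZ (i :: l') s * T ^ (2*(i:ℤ))).val) 1 0| ∧
    |((wrdZ (i :: l') s * T ^ (2*(i:ℤ))).val) 1 0| ≤ (4*(d:ℤ)+3)^(i :: l').length := by
  induction l' with
  | nil =>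
    intro i s _ hbd
    have hw : wrdZ [i] s * T ^ (2*(i:ℤ)) = T ^ (2*(i:ℤ)) * (if s then Bm⁻¹ else Bm) := by
      show (1 : SL(2,ℤ)) * gfacZ i s * T ^ (2*(i:ℤ)) = _
      rw [gfacZ]
      group
    rw [hw]
    have hco : ((T ^ (2*(i:ℤ)) * (if s then Bm⁻¹ else Bm)).val)
        = !![1, 2*(i:ℤ); 0, 1] * (if s then !![1,0;-2,1] else !![1,0;2,1]) := by
      rw [coe_mul, coe_T_zpow]
      cases s <;> simp [coe_Bm, coe_Bm_inv]
    rw [hco]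
    cases s <;> simp [Matrix.mul_fin_two] <;> norm_num <;> linarith [Int.natCast_nonneg d]
  | cons j l'' ih =>
    intro i s hch hbd
    have hij : i ≠ j := (List.isChain_cons_cons.mp hch).1
    have hch' : List.Chain' (· ≠ ·) (j :: l'') := (List.isChain_cons_cons.mp hch).2
    have hid : i < d := hbd i (by simp)
    have hjd : j < d := hbd j (by simp)
    set e : ℤ := if s then -1 else 1 with he_def
    set k : ℤ := (i:ℤ) - (j:ℤ) with hk_def
    have hgrp : wrdZ (i::j::l'') s * T ^ (2*(i:ℤ))
        = (wrdZ (j::l'') (!s) * T ^ (2*(j:ℤ))) * (T ^ (2*k) * (if s then Bm⁻¹ else Bm)) := by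
      show wrdZ (j::l'') (!s) * gfacZ i s * T ^ (2*(i:ℤ)) = _
      rw [gfacZ, hk_def, mul_sub, _root_.zpow_sub]
      group
    have hQ : ((T ^ (2*k) * (if s then Bm⁻¹ else Bm)).val)
        = !![1 + 4*k*e, 2*k; 2*e, 1] := by
      rw [coe_mul, coe_T_zpow]
      cases s
      · simp only [Bool.false_eq_true, if_false, he_def, coe_Bm, Matrix.mul_fin_two]
        ext i' j'
        fin_cases i' <;> fin_cases j' <;> simp <;> ring
      · simp only [if_true, he_def, coe_Bm_inv, Matrix.mul_fin_two]
        ext i' j'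
        fin_cases i' <;> fin_cases j' <;> simp <;> ring
    obtain ⟨H1, H2, H3⟩ := ih j (!s) hch' (fun a ha => hbd a (List.mem_cons_of_mem _ ha))
    set P' := ((wrdZ (j::l'') (!s) * T ^ (2*(j:ℤ))).val) with hP'
    set x := P' 1 0
    set y := P' 1 1
    have hk0 : k ≠ 0 := sub_ne_zero.mpr (by exact_mod_cast hij)
    have hkd : |k| ≤ (d:ℤ) := by
      rw [abs_le]; constructor <;> [skip; skip] <;> simp [hk_def] <;> omega
    have he1 : e = 1 ∨ e = -1 := by cases s <;> simp [he_def]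
    obtain ⟨S1, S2, S3⟩ := stepIneq d ((4*(d:ℤ)+3)^(j::l'').length) x y k e H1 H2 hk0 hkd he1 H3
    have hcoe : ((wrdZ (i::j::l'') s * T ^ (2*(i:ℤ))).val) = P' * !![1 + 4*k*e, 2*k; 2*e, 1] := by
      rw [hgrp, coe_mul, hQ, hP']
    have e10 : ((wrdZ (i::j::l'') s * T ^ (2*(i:ℤ))).val) 1 0 = x*(1+4*k*e) + y*(2*e) := by
      rw [hcoe, entry10]; simp [mul_comm]; rfl
    have e11 : ((wrdZ (i::j::l'') s * T ^ (2*(i:ℤ))).val) 1 1 = x*(2*k) + y := by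
      rw [hcoe, entry11]; simp [mul_comm]; rfl
    rw [e10, e11]
    refine ⟨S1, S2, ?_⟩
    calc |x*(1+4*k*e) + y*(2*e)| ≤ (4*(d:ℤ)+3) * (4*(d:ℤ)+3)^(j::l'').length := S3
    _ = (4*(d:ℤ)+3)^(i::j::l'').length := by
        rw [show (i::j::l'').length = (j::l'').length + 1 from rfl, pow_succ]
        ring



lemma word_ne (d : ℕ) (l : List ℕ) (hl : l ≠ []) (hch : List.Chain' (· ≠ ·) l)
    (hbd : ∀ j ∈ l, j < d) (s : Bool) :
    (wrdZ l s).val 1 0 ≠ 0 ∧ |(wrdZ l s).val 1 0| ≤ (4*(d:ℤ)+3)^l.length := by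
  obtain ⟨i, l', rfl⟩ := List.exists_cons_of_ne_nil hl
  obtain ⟨H1, H2, H3⟩ := inv_main d l' i s hch hbd
  have hfac : wrdZ (i::l') s = (wrdZ (i::l') s * T ^ (2*(i:ℤ))) * T ^ (-(2*(i:ℤ))) := by group
  have hval : (wrdZ (i::l') s).val 1 0
      = ((wrdZ (i::l') s * T ^ (2*(i:ℤ))).val) 1 0 := by
    conv_lhs => rw [hfac]
    rw [coe_mul, coe_T_zpow, entry10]
    simp
  rw [hval]
  constructor
  · intro h0
    rw [h0] at H2
    simp only [abs_zero] at H2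
    linarith [abs_nonneg (((wrdZ (i::l') s * T ^ (2*(i:ℤ))).val) 1 1)]
  · exact H3

lemma word_ne_one (d n : ℕ) (l : List ℕ) (hl : l ≠ []) (hch : List.Chain' (· ≠ ·) l)
    (hbd : ∀ j ∈ l, j < d) (s : Bool)
    (hn : (4*(d:ℤ)+3)^l.length < (n:ℤ)) :
    SpecialLinearGroup.map (Int.castRingHom (ZMod n)) (wrdZ l s) ≠ 1 := by
  intro h
  obtain ⟨h0, hb⟩ := word_ne d l hl hch hbd s
  have hc : (((wrdZ l s).val 1 0 : ℤ) : ZMod n) = 0 := by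
    have h2 := congrArg (fun M : SpecialLinearGroup (Fin 2) (ZMod n) => M.val 1 0) h
    simpa [SpecialLinearGroup.map_apply_coe, RingHom.mapMatrix_apply, Matrix.map_apply,
      coe_one, Matrix.one_apply] using h2
  have hdvd : ((n:ℤ)) ∣ (wrdZ l s).val 1 0 := (ZMod.intCast_zmod_eq_zero_iff_dvd _ n).mp hc
  exact h0 (Int.eq_zero_of_abs_lt_dvd hdvd (lt_of_le_of_lt hb hn))
section Graph

variable (d n : ℕ) [NeZero n]

abbrev Gam := Matrix.SpecialLinearGroup (Fin 2) (ZMod n)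

def pr : Matrix.SpecialLinearGroup (Fin 2) ℤ →* Gam n :=
  SpecialLinearGroup.map (Int.castRingHom (ZMod n))

def gu (i : Fin d) : Gam n := pr n (gfacZ i false)

def MatchStep (a b : Gam n × Bool) (i : Fin d) : Prop :=
  (a.2 = false ∧ b.2 = true ∧ b.1 = gu d n i * a.1) ∨
  (a.2 = true ∧ b.2 = false ∧ a.1 = gu d n i * b.1)

def HG : SimpleGraph (Gam n × Bool) where
  Adj a b := ∃ i, MatchStep d n a b i
  symm := by
    constructor
    rintro a b ⟨i, h | h⟩
    · exact ⟨i, Or.inr ⟨h.2.1, h.1, h.2.2⟩⟩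
    · exact ⟨i, Or.inl ⟨h.2.1, h.1, h.2.2⟩⟩
  loopless := by
    constructor
    rintro a ⟨i, ⟨h1, h2, _⟩ | ⟨h1, h2, _⟩⟩ <;> simp [h1] at h2

lemma matchStep_step {a b : Gam n × Bool} {i : Fin d} (h : MatchStep d n a b i) :
    b.1 = pr n (gfacZ i a.2) * a.1 ∧ b.2 = !a.2 := by
  rcases h with ⟨h1, h2, h3⟩ | ⟨h1, h2, h3⟩
  · rw [h1, h2]
    exact ⟨h3, rfl⟩
  · rw [h1, h2]
    refine ⟨?_, rfl⟩
    rw [← gfacZ_inv, map_inv]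
    rw [h3, gu]
    group

lemma firstEdge_mem {u v : Gam n × Bool} (w : (HG d n).Walk u v) (hw : 0 < w.length) :
    s(u, w.getVert 1) ∈ w.edges := by
  cases w with
  | nil => simp at hw
  | cons h p =>
    rw [SimpleGraph.Walk.getVert_cons_succ, SimpleGraph.Walk.getVert_zero,
      SimpleGraph.Walk.edges_cons]
    exact List.mem_cons_self

lemma extract {u v : Gam n × Bool} (w : (HG d n).Walk u v) (hw : w.IsTrail) :
    ∃ l : List (Fin d), l.length = w.length ∧ List.Chain' (· ≠ ·) l ∧
      v.1 = pr n (wrdZ (l.map Fin.val) u.2) * u.1 ∧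
      (∀ hl : l ≠ [], MatchStep d n u (w.getVert 1) (l.head hl)) := by
  induction w with
  | nil =>
    exact ⟨[], rfl, List.isChain_nil, by simp [wrdZ], fun hl => absurd rfl hl⟩
  | @cons a b c h p ih =>
    rw [SimpleGraph.Walk.isTrail_cons] at hw
    obtain ⟨i, hm⟩ := h
    obtain ⟨l', hlen, hch, hprod, hfirst⟩ := ih hw.1
    have hstep := matchStep_step d n hm
    refine ⟨i :: l', by simp [hlen]; rfl, ?_, ?_, ?_⟩
    · apply List.isChain_cons.mpr
      refine ⟨?_, hch⟩
      intro j hj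
      have hl'ne : l' ≠ [] := by
        intro h0
        rw [h0] at hj
        simp at hj
      have hjhead : j = l'.head hl'ne := by
        rw [List.head?_eq_head hl'ne] at hj
        exact (Option.mem_some_iff.mp hj).symm
      intro hij
      have hflip : ∀ s : Bool, gfacZ (i:ℕ) (!s) = (gfacZ (i:ℕ) s)⁻¹ := by
        intro s
        cases s
        · rw [show (!false) = true from rfl, ← gfacZ_inv]
        · rw [show (!true) = false from rfl, ← gfacZ_inv, inv_inv]
      have hm2 := hfirst hl'ne
      rw [← hjhead, ← hij] at hm2
      have hstep2 := matchStep_step d n hm2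
      have hpv : p.getVert 1 = a := by
        have e1 := hstep.1
        have e2 := hstep2.1
        rw [hstep.2] at e2
        have h1 : (p.getVert 1).1 = a.1 := by
          calc (p.getVert 1).1 = pr n (gfacZ (i:ℕ) (!a.2)) * b.1 := e2
          _ = (pr n (gfacZ (i:ℕ) a.2))⁻¹ * (pr n (gfacZ (i:ℕ) a.2) * a.1) := by
              rw [hflip, map_inv, e1]
          _ = a.1 := by group
        have h2 : (p.getVert 1).2 = a.2 := by
          rw [hstep2.2, hstep.2, Bool.not_not]
        exact Prod.ext h1 h2
      have hmem : s(b, p.getVert 1) ∈ p.edges := by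
        apply firstEdge_mem
        rw [← hlen]
        exact List.length_pos_iff.mpr hl'ne
      rw [hpv] at hmem
      rw [Sym2.eq_swap] at hmem
      exact hw.2 hmem
    · show c.1 = pr n (wrdZ (l'.map Fin.val) (!a.2) * gfacZ i a.2) * a.1
      rw [(pr n).map_mul, mul_assoc, ← hstep.1, ← hstep.2]
      exact hprod
    · intro _
      show MatchStep d n a (p.getVert 0) i
      rw [SimpleGraph.Walk.getVert_zero]
      exact hm

lemma gu_inj (hn2 : (4*(d:ℤ)+3)^2 < (n:ℤ)) : Function.Injective (gu d n) := by
  intro i j hij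
  by_contra hne
  have hw : pr n (wrdZ [(i:ℕ), (j:ℕ)] false) = 1 := by
    have : wrdZ [(i:ℕ), (j:ℕ)] false = (1 * gfacZ j true) * gfacZ i false := rfl
    rw [this, one_mul, (pr n).map_mul, ← gfacZ_inv, map_inv]
    show (gu d n j)⁻¹ * gu d n i = 1
    rw [hij]
    group
  refine word_ne_one d n [(i:ℕ), (j:ℕ)] (by simp) ?_ ?_ false (by simpa using hn2) hw
  · exact List.isChain_pair.mpr (fun h => hne (Fin.val_injective h))
  · intro a ha
    rcases List.mem_pair.mp ha with h | h <;> rw [h] <;> [exact i.isLt; exact j.isLt]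

lemma nbhd_false (hn2 : (4*(d:ℤ)+3)^2 < (n:ℤ)) (x : Gam n) :
    ((HG d n).neighborSet (x, false)).ncard = d := by
  have hset : (HG d n).neighborSet (x, false)
      = Set.range (fun i : Fin d => (gu d n i * x, true)) := by
    ext b
    constructor
    · rintro ⟨i, ⟨_, h2, h3⟩ | ⟨h1, _, _⟩⟩
      · exact ⟨i, Prod.ext (by simpa using h3.symm) (by simpa using h2.symm)⟩
      · simp at h1
    · rintro ⟨i, rfl⟩
      exact ⟨i, Or.inl ⟨rfl, rfl, rfl⟩⟩
  rw [hset, ← Nat.card_coe_set_eq]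
  have hinj : Function.Injective (fun i : Fin d => ((gu d n i * x, true) : Gam n × Bool)) := by
    intro i j hij
    apply gu_inj d n hn2
    have := congrArg Prod.fst hij
    simp only at this
    exact mul_right_cancel this
  rw [Nat.card_congr (Equiv.ofInjective _ hinj).symm]
  simp

lemma nbhd_true (hn2 : (4*(d:ℤ)+3)^2 < (n:ℤ)) (x : Gam n) :
    ((HG d n).neighborSet (x, true)).ncard = d := by
  have hset : (HG d n).neighborSet (x, true)
      = Set.range (fun i : Fin d => ((gu d n i)⁻¹ * x, false)) := by
    ext b
    constructor
    · rintro ⟨i, ⟨h1, _, _⟩ | ⟨_, h2, h3⟩⟩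
      · simp at h1
      · refine ⟨i, ?_⟩
        have hx : x = gu d n i * b.1 := h3
        have hb : (gu d n i)⁻¹ * x = b.1 := by rw [hx]; group
        exact Prod.ext (by simpa using hb) (by simpa using h2.symm)
    · rintro ⟨i, rfl⟩
      refine ⟨i, Or.inr ⟨rfl, rfl, by group⟩⟩
  rw [hset, ← Nat.card_coe_set_eq]
  have hinj : Function.Injective
      (fun i : Fin d => (((gu d n i)⁻¹ * x, false) : Gam n × Bool)) := by
    intro i j hij
    apply gu_inj d n hn2
    have := congrArg Prod.fst hij
    simp only at this
    have : (gu d n i)⁻¹ = (gu d n j)⁻¹ := mul_right_cancel this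
    exact inv_injective this
  rw [Nat.card_congr (Equiv.ofInjective _ hinj).symm]
  simp

lemma HG_regular (hn2 : (4*(d:ℤ)+3)^2 < (n:ℤ)) (v : Gam n × Bool) :
    ((HG d n).neighborSet v).ncard = d := by
  obtain ⟨x, s⟩ := v
  cases s
  · exact nbhd_false d n hn2 x
  · exact nbhd_true d n hn2 x

lemma HG_girth (g : ℕ) (hn : ∀ m : ℕ, 0 < m → m ≤ g → (4*(d:ℤ)+3)^m < (n:ℤ)) :
    (g : ℕ∞) < (HG d n).egirth := by
  have h1 : ((g : ℕ∞) + 1) ≤ (HG d n).egirth := by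
    rw [SimpleGraph.le_egirth]
    intro a w hw
    have h3 := hw.three_le_length
    by_contra hlt
    push_neg at hlt
    have hlen : w.length ≤ g := by
      have h4 : (w.length : ℕ∞) < (((g+1:ℕ)) : ℕ∞) := by push_cast; exact hlt
      exact Nat.lt_succ_iff.mp (by exact_mod_cast h4)
    obtain ⟨l, hlenl, hch, hprod, _⟩ := extract d n w hw.isTrail
    have hlne : l ≠ [] := by
      intro h0
      rw [h0] at hlenl
      simp at hlenl
      omega
    have hone : pr n (wrdZ (l.map Fin.val) a.2) = 1 := by
      have := hprod
      nth_rewrite 1 [show a.1 = 1 * a.1 by rw [one_mul]] at this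
      exact (mul_right_cancel this.symm)
    refine word_ne_one d n (l.map Fin.val) (by simpa using hlne) ?_ ?_ a.2 ?_ hone
    · exact List.isChain_map_of_isChain _ (fun a b h => fun hh => h (Fin.val_injective hh)) hch
    · intro j hj
      obtain ⟨i, _, rfl⟩ := List.mem_map.mp hj
      exact i.isLt
    · apply hn
      · simpa using List.length_pos_iff.mpr hlne
      · rw [List.length_map, hlenl]; exact hlen
  have h0 : (g:ℕ∞) < ((g+1:ℕ) : ℕ∞) := by exact_mod_cast Nat.lt_succ_self g
  calc (g:ℕ∞) < ((g+1:ℕ) : ℕ∞) := h0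
  _ = (g:ℕ∞) + 1 := by push_cast; ring
  _ ≤ _ := h1

end Graph



open Finset
open scoped Classical

variable {V : Type*} [Fintype V] (G : SimpleGraph V)

noncomputable instance : Fintype G.Subgraph := by
  have : Finite G.Subgraph := Finite.of_injective
    (fun H => (H.verts, H.Adj))
    (by
      intro H1 H2 h
      exact SimpleGraph.Subgraph.ext (congrArg Prod.fst h) (congrArg Prod.snd h))
  exact Fintype.ofFinite _

lemma finsum_mem_eq (s : Set G.Subgraph) (w : G.Subgraph → ℝ) :
    ∑ᶠ H ∈ s, w H = ∑ H : G.Subgraph, if H ∈ s then w H else 0 := by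
  classical
  rw [finsum_mem_eq_finite_toFinset_sum w (Set.toFinite s), ← Finset.sum_filter]
  apply Finset.sum_congr
  · ext H
    simp only [Set.Finite.mem_toFinset, Finset.mem_filter, Finset.mem_univ, true_and]
  · intros; rfl

lemma cover_lemma [Nonempty V] (d : ℕ) (hd : 2 ≤ d)
    (hreg : ∀ v, (G.neighborSet v).ncard = d) (w : G.Subgraph → ℝ)
    (hw : IsFracStarCover G w) :
    ∃ x : V, ((d : ℝ) + 1) / 2 ≤ coverage G w x := by
  classical
  obtain ⟨hw0, hwstar, hwcov⟩ := hw
  set N := Fintype.card V with hN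
  -- edge-count of a subgraph (ordered pairs)
  set E : G.Subgraph → ℕ := fun H => (univ.filter fun p : V × V => H.Adj p.1 p.2).card with hE
  -- coverage sum
  have hcov : ∀ x : V, coverage G w x = ∑ H : G.Subgraph, if x ∈ H.verts then w H else 0 :=
    fun x => finsum_mem_eq G _ w
  have hncardfin : ∀ s : Set V, s.ncard = (univ.filter (· ∈ s)).card := by
    intro s
    rw [Set.ncard_eq_toFinset_card']
    congr 1
    ext x
    simp
  have covsum : ∑ x : V, coverage G w x
      = ∑ H : G.Subgraph, w H * (H.verts.ncard : ℝ) := by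
    simp_rw [hcov]
    rw [Finset.sum_comm]
    apply Finset.sum_congr rfl
    intro H _
    rw [← Finset.sum_filter, Finset.sum_const, hncardfin H.verts]
    rw [nsmul_eq_mul]
    ring
  -- lower bound on weighted edge count
  have edge1 : ∀ p : V × V, (if G.Adj p.1 p.2 then (1:ℝ) else 0)
      ≤ ∑ H : G.Subgraph, if H.Adj p.1 p.2 then w H else 0 := by
    intro p
    by_cases h : G.Adj p.1 p.2
    · rw [if_pos h]
      have := hwcov p.1 p.2 h
      rwa [finsum_mem_eq G {H' : G.Subgraph | H'.Adj p.1 p.2} w] at this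
    · rw [if_neg h]
      apply Finset.sum_nonneg
      intro H _
      by_cases h2 : H.Adj p.1 p.2
      · rw [if_pos h2]; exact hw0 H
      · rw [if_neg h2]
  have edgecount : ∑ p : V × V, (if G.Adj p.1 p.2 then (1:ℝ) else 0) = (N : ℝ) * d := by
    rw [Fintype.sum_prod_type]
    have : ∀ v : V, ∑ u : V, (if G.Adj v u then (1:ℝ) else 0) = (d : ℝ) := by
      intro v
      rw [← Finset.sum_filter, Finset.sum_const, nsmul_eq_mul, mul_one]
      congr 1
      rw [← hreg v, hncardfin]
      rfl
    simp_rw [this]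
    rw [Finset.sum_const, nsmul_eq_mul]
    simp [hN]
  have edgesum : (N : ℝ) * d ≤ ∑ H : G.Subgraph, w H * (E H : ℝ) := by
    rw [← edgecount]
    calc ∑ p : V × V, (if G.Adj p.1 p.2 then (1:ℝ) else 0)
        ≤ ∑ p : V × V, ∑ H : G.Subgraph, (if H.Adj p.1 p.2 then w H else 0) :=
          Finset.sum_le_sum fun p _ => edge1 p
    _ = ∑ H : G.Subgraph, ∑ p : V × V, (if H.Adj p.1 p.2 then w H else 0) := Finset.sum_comm
    _ = ∑ H : G.Subgraph, w H * (E H : ℝ) := by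
        apply Finset.sum_congr rfl
        intro H _
        rw [← Finset.sum_filter, Finset.sum_const, hE, nsmul_eq_mul]
        ring
  -- star structure bound
  have starbound : ∀ H : G.Subgraph,
      w H * (E H : ℝ) * ((d:ℝ) + 1) ≤ w H * (H.verts.ncard : ℝ) * (2 * d) := by
    intro H
    by_cases h0 : w H = 0
    · rw [h0]; simp
    obtain ⟨c, hc, hS, hstar2, hstar3⟩ := hwstar H h0
    set S : Finset V := (H.verts \ {c}).toFinset with hSdef
    have hcard : H.verts.ncard = S.card + 1 := by
      have h1 : H.verts = insert c (H.verts \ {c}) := by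
        rw [Set.insert_diff_singleton]
        exact (Set.insert_eq_of_mem hc).symm
      rw [h1, Set.ncard_insert_of_notMem (by simp)]
      congr 1
      rw [Set.ncard_eq_toFinset_card']
    have hsd : S.card ≤ d := by
      have hsub : H.verts \ {c} ⊆ G.neighborSet c := by
        intro u hu
        exact H.adj_sub (hstar2 u hu.1 hu.2)
      have := Set.ncard_le_ncard hsub (Set.toFinite _)
      rw [hreg c, Set.ncard_eq_toFinset_card'] at this
      exact this
    have hEb : E H ≤ 2 * S.card := by
      have hsub : (univ.filter fun p : V × V => H.Adj p.1 p.2)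
          ⊆ ({c} ×ˢ S) ∪ (S ×ˢ {c}) := by
        intro p hp
        rw [Finset.mem_filter] at hp
        have hadj := hp.2
        have hne : p.1 ≠ p.2 := by
          intro h
          apply G.loopless.irrefl p.2
          have := H.adj_sub hadj
          rwa [h] at this
        rcases hstar3 p.1 p.2 hadj with h1 | h2
        · apply Finset.mem_union_left
          rw [Finset.mem_product, Finset.mem_singleton]
          refine ⟨h1, ?_⟩
          rw [hSdef, Set.mem_toFinset, Set.mem_diff]
          exact ⟨H.edge_vert hadj.symm, by rw [← h1]; exact fun hh => hne hh.symm⟩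
        · apply Finset.mem_union_right
          rw [Finset.mem_product, Finset.mem_singleton]
          refine ⟨?_, h2⟩
          rw [hSdef, Set.mem_toFinset, Set.mem_diff]
          exact ⟨H.edge_vert hadj, by rw [← h2]; exact hne⟩
      calc E H ≤ (({c} ×ˢ S) ∪ (S ×ˢ {c})).card := Finset.card_le_card hsub
      _ ≤ ({c} ×ˢ S).card + (S ×ˢ {c}).card := Finset.card_union_le _ _
      _ = 2 * S.card := by
          rw [Finset.card_product, Finset.card_product, Finset.card_singleton]
          ring
    have hnat : E H * (d + 1) ≤ H.verts.ncard * (2 * d) := by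
      rw [hcard]
      calc E H * (d+1) ≤ (2 * S.card) * (d+1) := Nat.mul_le_mul_right _ hEb
      _ = 2 * S.card * d + 2 * S.card := by ring
      _ ≤ 2 * S.card * d + 2 * d := by
          apply Nat.add_le_add_left
          omega
      _ = (S.card + 1) * (2 * d) := by ring
    have hnatR : (E H : ℝ) * ((d:ℝ)+1) ≤ (H.verts.ncard : ℝ) * (2*d) := by
      exact_mod_cast hnat
    have hw0H := hw0 H
    calc w H * (E H : ℝ) * ((d:ℝ)+1) = w H * ((E H : ℝ) * ((d:ℝ)+1)) := by ring
    _ ≤ w H * ((H.verts.ncard : ℝ) * (2*d)) := by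
        apply mul_le_mul_of_nonneg_left hnatR hw0H
    _ = w H * (H.verts.ncard : ℝ) * (2*d) := by ring
  -- combine
  have hd0 : (0:ℝ) < d := by
    have : 0 < d := Nat.lt_of_lt_of_le Nat.zero_lt_two hd
    exact_mod_cast this
  have total : (N : ℝ) * (((d:ℝ)+1)/2) ≤ ∑ x : V, coverage G w x := by
    have s1 : (∑ H : G.Subgraph, w H * (E H : ℝ)) * ((d:ℝ)+1)
        ≤ (∑ H : G.Subgraph, w H * (H.verts.ncard : ℝ)) * (2*d) := by
      rw [Finset.sum_mul, Finset.sum_mul]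
      exact Finset.sum_le_sum fun H _ => starbound H
    have s2 : (N : ℝ) * d * ((d:ℝ)+1) ≤ (∑ H : G.Subgraph, w H * (E H : ℝ)) * ((d:ℝ)+1) := by
      apply mul_le_mul_of_nonneg_right edgesum
      positivity
    have s3 := le_trans s2 s1
    rw [covsum]
    have h2d : (0:ℝ) < 2*(d:ℝ) := by positivity
    apply le_of_mul_le_mul_right ?_ h2d
    calc (N : ℝ) * (((d:ℝ)+1)/2) * (2*(d:ℝ)) = (N : ℝ) * d * ((d:ℝ)+1) := by ring
    _ ≤ (∑ H : G.Subgraph, w H * (H.verts.ncard : ℝ)) * (2*(d:ℝ)) := s3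
  by_contra hcon
  push_neg at hcon
  have hlt : ∑ x : V, coverage G w x < ∑ _x : V, ((d:ℝ)+1)/2 :=
    Finset.sum_lt_sum_of_nonempty Finset.univ_nonempty (fun x _ => hcon x)
  rw [Finset.sum_const, nsmul_eq_mul, Finset.card_univ] at hlt
  rw [← hN] at hlt
  linarith


lemma egirth_comap_le {α β : Type*} (e : α ≃ β) (Gr : SimpleGraph β) :
    Gr.egirth ≤ (Gr.comap ⇑e).egirth := by
  rw [SimpleGraph.le_egirth]
  intro a w hw
  have hinj : Function.Injective (⇑(SimpleGraph.Hom.comap ⇑e Gr)) := by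
    intro x y h
    have h' : e x = e y := h
    exact e.injective h'
  have hcyc : (w.map (SimpleGraph.Hom.comap ⇑e Gr)).IsCycle := hw.map hinj
  calc Gr.egirth ≤ ((w.map (SimpleGraph.Hom.comap ⇑e Gr)).length : ℕ∞) :=
        SimpleGraph.le_egirth.mp le_rfl _ _ hcyc
  _ = (w.length : ℕ∞) := by rw [SimpleGraph.Walk.length_map]

end Stmt16

open Stmt16 in
theorem stmt16 (d : ℕ) (hd : 2 ≤ d) (g : ℕ) :
    ∃ (N : ℕ) (G : SimpleGraph (Fin N)),
      (∀ v : Fin N, (G.neighborSet v).ncard = d) ∧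
      (g : ℕ∞) < G.egirth ∧
      ∀ w : G.Subgraph → ℝ, IsFracStarCover G w →
        ∃ x : Fin N, ((d : ℝ) + 1) / 2 ≤ coverage G w x := by
  classical
  set n : ℕ := (4*d+3)^(g+3) + 1 with hn_def
  have hbase : (1:ℤ) ≤ 4*(d:ℤ)+3 := by
    have : (0:ℤ) ≤ (d:ℤ) := Int.natCast_nonneg d
    linarith
  have hkey : ∀ m : ℕ, m ≤ g+3 → (4*(d:ℤ)+3)^m < (n:ℤ) := by
    intro m hm
    have h1 : (4*(d:ℤ)+3)^m ≤ (4*(d:ℤ)+3)^(g+3) := pow_le_pow_right₀ hbase hm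
    have h2 : (4*(d:ℤ)+3)^(g+3) < (n:ℤ) := by
      rw [hn_def]
      push_cast
      linarith
    exact lt_of_le_of_lt h1 h2
  have hn2 : (4*(d:ℤ)+3)^2 < (n:ℤ) := hkey 2 (by omega)
  have hnm : ∀ m : ℕ, 0 < m → m ≤ g → (4*(d:ℤ)+3)^m < (n:ℤ) := fun m _ hm =>
    hkey m (by omega)
  set V := Gam n × Bool with hV
  set N := Fintype.card V with hN
  have hNpos : 0 < N := Fintype.card_pos
  haveI : Nonempty (Fin N) := ⟨⟨0, hNpos⟩⟩
  set e : Fin N ≃ V := (Fintype.equivFin V).symm with he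
  refine ⟨N, SimpleGraph.comap ⇑e (HG d n), ?_, ?_, ?_⟩
  · intro v
    have hpre : (SimpleGraph.comap ⇑e (HG d n)).neighborSet v
        = ⇑e ⁻¹' ((HG d n).neighborSet (e v)) := rfl
    rw [hpre, ← Equiv.image_symm_eq_preimage, Set.ncard_image_of_injective _ e.symm.injective]
    exact HG_regular d n hn2 (e v)
  · exact lt_of_lt_of_le (HG_girth d n g hnm) (egirth_comap_le e (HG d n))
  · intro w hw
    exact cover_lemma (SimpleGraph.comap ⇑e (HG d n)) d hd
      (fun v => by
        have hpre : (SimpleGraph.comap ⇑e (HG d n)).neighborSet v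
            = ⇑e ⁻¹' ((HG d n).neighborSet (e v)) := rfl
        rw [hpre, ← Equiv.image_symm_eq_preimage,
          Set.ncard_image_of_injective _ e.symm.injective]
        exact HG_regular d n hn2 (e v)) w hw
end

section
/- For every d ≥ 2 and every integer g there exists a finite d-regular simple graph G of girth greater than g such that every fractional cover of the edges of G by complete multipartite subgraphs has some vertex whose coverage is at least (d+1)/2. -/
/-- A complete multipartite subgraph of `G`: a subgraph whose vertex set can be
partitioned into parts (the classes of an equivalence relation) such that two of its
vertices are adjacent in the subgraph exactly when they lie in different parts. -/
def IsCompMultipartite {V : Type*} (G : SimpleGraph V) (H : G.Subgraph) : Prop :=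
  ∃ r : H.verts → H.verts → Prop, Equivalence r ∧
    ∀ u v : H.verts, H.Adj u v ↔ ¬ r u v

/-- A fractional cover of the edges of `G` by complete multipartite subgraphs:
a nonnegative real weight on each complete multipartite subgraph of `G` (formally:
a weight function on subgraphs vanishing outside the complete multipartite ones) such
that for every edge of `G` the total weight of the subgraphs containing that edge is
at least 1. -/
def IsFracCMCover {V : Type*} (G : SimpleGraph V) (w : G.Subgraph → ℝ) : Prop :=
  (∀ H, 0 ≤ w H) ∧ (∀ H, w H ≠ 0 → IsCompMultipartite G H) ∧
  (∀ u v : V, G.Adj u v → 1 ≤ ∑ᶠ H ∈ {H' : SimpleGraph.Subgraph G | H'.Adj u v}, w H)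

open List

namespace S17

/-- Reduced words. -/
def RW (d L : ℕ) := {l : List (Fin d) // l.Chain' (· ≠ ·) ∧ l.length ≤ L}

variable {d L : ℕ}

instance : Finite (RW d L) := by
  have : Function.Injective (fun x : RW d L => fun k : Fin (L+1) => x.1[k.1]?) := by
    rintro ⟨l1, h1, h1'⟩ ⟨l2, h2, h2'⟩ h
    apply Subtype.ext
    dsimp at h
    apply List.ext_getElem?
    intro n
    rcases lt_or_ge n (L+1) with hn | hn
    · exact congrFun h ⟨n, hn⟩
    · rw [List.getElem?_eq_none (h1'.trans (by omega)), List.getElem?_eq_none (h2'.trans (by omega))]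
  exact Finite.of_injective _ this

/-- the empty word -/
def eps (d L : ℕ) : RW d L := ⟨[], List.isChain_nil, by simp⟩

/-- list-level generator action -/
def fl (L : ℕ) {d : ℕ} (i : Fin d) (l : List (Fin d)) : List (Fin d) :=
  if l.head? = some i then l.tail else if l.length < L then i :: l else l

lemma fl_mem (i : Fin d) {l : List (Fin d)} (h : l.Chain' (· ≠ ·)) (hl : l.length ≤ L) :
    (fl L i l).Chain' (· ≠ ·) ∧ (fl L i l).length ≤ L := by
  unfold fl
  split_ifs with h1 h2
  · exact ⟨h.tail, (l.length_tail ▸ Nat.sub_le _ _).trans hl⟩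
  · refine ⟨List.isChain_cons.2 ⟨fun y hy => ?_, h⟩, h2⟩
    rintro rfl; exact h1 hy
  · exact ⟨h, hl⟩

lemma fl_invol (i : Fin d) {l : List (Fin d)} (h : l.Chain' (· ≠ ·)) (hl : l.length ≤ L) :
    fl L i (fl L i l) = l := by
  cases l with
  | nil =>
    by_cases hL : 0 < L
    · simp [fl, hL]
    · simp [fl, hL]
  | cons a t =>
    by_cases ha : a = i
    · subst ha
      have h1 : fl L a (a :: t) = t := by simp [fl]
      rw [h1]
      have ht : t.head? ≠ some a := by
        intro hy
        exact (List.isChain_cons.1 h).1 a hy rfl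
      have htl : t.length < L := by
        simp at hl; omega
      simp [fl, ht, htl]
    · have hne : (a :: t).head? ≠ some i := by simp [ha]
      by_cases hlt : (a :: t).length < L
      · have hlt' : t.length + 1 < L := by simpa using hlt
        have h1 : fl L i (a :: t) = i :: a :: t := by simp [fl, ha, hlt']
        rw [h1]; simp [fl]
      · have hlt' : ¬ t.length + 1 < L := by simpa using hlt
        have h1 : fl L i (a :: t) = a :: t := by simp [fl, ha, hlt']
        rw [h1]; simp [fl, ha, hlt']

/-- generator permutations -/
def sig (d L : ℕ) (i : Fin d) : Equiv.Perm (RW d L) :=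
  Function.Involutive.toPerm (fun x => ⟨fl L i x.1, (fl_mem i x.2.1 x.2.2).1, (fl_mem i x.2.1 x.2.2).2⟩)
    (by intro x; exact Subtype.ext (fl_invol i x.2.1 x.2.2))

lemma sig_apply (i : Fin d) (x : RW d L) : (sig d L i x).1 = fl L i x.1 := rfl

lemma sig_mul_self (i : Fin d) : sig d L i * sig d L i = 1 := by
  apply Equiv.ext
  intro x
  rw [Equiv.Perm.mul_apply]
  exact Subtype.ext (fl_invol i x.2.1 x.2.2)

end S17
namespace S17

variable {d L : ℕ}

lemma sig_eps (i : Fin d) (hL : 0 < L) : sig d L i (eps d L) = ⟨[i], List.isChain_singleton _, by simp only [List.length_singleton]; omega⟩ := by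
  apply Subtype.ext
  show fl L i [] = [i]
  simp [fl, hL]

lemma word_apply : ∀ (ws : List (Fin d)) (hc : ws.Chain' (· ≠ ·)) (h : ws.length ≤ L),
    (ws.map (sig d L)).prod (eps d L) = ⟨ws, hc, h⟩ := by
  intro ws
  induction ws with
  | nil => intro _ _; rfl
  | cons j t ih =>
    intro hc hl
    have hc' := List.isChain_cons.1 hc
    have ht : t.length < L := by
      simp only [List.length_cons] at hl; omega
    rw [List.map_cons, List.prod_cons, Equiv.Perm.mul_apply, ih hc'.2 ht.le]
    apply Subtype.ext
    show fl L j t = j :: t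
    have hhead : t.head? ≠ some j := by
      intro hy; exact hc'.1 j hy rfl
    simp [fl, hhead, ht]

lemma sig_ne_one (i : Fin d) (hL : 0 < L) : sig d L i ≠ 1 := by
  intro h
  have := congrArg Subtype.val (sig_eps i hL)
  rw [h] at this
  exact List.cons_ne_nil _ _ this.symm

lemma sig_injective (hL : 0 < L) : Function.Injective (sig d L) := by
  intro i j h
  have := congrArg Subtype.val (congrArg (· (eps d L)) h)
  rw [congrArg Subtype.val (sig_eps i hL), congrArg Subtype.val (sig_eps j hL)] at this
  simpa using this

/-- The Cayley graph. -/
def CG (d L : ℕ) (hL : 0 < L) : SimpleGraph (Equiv.Perm (RW d L)) where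
  Adj x y := ∃ i, y = x * sig d L i
  symm := by
    refine ⟨?_⟩; rintro x y ⟨i, rfl⟩
    exact ⟨i, by rw [mul_assoc, sig_mul_self, mul_one]⟩
  loopless := by
    refine ⟨?_⟩; rintro x ⟨i, hx⟩
    have h1 : x * 1 = x * sig d L i := by rw [mul_one]; exact hx
    exact sig_ne_one i hL (mul_left_cancel h1).symm

lemma CG_neighborSet (hL : 0 < L) (x : Equiv.Perm (RW d L)) :
    ((CG d L hL).neighborSet x).ncard = d := by
  have h1 : (CG d L hL).neighborSet x = Set.range (fun i : Fin d => x * sig d L i) := by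
    ext y
    simp [CG, SimpleGraph.neighborSet, Set.range, eq_comm]
  rw [h1, ← Set.image_univ, Set.ncard_image_of_injective _ (fun i j hij => ?_), Set.ncard_univ]
  · simp
  · exact sig_injective hL (mul_left_cancel hij)

lemma path_word (hL : 0 < L) {x y : Equiv.Perm (RW d L)} (p : (CG d L hL).Walk x y)
    (hp : p.IsPath) : ∃ ws : List (Fin d), ws.Chain' (· ≠ ·) ∧ ws.length = p.length ∧
      y = x * (ws.map (sig d L)).prod ∧ ∀ j ∈ ws.head?, p.getVert 1 = x * sig d L j := by
  induction p with
  | nil => exact ⟨[], List.isChain_nil, by simp, by simp, by simp⟩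
  | @cons a b c h q ih =>
    obtain ⟨ws, hc, hlen, hprod, hhead⟩ := ih (hp.of_cons)
    obtain ⟨i, rfl⟩ := h
    refine ⟨i :: ws, ?_, by show ws.length + 1 = q.length + 1; omega, ?_, ?_⟩
    · refine List.isChain_cons.2 ⟨fun j hj hij => ?_, hc⟩
      subst hij
      have h2 := hhead i hj
      have : q.getVert 1 = a := by
        rw [h2, mul_assoc, sig_mul_self, mul_one]
      have hmem : q.getVert 1 ∈ q.support :=
        SimpleGraph.Walk.mem_support_iff_exists_getVert.2 ⟨1, rfl, by
          rcases Nat.eq_zero_or_pos q.length with h0 | h0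
          · exfalso
            have : ws = [] := by
              rw [← List.length_eq_zero_iff, hlen, h0]
            simp [this] at hj
          · omega⟩
      rw [this] at hmem
      exact ((SimpleGraph.Walk.cons_isPath_iff _ _).1 hp).2 hmem
    · rw [hprod, List.map_cons, List.prod_cons, mul_assoc]
    · intro j hj
      simp only [List.head?_cons, Option.mem_def, Option.some.injEq] at hj
      subst hj
      exact (SimpleGraph.Walk.getVert_cons_succ _ _).trans (SimpleGraph.Walk.getVert_zero q)

lemma no_short_cycle (hL : 0 < L) {x : Equiv.Perm (RW d L)} (p : (CG d L hL).Walk x x)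
    (hp : p.IsCycle) : L < p.length := by
  by_contra hcon
  push_neg at hcon
  cases p with
  | nil => exact hp.ne_nil rfl
  | @cons a b c h q =>
    have hq : q.IsPath := ((SimpleGraph.Walk.cons_isCycle_iff _ _).1 hp).1
    obtain ⟨i, hb⟩ := h
    obtain ⟨ws, hc, hlen, hprod, -⟩ := path_word hL q hq
    subst hb
    have h1 : (ws.map (sig d L)).prod = sig d L i := by
      have h2 : x * (sig d L i * (ws.map (sig d L)).prod) = x * 1 := by
        rw [mul_one, ← mul_assoc, ← hprod]
      have h3 := mul_left_cancel h2
      have := congrArg (fun z => sig d L i * z) h3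
      simpa [← mul_assoc, sig_mul_self] using this
    have hwl : ws.length ≤ L := by
      have : q.length + 1 ≤ L := hcon
      omega
    have h4 := word_apply ws hc hwl
    rw [h1, sig_eps i hL] at h4
    have h5 : ([i] : List (Fin d)) = ws := congrArg Subtype.val h4
    have h6 : q.length = 1 := by rw [← hlen, ← h5]; rfl
    have := hp.three_le_length
    change 3 ≤ q.length + 1 at this; omega

end S17

namespace S17

instance {V : Type*} [Finite V] (G : SimpleGraph V) : Finite G.Subgraph :=
  Finite.of_injective (fun H => (H.verts, H.Adj))
    (fun H1 H2 h => SimpleGraph.Subgraph.ext (congrArg Prod.fst h) (congrArg Prod.snd h))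

/-- Structure of complete multipartite subgraphs in a graph with no triangle/square. -/
lemma multipartite_star {V : Type*} (G : SimpleGraph V)
    (htri : ∀ a b c : V, G.Adj a b → G.Adj b c → G.Adj a c → False)
    (hsq : ∀ a b c e : V, a ≠ c → b ≠ e →
      G.Adj a b → G.Adj b c → G.Adj c e → G.Adj e a → False)
    (H : G.Subgraph) (hH : IsCompMultipartite G H) {a b : V} (hab : H.Adj a b) :
    ∃ c, c ∈ H.verts ∧ ∀ u v, H.Adj u v ↔
      ((u = c ∧ v ∈ H.verts ∧ v ≠ c) ∨ (v = c ∧ u ∈ H.verts ∧ u ≠ c)) := by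
  obtain ⟨r, hr, hadj⟩ := hH
  have ha : a ∈ H.verts := hab.fst_mem
  have hb : b ∈ H.verts := hab.snd_mem
  set A : H.verts := ⟨a, ha⟩
  set B : H.verts := ⟨b, hb⟩
  have hnrAB : ¬ r A B := (hadj A B).1 hab
  have claim1 : ∀ x : H.verts, r x A ∨ r x B := by
    intro x
    by_contra hx
    push_neg at hx
    have h1 : H.Adj x a := (hadj x A).2 hx.1
    have h2 : H.Adj x b := (hadj x B).2 hx.2
    exact htri x a b h1.adj_sub hab.adj_sub h2.adj_sub
  -- general center lemma
  have key : ∀ (a' b' : V) (ha' : a' ∈ H.verts) (hb' : b' ∈ H.verts),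
      H.Adj a' b' → (∀ x : H.verts, r x ⟨a', ha'⟩ → x = ⟨a', ha'⟩) →
      (∀ x : H.verts, r x ⟨a', ha'⟩ ∨ r x ⟨b', hb'⟩) →
      ∀ u v, H.Adj u v ↔
        ((u = a' ∧ v ∈ H.verts ∧ v ≠ a') ∨ (v = a' ∧ u ∈ H.verts ∧ u ≠ a')) := by
    intro a' b' ha' hb' hab' hsing hcl u v
    constructor
    · intro huv
      have hu : u ∈ H.verts := huv.fst_mem
      have hv : v ∈ H.verts := huv.snd_mem
      have hnr : ¬ r ⟨u, hu⟩ ⟨v, hv⟩ := (hadj _ _).1 huv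
      by_cases hua : u = a'
      · refine Or.inl ⟨hua, hv, ?_⟩
        rintro rfl
        exact huv.ne hua
      · by_cases hva : v = a'
        · exact Or.inr ⟨hva, hu, hua⟩
        · exfalso
          have h1 : r ⟨u, hu⟩ ⟨b', hb'⟩ := by
            rcases hcl ⟨u, hu⟩ with h | h
            · exact absurd (congrArg Subtype.val (hsing _ h)) hua
            · exact h
          have h2 : r ⟨v, hv⟩ ⟨b', hb'⟩ := by
            rcases hcl ⟨v, hv⟩ with h | h
            · exact absurd (congrArg Subtype.val (hsing _ h)) hva
            · exact h
          exact hnr (hr.trans h1 (hr.symm h2))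
    · rintro (⟨rfl, hv, hva⟩ | ⟨rfl, hu, hua⟩)
      · refine (hadj ⟨u, ha'⟩ ⟨v, hv⟩).2 fun hruv => ?_
        exact hva (congrArg Subtype.val (hsing _ (hr.symm hruv)))
      · refine ((hadj ⟨v, ha'⟩ ⟨u, hu⟩).2 fun hruv => ?_).symm
        exact hua (congrArg Subtype.val (hsing _ (hr.symm hruv)))
  by_cases hone : ∀ x : H.verts, r x A → x = A
  · exact ⟨a, ha, key a b ha hb hab hone claim1⟩
  · push_neg at hone
    obtain ⟨x, hxA, hxne⟩ := hone
    have hsingB : ∀ y : H.verts, r y B → y = B := by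
      intro y hyB
      by_contra hyne
      -- square a - y - x - b - a
      have hay : H.Adj a y := by
        refine (hadj A y).2 fun h => ?_
        exact hnrAB (hr.trans h hyB)
      have hyx : H.Adj y x := by
        refine (hadj y x).2 fun h => ?_
        exact hnrAB (hr.trans (hr.symm (hr.trans h hxA)) hyB)
      have hxb : H.Adj x b := by
        refine (hadj x B).2 fun h => ?_
        exact hnrAB (hr.trans (hr.symm hxA) h)
      refine hsq a y x b ?_ ?_ hay.adj_sub hyx.adj_sub hxb.adj_sub hab.adj_sub.symm
      · intro hax
        exact hxne (Subtype.ext hax.symm)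
      · intro hyb
        exact hyne (Subtype.ext hyb)
    have hba : H.Adj b a := hab.symm
    have claim1' : ∀ x : H.verts, r x B ∨ r x A := fun x => (claim1 x).symm
    exact ⟨b, hb, key b a hb ha hba hsingB claim1'⟩

end S17
namespace S17

open Finset

lemma star_count {V : Type*} [Fintype V] [DecidableEq V] (G : SimpleGraph V) (d : ℕ)
    (hreg : ∀ v, (G.neighborSet v).ncard = d) (H : G.Subgraph)
    [DecidablePred (· ∈ H.verts)] [DecidableRel H.Adj]
    (c : V) (hcmem : c ∈ H.verts)
    (hstar : ∀ u v, H.Adj u v ↔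
      ((u = c ∧ v ∈ H.verts ∧ v ≠ c) ∨ (v = c ∧ u ∈ H.verts ∧ u ≠ c))) :
    (d+1) * ((Finset.univ ×ˢ Finset.univ).filter (fun p : V × V => H.Adj p.1 p.2)).card
      ≤ 2*d*((Finset.univ.filter (· ∈ H.verts)).card) := by
  classical
  set B : Finset V := (Finset.univ.filter (· ∈ H.verts)).erase c with hB
  have hEeq : ((Finset.univ ×ˢ Finset.univ).filter (fun p : V × V => H.Adj p.1 p.2))
      = ({c} ×ˢ B) ∪ (B ×ˢ {c}) := by
    ext ⟨u, v⟩
    simp only [Finset.mem_filter, Finset.mem_product, Finset.mem_union, Finset.mem_singleton,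
      Finset.mem_erase, Finset.mem_univ, true_and, hB, hstar]
    tauto
  have hdisj : Disjoint ({c} ×ˢ B) (B ×ˢ {c}) := by
    rw [Finset.disjoint_left]
    rintro ⟨u, v⟩ h1 h2
    simp only [Finset.mem_product, Finset.mem_singleton, Finset.mem_erase, hB] at h1 h2
    exact h2.1.1 (h1.1 ▸ rfl)
  have hcard : ((Finset.univ ×ˢ Finset.univ).filter
      (fun p : V × V => H.Adj p.1 p.2)).card = 2 * B.card := by
    rw [hEeq, Finset.card_union_of_disjoint hdisj, Finset.card_product, Finset.card_product]
    simp [two_mul]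
  have hvcard : (Finset.univ.filter (· ∈ H.verts)).card = B.card + 1 := by
    rw [hB]
    exact (Finset.card_erase_add_one (by simp [hcmem])).symm
  have hBd : B.card ≤ d := by
    have hsub : B ⊆ Finset.univ.filter (fun v => G.Adj c v) := by
      intro v hv
      simp only [Finset.mem_erase, Finset.mem_filter, Finset.mem_univ, true_and, hB] at hv
      have : H.Adj c v := (hstar c v).2 (Or.inl ⟨rfl, hv.2, hv.1⟩)
      simp [this.adj_sub]
    have hd : (Finset.univ.filter (fun v => G.Adj c v)).card = d := by
      have h1 := hreg c
      rw [Set.ncard_eq_toFinset_card'] at h1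
      rw [← h1]
      congr 1
      ext v
      simp [SimpleGraph.neighborSet]
      exact Set.mem_toFinset.symm
    exact hd ▸ Finset.card_le_card hsub
  rw [hcard, hvcard]
  nlinarith [hBd]

lemma finsum_conv {α : Type*} [Fintype α] (f : α → ℝ) (P : α → Prop) [DecidablePred P] :
    ∑ᶠ i ∈ {x | P x}, f i = ∑ i : α, if P i then f i else 0 := by
  rw [show {x | P x} = ↑(Finset.univ.filter P) by ext x; simp,
    finsum_mem_coe_finset, Finset.sum_filter]

lemma cover_bound {V : Type*} [Fintype V] [Nonempty V] (G : SimpleGraph V) (d : ℕ)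
    (hd : 1 ≤ d) (hreg : ∀ v, (G.neighborSet v).ncard = d)
    (htri : ∀ a b c : V, G.Adj a b → G.Adj b c → G.Adj a c → False)
    (hsq : ∀ a b c e : V, a ≠ c → b ≠ e →
      G.Adj a b → G.Adj b c → G.Adj c e → G.Adj e a → False)
    (w : G.Subgraph → ℝ) (hw : IsFracCMCover G w) :
    ∃ x : V, ((d : ℝ) + 1) / 2 ≤ coverage G w x := by
  classical
  haveI : Fintype G.Subgraph := Fintype.ofFinite _
  obtain ⟨hw0, hwm, hwc⟩ := hw
  have hcov : ∀ x, coverage G w x = ∑ H : G.Subgraph, if x ∈ H.verts then w H else 0 :=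
    fun x => finsum_conv w (fun H => x ∈ H.verts)
  have hedge : ∀ u v, G.Adj u v →
      (1 : ℝ) ≤ ∑ H : G.Subgraph, if H.Adj u v then w H else 0 := by
    intro u v huv
    have h1 := hwc u v huv
    rwa [finsum_conv w (fun H : G.Subgraph => H.Adj u v)] at h1
  -- vertex-side sum
  have hS1 : ∑ x : V, coverage G w x
      = ∑ H : G.Subgraph, w H * ((Finset.univ.filter (· ∈ H.verts)).card : ℝ) := by
    simp_rw [hcov]
    rw [Finset.sum_comm]
    refine Finset.sum_congr rfl fun H _ => ?_
    rw [← Finset.sum_filter, Finset.sum_const, nsmul_eq_mul, mul_comm]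
  -- edge-side sum
  have hS2 : ∑ u : V, ∑ v : V, ∑ H : G.Subgraph, (if H.Adj u v then w H else 0)
      = ∑ H : G.Subgraph, w H *
        (((Finset.univ ×ˢ Finset.univ).filter (fun p : V × V => H.Adj p.1 p.2)).card : ℝ) := by
    have h1 : ∀ u : V, (∑ v : V, ∑ H : G.Subgraph, (if H.Adj u v then w H else 0))
        = ∑ H : G.Subgraph, ∑ v : V, (if H.Adj u v then w H else 0) := fun u => Finset.sum_comm
    simp_rw [h1]
    rw [Finset.sum_comm]
    refine Finset.sum_congr rfl fun H _ => ?_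
    rw [← Finset.sum_product' (f := fun u v => if H.Adj u v then w H else 0),
      ← Finset.sum_filter, Finset.sum_const, nsmul_eq_mul, mul_comm]
  -- lower bound on the edge-side sum
  have hS2low : (Fintype.card V : ℝ) * d
      ≤ ∑ u : V, ∑ v : V, ∑ H : G.Subgraph, (if H.Adj u v then w H else 0) := by
    have hper : ∀ u : V, (d : ℝ)
        ≤ ∑ v : V, ∑ H : G.Subgraph, (if H.Adj u v then w H else 0) := by
      intro u
      have hdeg : (Finset.univ.filter (fun v => G.Adj u v)).card = d := by
        have h1 := hreg u
        rw [Set.ncard_eq_toFinset_card'] at h1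
        rw [← h1]; congr 1; ext v; simp [SimpleGraph.neighborSet]; exact Set.mem_toFinset.symm
      have h2 : (d : ℝ) = ∑ v : V, if G.Adj u v then (1:ℝ) else 0 := by
        rw [← Finset.sum_filter, Finset.sum_const, nsmul_eq_mul, mul_one, hdeg]
      rw [h2]
      refine Finset.sum_le_sum fun v _ => ?_
      by_cases hadj : G.Adj u v
      · rw [if_pos hadj]; exact hedge u v hadj
      · rw [if_neg hadj]
        refine Finset.sum_nonneg fun H _ => ?_
        split_ifs with h
        · exact hw0 H
        · exact le_refl 0
    calc (Fintype.card V : ℝ) * d = ∑ _u : V, (d:ℝ) := by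
          rw [Finset.sum_const, Finset.card_univ, nsmul_eq_mul]
      _ ≤ _ := Finset.sum_le_sum fun u _ => hper u
  -- per-subgraph inequality
  have hperH : ∀ H : G.Subgraph,
      ((d:ℝ)+1) * (w H * (((Finset.univ ×ˢ Finset.univ).filter
          (fun p : V × V => H.Adj p.1 p.2)).card : ℝ))
      ≤ 2*d * (w H * ((Finset.univ.filter (· ∈ H.verts)).card : ℝ)) := by
    intro H
    by_cases hwH : w H = 0
    · simp [hwH]
    by_cases hE : ∃ u v, H.Adj u v
    · obtain ⟨u, v, huv⟩ := hE
      obtain ⟨c, hcmem, hstar⟩ := multipartite_star G htri hsq H (hwm H hwH) huv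
      have hnat := star_count G d hreg H c hcmem hstar
      have hcast : ((d:ℝ)+1) * (((Finset.univ ×ˢ Finset.univ).filter
            (fun p : V × V => H.Adj p.1 p.2)).card : ℝ)
          ≤ 2*d*(((Finset.univ.filter (· ∈ H.verts)).card : ℝ)) := by
        exact_mod_cast hnat
      nlinarith [mul_le_mul_of_nonneg_left hcast (hw0 H)]
    · push_neg at hE
      have hempty : ((Finset.univ ×ˢ Finset.univ).filter
          (fun p : V × V => H.Adj p.1 p.2)) = ∅ := by
        rw [Finset.filter_eq_empty_iff]; rintro ⟨u,v⟩ _; exact hE u v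
      rw [hempty]
      simp only [Finset.card_empty, Nat.cast_zero, mul_zero]
      exact mul_nonneg (by positivity) (mul_nonneg (hw0 H) (by positivity))
  -- combine
  have hsum : ((d:ℝ)+1) * (∑ H : G.Subgraph, w H * (((Finset.univ ×ˢ Finset.univ).filter
        (fun p : V × V => H.Adj p.1 p.2)).card : ℝ))
      ≤ 2*d*(∑ H : G.Subgraph, w H * ((Finset.univ.filter (· ∈ H.verts)).card : ℝ)) := by
    rw [Finset.mul_sum, Finset.mul_sum]
    exact Finset.sum_le_sum fun H _ => hperH H
  have hfinal : ∑ _x : V, ((d:ℝ)+1)/2 ≤ ∑ x : V, coverage G w x := by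
    rw [hS1, Finset.sum_const, Finset.card_univ, nsmul_eq_mul]
    rw [hS2] at hS2low
    have hdR : (1:ℝ) ≤ d := by exact_mod_cast hd
    have hn : (0:ℝ) ≤ (Fintype.card V : ℝ) := by positivity
    nlinarith [mul_le_mul_of_nonneg_left hS2low (show (0:ℝ) ≤ (d:ℝ)+1 by positivity), hsum]
  obtain ⟨x, -, hx⟩ := Finset.exists_le_of_sum_le Finset.univ_nonempty hfinal
  exact ⟨x, hx⟩

end S17

namespace S17

lemma htri_of_girth {V : Type*} {G : SimpleGraph V}
    (hg : ∀ (x : V) (p : G.Walk x x), p.IsCycle → 4 < p.length) :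
    ∀ a b c : V, G.Adj a b → G.Adj b c → G.Adj a c → False := by
  intro a b c hab hbc hac
  let p : G.Walk a a := .cons hab (.cons hbc (.cons hac.symm .nil))
  have hcyc : p.IsCycle := by
    simp [p, SimpleGraph.Walk.isCycle_def, SimpleGraph.Walk.isTrail_def, Sym2.eq_iff,
      hab.ne, hbc.ne, hac.ne, hab.ne', hbc.ne', hac.ne']
  have := hg a p hcyc
  simp [p] at this

lemma hsq_of_girth {V : Type*} {G : SimpleGraph V}
    (hg : ∀ (x : V) (p : G.Walk x x), p.IsCycle → 4 < p.length) :
    ∀ a b c e : V, a ≠ c → b ≠ e →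
      G.Adj a b → G.Adj b c → G.Adj c e → G.Adj e a → False := by
  intro a b c e hac hbe hab hbc hce hea
  let p : G.Walk a a := .cons hab (.cons hbc (.cons hce (.cons hea .nil)))
  have hcyc : p.IsCycle := by
    simp [p, SimpleGraph.Walk.isCycle_def, SimpleGraph.Walk.isTrail_def, Sym2.eq_iff,
      hab.ne, hbc.ne, hce.ne, hea.ne, hab.ne', hbc.ne', hce.ne', hea.ne',
      hac, hbe, hac.symm, hbe.symm]
  have := hg a p hcyc
  simp [p] at this

end S17

theorem stmt17 (d : ℕ) (hd : 2 ≤ d) (g : ℕ) :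
    ∃ (N : ℕ) (G : SimpleGraph (Fin N)),
      (∀ v : Fin N, (G.neighborSet v).ncard = d) ∧
      (g : ℕ∞) < G.egirth ∧
      ∀ w : G.Subgraph → ℝ, IsFracCMCover G w →
        ∃ x : Fin N, ((d : ℝ) + 1) / 2 ≤ coverage G w x := by
  classical
  set L : ℕ := max g 4 with hLdef
  have hL : 0 < L := by omega
  have hL4 : 4 ≤ L := by omega
  have hLg : g ≤ L := by omega
  haveI : Finite (Equiv.Perm (S17.RW d L)) :=
    Finite.of_injective (fun e : Equiv.Perm (S17.RW d L) => (e : S17.RW d L → S17.RW d L))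
      (fun e1 e2 h => Equiv.coe_fn_injective h)
  haveI : Fintype (Equiv.Perm (S17.RW d L)) := Fintype.ofFinite _
  set N := Fintype.card (Equiv.Perm (S17.RW d L)) with hN
  set e : Equiv.Perm (S17.RW d L) ≃ Fin N := Fintype.equivFin _ with he
  set G : SimpleGraph (Fin N) := SimpleGraph.comap (e.symm : Fin N → Equiv.Perm (S17.RW d L))
    (S17.CG d L hL) with hG
  haveI : Nonempty (Fin N) := ⟨e 1⟩
  refine ⟨N, G, ?_, ?_, ?_⟩
  · -- regularity
    intro v
    have h1 : G.neighborSet v = e.symm ⁻¹' ((S17.CG d L hL).neighborSet (e.symm v)) := rfl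
    rw [h1, ← Equiv.image_eq_preimage_symm,
      Set.ncard_image_of_injective _ e.injective, S17.CG_neighborSet hL]
  · -- girth
    have hcyc : ∀ (x : Fin N) (p : G.Walk x x), p.IsCycle → L < p.length := by
      intro x p hp
      let f : G →g (S17.CG d L hL) := ⟨(e.symm : Fin N → Equiv.Perm (S17.RW d L)), fun h => h⟩
      have hmap := hp.map (f := f) e.symm.injective
      have := S17.no_short_cycle hL (p.map f) hmap
      rwa [SimpleGraph.Walk.length_map] at this
    have h1 : ((g+1 : ℕ) : ℕ∞) ≤ G.egirth := by
      rw [SimpleGraph.le_egirth]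
      intro a wk hwk
      have := hcyc a wk hwk
      exact_mod_cast Nat.cast_le.2 (by omega : g + 1 ≤ wk.length)
    refine lt_of_lt_of_le ?_ h1
    exact_mod_cast Nat.cast_lt.2 (Nat.lt_succ_self g)
  · -- covering
    intro w hw
    have hcyc : ∀ (x : Fin N) (p : G.Walk x x), p.IsCycle → 4 < p.length := by
      intro x p hp
      let f : G →g (S17.CG d L hL) := ⟨(e.symm : Fin N → Equiv.Perm (S17.RW d L)), fun h => h⟩
      have hmap := hp.map (f := f) e.symm.injective
      have := S17.no_short_cycle hL (p.map f) hmap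
      rw [SimpleGraph.Walk.length_map] at this
      omega
    have hreg : ∀ v : Fin N, (G.neighborSet v).ncard = d := by
      intro v
      have h1 : G.neighborSet v = e.symm ⁻¹' ((S17.CG d L hL).neighborSet (e.symm v)) := rfl
      rw [h1, ← Equiv.image_eq_preimage_symm,
        Set.ncard_image_of_injective _ e.injective, S17.CG_neighborSet hL]
    exact S17.cover_bound G d (by omega) hreg (S17.htri_of_girth hcyc)
      (S17.hsq_of_girth hcyc) w hw
end
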